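/- arXiv:1908.10557 — 9 statements merged into one kernel-verified Lean document; each statement's English description precedes it below -/
import Mathlib

section
/- The Bellman operator T has a unique fixed point w* in the set 𝓘, and for every w ∈ 𝓘 the iterates Tⁿw converge to w* uniformly on X as n → ∞. -/
open Set Filter

/-- The Bellman operator `(Tw)(x) = inf_{0 ≤ a ≤ x} { ℓ(a) + β·w(x − a) }`. -/
noncomputable def bellman (β : ℝ) (ℓ : ℝ → ℝ) (w : ℝ → ℝ) : ℝ → ℝ :=
  fun x => sInf ((fun a => ℓ a + β * w (x - a)) '' Set.Icc 0 x)

/-- The candidate class 𝓘: continuous functions on `[0, x̂]` with `ℓ'(0)·x ≤ w(x) ≤ ℓ(x)`. -/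
def candidateClass (xhat : ℝ) (ℓ ℓd : ℝ → ℝ) : Set (ℝ → ℝ) :=
  {w | ContinuousOn w (Set.Icc 0 xhat) ∧
    ∀ x ∈ Set.Icc 0 xhat, ℓd 0 * x ≤ w x ∧ w x ≤ ℓ x}

namespace BellmanProof

structure Hyp (xhat : ℝ) (ℓ ℓd : ℝ → ℝ) (β : ℝ) : Prop where
  hxhat : 0 < xhat
  hderiv : ∀ x ∈ Set.Icc 0 xhat, HasDerivAt ℓ (ℓd x) x
  hconv : StrictConvexOn ℝ (Set.Icc 0 xhat) ℓ
  hzero : ℓ 0 = 0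
  hpos : ∀ x ∈ Set.Icc 0 xhat, 0 < ℓd x
  hβ : 1 < β

namespace Hyp

variable {xhat β : ℝ} {ℓ ℓd : ℝ → ℝ}

lemma βpos (H : Hyp xhat ℓ ℓd β) : 0 < β := lt_trans one_pos H.hβ

lemma zero_mem (H : Hyp xhat ℓ ℓd β) : (0:ℝ) ∈ Icc (0:ℝ) xhat := ⟨le_refl 0, H.hxhat.le⟩

lemma top_mem (H : Hyp xhat ℓ ℓd β) : xhat ∈ Icc (0:ℝ) xhat := ⟨H.hxhat.le, le_refl _⟩

lemma c0pos (H : Hyp xhat ℓ ℓd β) : 0 < ℓd 0 := H.hpos 0 H.zero_mem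

lemma conv (H : Hyp xhat ℓ ℓd β) : ConvexOn ℝ (Icc 0 xhat) ℓ := H.hconv.convexOn

lemma tangent (H : Hyp xhat ℓ ℓd β) {x y : ℝ} (hx : x ∈ Icc 0 xhat) (hy : y ∈ Icc 0 xhat) :
    ℓ x + ℓd x * (y - x) ≤ ℓ y := by
  rcases lt_trichotomy x y with h | h | h
  · have hs := H.conv.le_slope_of_hasDerivAt hx hy h (H.hderiv x hx)
    rw [slope_def_field] at hs
    have hxy : 0 < y - x := sub_pos.2 h
    rw [le_div_iff₀ hxy] at hs
    linarith
  · simp [h]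
  · have hs := H.conv.slope_le_of_hasDerivAt hy hx h (H.hderiv x hx)
    rw [slope_def_field] at hs
    have hxy : 0 < x - y := sub_pos.2 h
    rw [div_le_iff₀ hxy] at hs
    nlinarith
  
lemma dmono (H : Hyp xhat ℓ ℓd β) {x y : ℝ} (hx : x ∈ Icc 0 xhat) (hy : y ∈ Icc 0 xhat) (hxy : x ≤ y) :
    ℓd x ≤ ℓd y := by
  rcases eq_or_lt_of_le hxy with h | h
  · rw [h]
  · have h1 := H.conv.le_slope_of_hasDerivAt hx hy h (H.hderiv x hx)
    have h2 := H.conv.slope_le_of_hasDerivAt hx hy h (H.hderiv y hy)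
    exact h1.trans h2

lemma lmono (H : Hyp xhat ℓ ℓd β) {x y : ℝ} (hx : x ∈ Icc 0 xhat) (hy : y ∈ Icc 0 xhat) (hxy : x ≤ y) :
    ℓ x ≤ ℓ y := by
  have h := H.tangent hx hy
  nlinarith [H.hpos x hx]

lemma lnonneg (H : Hyp xhat ℓ ℓd β) {x : ℝ} (hx : x ∈ Icc 0 xhat) : 0 ≤ ℓ x := by
  have := H.lmono H.zero_mem hx hx.1
  rw [H.hzero] at this; exact this

lemma lbase (H : Hyp xhat ℓ ℓd β) {x : ℝ} (hx : x ∈ Icc 0 xhat) : ℓd 0 * x ≤ ℓ x := by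
  have := H.tangent H.zero_mem hx
  rw [H.hzero] at this; simpa using this

lemma llip (H : Hyp xhat ℓ ℓd β) {x y : ℝ} (hx : x ∈ Icc 0 xhat) (hy : y ∈ Icc 0 xhat) (hxy : x ≤ y) :
    ℓ y ≤ ℓ x + ℓd xhat * (y - x) := by
  have h := H.tangent hy hx
  have h2 := H.dmono hy H.top_mem hy.2
  nlinarith

lemma mem_X_left (H : Hyp xhat ℓ ℓd β) {x a : ℝ} (hx : x ∈ Icc 0 xhat) (ha : a ∈ Icc 0 x) : a ∈ Icc 0 xhat :=
  ⟨ha.1, ha.2.trans hx.2⟩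

lemma mem_X_sub (H : Hyp xhat ℓ ℓd β) {x a : ℝ} (hx : x ∈ Icc 0 xhat) (ha : a ∈ Icc 0 x) : x - a ∈ Icc 0 xhat :=
  ⟨by linarith [ha.2], by linarith [ha.1, hx.2]⟩


lemma obj_mem {w : ℝ → ℝ} {x a : ℝ} (hβ' : True) (ha : a ∈ Icc 0 x) :
    ℓ a + β * w (x - a) ∈ (fun a => ℓ a + β * w (x - a)) '' Icc 0 x := ⟨a, ha, rfl⟩

lemma set_nonempty (H : Hyp xhat ℓ ℓd β) {w : ℝ → ℝ} {x : ℝ} (hx : 0 ≤ x) :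
    ((fun a => ℓ a + β * w (x - a)) '' Icc 0 x).Nonempty :=
  ⟨_, ⟨0, ⟨le_refl 0, hx⟩, rfl⟩⟩

lemma bddb (H : Hyp xhat ℓ ℓd β) {w : ℝ → ℝ} {x : ℝ} (hx : x ∈ Icc 0 xhat)
    (hw : ∀ y ∈ Icc 0 xhat, 0 ≤ w y) :
    BddBelow ((fun a => ℓ a + β * w (x - a)) '' Icc 0 x) := by
  refine ⟨0, fun b hb => ?_⟩
  obtain ⟨a, ha, rfl⟩ := hb
  exact add_nonneg (H.lnonneg (H.mem_X_left hx ha))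
    (mul_nonneg H.βpos.le (hw _ (H.mem_X_sub hx ha)))

lemma bellman_le (H : Hyp xhat ℓ ℓd β) {w : ℝ → ℝ} {x a : ℝ} (hx : x ∈ Icc 0 xhat)
    (hw : ∀ y ∈ Icc 0 xhat, 0 ≤ w y) (ha : a ∈ Icc 0 x) :
    bellman β ℓ w x ≤ ℓ a + β * w (x - a) :=
  csInf_le (H.bddb hx hw) ⟨a, ha, rfl⟩

lemma le_bellman (H : Hyp xhat ℓ ℓd β) {w : ℝ → ℝ} {x c : ℝ} (hx : 0 ≤ x)
    (h : ∀ a ∈ Icc 0 x, c ≤ ℓ a + β * w (x - a)) : c ≤ bellman β ℓ w x := by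
  refine le_csInf (H.set_nonempty hx) ?_
  rintro b ⟨a, ha, rfl⟩
  exact h a ha

/-- congruence: bellman only uses values of `w` on `[0, xhat]`. -/
lemma bellman_congr (H : Hyp xhat ℓ ℓd β) {w₁ w₂ : ℝ → ℝ} {x : ℝ} (hx : x ∈ Icc 0 xhat)
    (h : ∀ y ∈ Icc 0 xhat, w₁ y = w₂ y) : bellman β ℓ w₁ x = bellman β ℓ w₂ x := by
  unfold bellman
  congr 1
  apply image_congr
  intro a ha
  rw [h _ (H.mem_X_sub hx ha)]

end Hyp

/-- The invariant class of functions used through the iteration. -/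
structure Goodf (xhat : ℝ) (ℓ ℓd : ℝ → ℝ) (w : ℝ → ℝ) : Prop where
  lb : ∀ x ∈ Icc 0 xhat, ℓd 0 * x ≤ w x
  ub : ∀ x ∈ Icc 0 xhat, w x ≤ ℓ x
  mono : ∀ ⦃x⦄, x ∈ Icc 0 xhat → ∀ ⦃y⦄, y ∈ Icc 0 xhat → x ≤ y → w x ≤ w y
  lip : ∀ ⦃x⦄, x ∈ Icc 0 xhat → ∀ ⦃y⦄, y ∈ Icc 0 xhat → x ≤ y → w y ≤ w x + ℓd xhat * (y - x)

namespace Goodf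

variable {xhat β : ℝ} {ℓ ℓd : ℝ → ℝ} {w : ℝ → ℝ}

lemma nonneg (H : Hyp xhat ℓ ℓd β) (G : Goodf xhat ℓ ℓd w) :
    ∀ x ∈ Icc 0 xhat, 0 ≤ w x := fun x hx =>
  le_trans (mul_nonneg H.c0pos.le hx.1) (G.lb x hx)

lemma zero (H : Hyp xhat ℓ ℓd β) (G : Goodf xhat ℓ ℓd w) : w 0 = 0 := by
  have h1 := G.nonneg H 0 H.zero_mem
  have h2 := G.ub 0 H.zero_mem
  rw [H.hzero] at h2
  linarith

end Goodf

namespace Hyp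

variable {xhat β : ℝ} {ℓ ℓd : ℝ → ℝ}

lemma good_phi (H : Hyp xhat ℓ ℓd β) : Goodf xhat ℓ ℓd (fun x => ℓd 0 * x) where
  lb := fun x _ => le_refl _
  ub := fun x hx => H.lbase hx
  mono := fun x _ y _ hxy => by
    have := H.c0pos; nlinarith
  lip := fun x hx y hy hxy => by
    have h1 := H.dmono H.zero_mem H.top_mem H.hxhat.le
    have := H.c0pos; nlinarith

lemma good_psi (H : Hyp xhat ℓ ℓd β) : Goodf xhat ℓ ℓd ℓ where
  lb := fun x hx => H.lbase hx
  ub := fun x _ => le_refl _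
  mono := fun x hx y hy hxy => H.lmono hx hy hxy
  lip := fun x hx y hy hxy => H.llip hx hy hxy

lemma good_bellman (H : Hyp xhat ℓ ℓd β) {w : ℝ → ℝ} (G : Goodf xhat ℓ ℓd w) :
    Goodf xhat ℓ ℓd (bellman β ℓ w) where
  lb := fun x hx => by
    refine H.le_bellman hx.1 (fun a ha => ?_)
    have h1 := H.lbase (H.mem_X_left hx ha)
    have h2 := G.lb _ (H.mem_X_sub hx ha)
    have hβ := H.hβ
    have hc := H.c0pos
    nlinarith [mul_nonneg hc.le (sub_nonneg.2 ha.2)]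
  ub := fun x hx => by
    have h := H.bellman_le hx (G.nonneg H) (⟨hx.1, le_refl x⟩ : x ∈ Icc 0 x)
    simpa [G.zero H] using h
  mono := fun x hx y hy hxy => by
    refine H.le_bellman hy.1 (fun a ha => ?_)
    rcases le_or_gt a x with h | h
    · calc bellman β ℓ w x ≤ ℓ a + β * w (x - a) :=
            H.bellman_le hx (G.nonneg H) ⟨ha.1, h⟩
        _ ≤ ℓ a + β * w (y - a) := by
            have := G.mono (H.mem_X_sub hx ⟨ha.1, h⟩) (H.mem_X_sub hy ha) (by linarith)
            nlinarith [H.βpos]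
    · calc bellman β ℓ w x ≤ ℓ x + β * w (x - x) :=
            H.bellman_le hx (G.nonneg H) ⟨hx.1, le_refl x⟩
        _ ≤ ℓ a + β * w (y - a) := by
            have h1 : ℓ x ≤ ℓ a := H.lmono hx (H.mem_X_left hy ha) h.le
            have h2 : 0 ≤ w (y - a) := G.nonneg H _ (H.mem_X_sub hy ha)
            have h3 : w (x - x) = 0 := by simpa using G.zero H
            rw [h3]
            nlinarith [H.βpos]
  lip := fun x hx y hy hxy => by
    have key : bellman β ℓ w y - ℓd xhat * (y - x) ≤ bellman β ℓ w x := by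
      refine H.le_bellman hx.1 (fun a ha => ?_)
      have ha' : a + (y - x) ∈ Icc 0 y := ⟨by linarith [ha.1], by linarith [ha.2]⟩
      have h1 : bellman β ℓ w y ≤ ℓ (a + (y - x)) + β * w (y - (a + (y - x))) :=
        H.bellman_le hy (G.nonneg H) ha'
      have h2 : y - (a + (y - x)) = x - a := by ring
      rw [h2] at h1
      have h3 : ℓ (a + (y - x)) ≤ ℓ a + ℓd xhat * (a + (y - x) - a) :=
        H.llip (H.mem_X_left hx ha) (H.mem_X_left hy ha') (by linarith)
      have h4 : a + (y - x) - a = y - x := by ring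
      rw [h4] at h3
      linarith
    linarith

/-- Monotonicity of the Bellman operator. -/
lemma bellman_mono (H : Hyp xhat ℓ ℓd β) {w₁ w₂ : ℝ → ℝ} {x : ℝ} (hx : x ∈ Icc 0 xhat)
    (hw₁ : ∀ y ∈ Icc 0 xhat, 0 ≤ w₁ y) (h12 : ∀ y ∈ Icc 0 xhat, w₁ y ≤ w₂ y) :
    bellman β ℓ w₁ x ≤ bellman β ℓ w₂ x := by
  refine H.le_bellman hx.1 (fun a ha => ?_)
  calc bellman β ℓ w₁ x ≤ ℓ a + β * w₁ (x - a) := H.bellman_le hx hw₁ ha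
    _ ≤ ℓ a + β * w₂ (x - a) := by
        have := h12 _ (H.mem_X_sub hx ha)
        nlinarith [H.βpos]

end Hyp

namespace Hyp

variable {xhat β : ℝ} {ℓ ℓd : ℝ → ℝ}

lemma good_iter (H : Hyp xhat ℓ ℓd β) {w : ℝ → ℝ} (G : Goodf xhat ℓ ℓd w) (n : ℕ) :
    Goodf xhat ℓ ℓd ((bellman β ℓ)^[n] w) := by
  induction n with
  | zero => exact G
  | succ n ih =>
    rw [Function.iterate_succ_apply']
    exact H.good_bellman ih

lemma iter_mono (H : Hyp xhat ℓ ℓd β) {w₁ w₂ : ℝ → ℝ} (G₁ : Goodf xhat ℓ ℓd w₁)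
    (h12 : ∀ y ∈ Icc 0 xhat, w₁ y ≤ w₂ y) (n : ℕ) :
    ∀ x ∈ Icc 0 xhat, (bellman β ℓ)^[n] w₁ x ≤ (bellman β ℓ)^[n] w₂ x := by
  induction n with
  | zero => exact h12
  | succ n ih =>
    intro x hx
    rw [Function.iterate_succ_apply', Function.iterate_succ_apply']
    exact H.bellman_mono hx ((H.good_iter G₁ n).nonneg H) ih

/-- sandwich for iterates of an arbitrary candidate function -/
lemma iter_sandwich (H : Hyp xhat ℓ ℓd β) {w : ℝ → ℝ}
    (hwl : ∀ x ∈ Icc 0 xhat, ℓd 0 * x ≤ w x) (hwu : ∀ x ∈ Icc 0 xhat, w x ≤ ℓ x) (n : ℕ) :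
    ∀ x ∈ Icc 0 xhat,
      (bellman β ℓ)^[n] (fun x => ℓd 0 * x) x ≤ (bellman β ℓ)^[n] w x ∧
      (bellman β ℓ)^[n] w x ≤ (bellman β ℓ)^[n] ℓ x := by
  induction n with
  | zero => exact fun x hx => ⟨hwl x hx, hwu x hx⟩
  | succ n ih =>
    intro x hx
    have Gφ := H.good_iter H.good_phi n
    have hnn : ∀ y ∈ Icc 0 xhat, 0 ≤ (bellman β ℓ)^[n] w y := fun y hy =>
      le_trans (Gφ.nonneg H y hy) (ih y hy).1
    constructor
    · rw [Function.iterate_succ_apply', Function.iterate_succ_apply']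
      exact H.bellman_mono hx (Gφ.nonneg H) (fun y hy => (ih y hy).1)
    · rw [Function.iterate_succ_apply', Function.iterate_succ_apply']
      exact H.bellman_mono hx hnn (fun y hy => (ih y hy).2)

lemma phin_succ_ge (H : Hyp xhat ℓ ℓd β) (n : ℕ) :
    ∀ x ∈ Icc 0 xhat,
      (bellman β ℓ)^[n] (fun x => ℓd 0 * x) x ≤ (bellman β ℓ)^[n+1] (fun x => ℓd 0 * x) x := by
  intro x hx
  rw [Function.iterate_succ_apply]
  exact H.iter_mono H.good_phi ((H.good_bellman H.good_phi).lb) n x hx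

lemma psin_succ_le (H : Hyp xhat ℓ ℓd β) (n : ℕ) :
    ∀ x ∈ Icc 0 xhat, (bellman β ℓ)^[n+1] ℓ x ≤ (bellman β ℓ)^[n] ℓ x := by
  intro x hx
  rw [Function.iterate_succ_apply]
  exact H.iter_mono (H.good_bellman H.good_psi) ((H.good_bellman H.good_psi).ub) n x hx

lemma phin_mono_n (H : Hyp xhat ℓ ℓd β) {m n : ℕ} (hmn : m ≤ n) :
    ∀ x ∈ Icc 0 xhat,
      (bellman β ℓ)^[m] (fun x => ℓd 0 * x) x ≤ (bellman β ℓ)^[n] (fun x => ℓd 0 * x) x := by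
  induction n, hmn using Nat.le_induction with
  | base => exact fun x _ => le_refl _
  | succ n hmn ih => exact fun x hx => (ih x hx).trans (H.phin_succ_ge n x hx)

lemma psin_anti_n (H : Hyp xhat ℓ ℓd β) {m n : ℕ} (hmn : m ≤ n) :
    ∀ x ∈ Icc 0 xhat, (bellman β ℓ)^[n] ℓ x ≤ (bellman β ℓ)^[m] ℓ x := by
  induction n, hmn using Nat.le_induction with
  | base => exact fun x _ => le_refl _
  | succ n hmn ih => exact fun x hx => (H.psin_succ_le n x hx).trans (ih x hx)

lemma phin_le_psin (H : Hyp xhat ℓ ℓd β) (n : ℕ) :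
    ∀ x ∈ Icc 0 xhat,
      (bellman β ℓ)^[n] (fun x => ℓd 0 * x) x ≤ (bellman β ℓ)^[n] ℓ x :=
  H.iter_mono H.good_phi (fun y hy => H.lbase hy) n

lemma phin_le_psin' (H : Hyp xhat ℓ ℓd β) (m n : ℕ) :
    ∀ x ∈ Icc 0 xhat,
      (bellman β ℓ)^[m] (fun x => ℓd 0 * x) x ≤ (bellman β ℓ)^[n] ℓ x := by
  intro x hx
  calc (bellman β ℓ)^[m] (fun x => ℓd 0 * x) x
      ≤ (bellman β ℓ)^[max m n] (fun x => ℓd 0 * x) x := H.phin_mono_n (le_max_left m n) x hx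
    _ ≤ (bellman β ℓ)^[max m n] ℓ x := H.phin_le_psin _ x hx
    _ ≤ (bellman β ℓ)^[n] ℓ x := H.psin_anti_n (le_max_right m n) x hx

end Hyp

namespace Hyp

variable {xhat β : ℝ} {ℓ ℓd : ℝ → ℝ}

/-- The key quantitative estimate, by induction on `n`: there is an (approximate) residual `r`
such that the lower iterate is at least the linear cost plus `ℓd 0 * (β^n - 1) * r`, while the
gap between upper and lower iterates is at most `β^n * (ℓ r - ℓd 0 * r)`. -/
lemma key (H : Hyp xhat ℓ ℓd β) (n : ℕ) :
    ∀ x ∈ Icc 0 xhat, ∀ ε : ℝ, 0 < ε → ∃ r ∈ Icc 0 x,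
      ℓd 0 * x + ℓd 0 * ((β^n - 1) * r) - ε ≤ (bellman β ℓ)^[n] (fun x => ℓd 0 * x) x ∧
      (bellman β ℓ)^[n] ℓ x ≤
        (bellman β ℓ)^[n] (fun x => ℓd 0 * x) x + β^n * (ℓ r - ℓd 0 * r) + ε := by
  induction n with
  | zero =>
    intro x hx ε hε
    refine ⟨x, ⟨hx.1, le_refl x⟩, ?_, ?_⟩ <;> simp <;> linarith
  | succ n ih =>
    intro x hx ε hε
    have hβ1 := H.hβ
    have hc := H.c0pos
    have hP : (1:ℝ) ≤ β^n := one_le_pow₀ hβ1.le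
    -- choose a near-optimal action for the lower iterate
    have hne : ((fun a => ℓ a + β * ((bellman β ℓ)^[n] (fun x => ℓd 0 * x)) (x - a)) ''
        Icc 0 x).Nonempty := H.set_nonempty hx.1
    have hlt : sInf ((fun a => ℓ a + β * ((bellman β ℓ)^[n] (fun x => ℓd 0 * x)) (x - a)) ''
        Icc 0 x) < (bellman β ℓ)^[n+1] (fun x => ℓd 0 * x) x + ε/2 := by
      rw [Function.iterate_succ_apply']
      have : (0:ℝ) < ε/2 := by linarith
      unfold bellman
      linarith
    obtain ⟨b, hbS, hb⟩ := exists_lt_of_csInf_lt hne hlt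
    obtain ⟨a, ha, rfl⟩ := hbS
    set y := x - a with hy_def
    have hy : y ∈ Icc 0 x := ⟨by simp [hy_def]; linarith [ha.2], by simp [hy_def]; linarith [ha.1]⟩
    have hyX : y ∈ Icc 0 xhat := H.mem_X_sub hx ha
    have haX : a ∈ Icc 0 xhat := H.mem_X_left hx ha
    have hεβ : (0:ℝ) < ε/(2*β) := by positivity
    obtain ⟨r, hr, h1, h2⟩ := ih y hyX (ε/(2*β)) hεβ
    refine ⟨r, ⟨hr.1, hr.2.trans hy.2⟩, ?_, ?_⟩
    · -- lower bound
      have h1' : β * (ℓd 0 * y + ℓd 0 * ((β^n - 1) * r) - ε/(2*β)) ≤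
          β * ((bellman β ℓ)^[n] (fun x => ℓd 0 * x) y) :=
        mul_le_mul_of_nonneg_left h1 H.βpos.le
      have e1 : β * (ℓd 0 * y + ℓd 0 * ((β^n - 1) * r) - ε/(2*β)) =
          β * (ℓd 0 * y) + ℓd 0 * ((β^(n+1) - β) * r) - ε/2 := by
        rw [pow_succ]
        field_simp
      rw [e1] at h1'
      have e3 : ℓd 0 * ((β - 1) * r) ≤ ℓd 0 * ((β - 1) * y) := by
        have : (β - 1) * r ≤ (β - 1) * y :=
          mul_le_mul_of_nonneg_left hr.2 (by linarith)
        exact mul_le_mul_of_nonneg_left this hc.le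
      have hl := H.lbase haX
      have hax : ℓd 0 * x = ℓd 0 * a + ℓd 0 * y := by simp [hy_def]; ring
      have hb2 : ℓ a + β * (bellman β ℓ)^[n] (fun x => ℓd 0 * x) y <
          (bellman β ℓ)^[n+1] (fun x => ℓd 0 * x) x + ε/2 := hb
      nlinarith [hb2, h1', e3, hl, hax]
    · -- upper bound
      have hup : (bellman β ℓ)^[n+1] ℓ x ≤ ℓ a + β * ((bellman β ℓ)^[n] ℓ) y := by
        rw [Function.iterate_succ_apply']
        exact H.bellman_le hx ((H.good_iter H.good_psi n).nonneg H) ha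
      have h2' : β * ((bellman β ℓ)^[n] ℓ y) ≤
          β * ((bellman β ℓ)^[n] (fun x => ℓd 0 * x) y + β^n * (ℓ r - ℓd 0 * r) + ε/(2*β)) :=
        mul_le_mul_of_nonneg_left h2 H.βpos.le
      have e1 : β * ((bellman β ℓ)^[n] (fun x => ℓd 0 * x) y + β^n * (ℓ r - ℓd 0 * r) + ε/(2*β)) =
          β * ((bellman β ℓ)^[n] (fun x => ℓd 0 * x) y) + β^(n+1) * (ℓ r - ℓd 0 * r) + ε/2 := by
        rw [pow_succ]
        field_simp
      rw [e1] at h2'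
      have hb2 : ℓ a + β * (bellman β ℓ)^[n] (fun x => ℓd 0 * x) y <
          (bellman β ℓ)^[n+1] (fun x => ℓd 0 * x) x + ε/2 := hb
      linarith [hb2, hup, h2']

end Hyp

namespace Hyp

variable {xhat β : ℝ} {ℓ ℓd : ℝ → ℝ}

/-- monotonicity of `D r = ℓ r - ℓd 0 * r`. -/
lemma Dmono (H : Hyp xhat ℓ ℓd β) {r s : ℝ} (hr : r ∈ Icc 0 xhat) (hs : s ∈ Icc 0 xhat)
    (hrs : r ≤ s) : ℓ r - ℓd 0 * r ≤ ℓ s - ℓd 0 * s := by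
  have ht := H.tangent hr hs
  have hd := H.dmono H.zero_mem hr hr.1
  nlinarith [mul_nonneg (sub_nonneg.2 hd) (sub_nonneg.2 hrs)]

lemma slope_small (H : Hyp xhat ℓ ℓd β) {ε : ℝ} (hε : 0 < ε) :
    ∃ δ > 0, ∀ t : ℝ, 0 < t → t < δ → ℓ t - ℓd 0 * t ≤ ε * t := by
  have htend := hasDerivAt_iff_tendsto_slope.1 (H.hderiv 0 H.zero_mem)
  have h1 : ∀ᶠ t in nhdsWithin 0 {(0:ℝ)}ᶜ, slope ℓ 0 t < ℓd 0 + ε :=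
    (tendsto_order.1 htend).2 (ℓd 0 + ε) (by linarith)
  have h2 : ∀ᶠ t in nhdsWithin (0:ℝ) (Ioi 0), slope ℓ 0 t < ℓd 0 + ε :=
    h1.filter_mono (nhdsWithin_mono 0 (fun t ht => ne_of_gt ht))
  rw [eventually_nhdsWithin_iff, Metric.eventually_nhds_iff] at h2
  obtain ⟨δ, hδ, hδ'⟩ := h2
  refine ⟨δ, hδ, fun t ht htδ => ?_⟩
  have hdist : dist t 0 < δ := by
    rw [Real.dist_eq, sub_zero, abs_of_pos ht]; exact htδ
  have h3 := hδ' hdist ht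
  rw [slope_def_field, H.hzero] at h3
  rw [sub_zero, sub_zero, div_lt_iff₀ ht] at h3
  nlinarith

/-- uniform gap between upper and lower iterates tends to zero -/
lemma gap (H : Hyp xhat ℓ ℓd β) {ε : ℝ} (hε : 0 < ε) :
    ∃ N : ℕ, ∀ n ≥ N, ∀ x ∈ Icc 0 xhat,
      (bellman β ℓ)^[n] ℓ x ≤ (bellman β ℓ)^[n] (fun x => ℓd 0 * x) x + ε := by
  have hc := H.c0pos
  set K := (ℓ xhat + 1) / ℓd 0 with hK_def
  have hK : 0 < K := div_pos (by linarith [H.lnonneg H.top_mem]) hc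
  have hKc : ℓd 0 * K = ℓ xhat + 1 := by
    rw [hK_def]; field_simp
  set ε₂ := ε / (2 * (2 * K + 1)) with hε₂_def
  have hε₂ : 0 < ε₂ := by positivity
  obtain ⟨δ, hδ, hδ'⟩ := H.slope_small hε₂
  set m := min (δ/2) xhat with hm_def
  have hm : 0 < m := lt_min (by linarith) H.hxhat
  -- choose N such that β^n is large
  have htend := tendsto_pow_atTop_atTop_of_one_lt (H.hβ)
  have hev : ∀ᶠ n : ℕ in atTop, max 2 (K / m + 1) ≤ β ^ n :=
    htend.eventually (eventually_ge_atTop _)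
  obtain ⟨N, hN⟩ := eventually_atTop.1 hev
  refine ⟨N, fun n hn x hx => ?_⟩
  have hβn := hN n hn
  have hβn2 : (2:ℝ) ≤ β ^ n := le_trans (le_max_left _ _) hβn
  have hβnm : K / m + 1 ≤ β ^ n := le_trans (le_max_right _ _) hβn
  have hpow1 : (1:ℝ) ≤ β ^ n - 1 := by linarith
  set t := K / (β ^ n - 1) with ht_def
  have ht : 0 < t := div_pos hK (by linarith)
  have htm : t ≤ m := by
    rw [ht_def, div_le_iff₀ (by linarith : (0:ℝ) < β ^ n - 1)]
    have h6 : K / m ≤ β ^ n - 1 := by linarith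
    have h7 : m * (K / m) ≤ m * (β ^ n - 1) := mul_le_mul_of_nonneg_left h6 hm.le
    rw [mul_div_cancel₀ _ (ne_of_gt hm)] at h7
    linarith [mul_comm m (β ^ n - 1)]
  have htδ : t < δ := lt_of_le_of_lt (htm.trans (min_le_left _ _)) (by linarith)
  have htx : t ≤ xhat := htm.trans (min_le_right _ _)
  -- apply key lemma
  set εk := min (ε/2) 1 with hεk_def
  have hεk : 0 < εk := lt_min (by linarith) one_pos
  obtain ⟨r, hr, h1, h2⟩ := H.key n x hx εk hεk
  have hrX : r ∈ Icc 0 xhat := ⟨hr.1, hr.2.trans hx.2⟩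
  -- bound r by t
  have hφub := (H.good_iter H.good_phi n).ub x hx
  have hlx : ℓ x ≤ ℓ xhat := H.lmono hx H.top_mem hx.2
  have hr_le : r ≤ t := by
    have h3 : ℓd 0 * ((β ^ n - 1) * r) ≤ ℓ xhat + 1 := by
      have h4 : ℓd 0 * x ≥ 0 := mul_nonneg hc.le hx.1
      have h5 : εk ≤ 1 := min_le_right _ _
      linarith
    rw [← hKc] at h3
    have h6 : (β ^ n - 1) * r ≤ K := le_of_mul_le_mul_left (by linarith [h3]) hc
    rw [ht_def, le_div_iff₀ (by linarith : (0:ℝ) < β ^ n - 1)]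
    linarith [mul_comm r (β ^ n - 1)]
  -- bound the gap
  have hDrt : ℓ r - ℓd 0 * r ≤ ℓ t - ℓd 0 * t := H.Dmono hrX ⟨ht.le, htx⟩ hr_le
  have hDt : ℓ t - ℓd 0 * t ≤ ε₂ * t := hδ' t ht htδ
  have hβn_pos : (0:ℝ) < β ^ n := by linarith
  have hfinal : β ^ n * (ℓ r - ℓd 0 * r) ≤ ε / 2 := by
    have h7 : β ^ n * (ℓ r - ℓd 0 * r) ≤ β ^ n * (ε₂ * t) :=
      mul_le_mul_of_nonneg_left (hDrt.trans hDt) hβn_pos.le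
    have h8 : β ^ n * (ε₂ * t) = ε₂ * K * (β ^ n / (β ^ n - 1)) := by
      rw [ht_def]; field_simp
    have h9 : β ^ n / (β ^ n - 1) ≤ 2 := by
      rw [div_le_iff₀ (by linarith : (0:ℝ) < β ^ n - 1)]
      linarith
    have h10 : ε₂ * K * (β ^ n / (β ^ n - 1)) ≤ ε₂ * K * 2 :=
      mul_le_mul_of_nonneg_left h9 (by positivity)
    have h11 : ε₂ * K * 2 ≤ ε / 2 := by
      rw [hε₂_def]
      rw [div_mul_eq_mul_div, div_mul_eq_mul_div, div_le_div_iff₀ (by positivity) (by norm_num)]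
      nlinarith
    linarith
  have hεk2 : εk ≤ ε / 2 := min_le_left _ _
  linarith

end Hyp

namespace Hyp

variable {xhat β : ℝ} {ℓ ℓd : ℝ → ℝ}

/-- the fixed point: pointwise infimum of the upper iterates -/
noncomputable def wstar (xhat β : ℝ) (ℓ ℓd : ℝ → ℝ) : ℝ → ℝ :=
  fun x => ⨅ n : ℕ, (bellman β ℓ)^[n] ℓ x

lemma wstar_bdd (H : Hyp xhat ℓ ℓd β) {x : ℝ} (hx : x ∈ Icc 0 xhat) :
    BddBelow (range fun n : ℕ => (bellman β ℓ)^[n] ℓ x) := by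
  refine ⟨0, fun b hb => ?_⟩
  obtain ⟨n, rfl⟩ := hb
  exact (H.good_iter H.good_psi n).nonneg H x hx

lemma wstar_le (H : Hyp xhat ℓ ℓd β) {x : ℝ} (hx : x ∈ Icc 0 xhat) (n : ℕ) :
    wstar xhat β ℓ ℓd x ≤ (bellman β ℓ)^[n] ℓ x :=
  ciInf_le (H.wstar_bdd hx) n

lemma le_wstar (H : Hyp xhat ℓ ℓd β) {x : ℝ} (hx : x ∈ Icc 0 xhat) (m : ℕ) :
    (bellman β ℓ)^[m] (fun x => ℓd 0 * x) x ≤ wstar xhat β ℓ ℓd x :=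
  le_ciInf (fun n => H.phin_le_psin' m n x hx)

lemma wstar_lb (H : Hyp xhat ℓ ℓd β) {x : ℝ} (hx : x ∈ Icc 0 xhat) :
    ℓd 0 * x ≤ wstar xhat β ℓ ℓd x := H.le_wstar hx 0

lemma wstar_ub (H : Hyp xhat ℓ ℓd β) {x : ℝ} (hx : x ∈ Icc 0 xhat) :
    wstar xhat β ℓ ℓd x ≤ ℓ x := H.wstar_le hx 0

lemma wstar_nonneg (H : Hyp xhat ℓ ℓd β) {x : ℝ} (hx : x ∈ Icc 0 xhat) :
    0 ≤ wstar xhat β ℓ ℓd x :=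
  le_trans (mul_nonneg H.c0pos.le hx.1) (H.wstar_lb hx)

lemma wstar_cont (H : Hyp xhat ℓ ℓd β) : ContinuousOn (wstar xhat β ℓ ℓd) (Icc 0 xhat) := by
  have hL : 0 ≤ ℓd xhat := (H.hpos xhat H.top_mem).le
  have key : ∀ x ∈ Icc 0 xhat, ∀ y ∈ Icc 0 xhat, x ≤ y →
      wstar xhat β ℓ ℓd x ≤ wstar xhat β ℓ ℓd y ∧
      wstar xhat β ℓ ℓd y ≤ wstar xhat β ℓ ℓd x + ℓd xhat * (y - x) := by
    intro x hx y hy hxy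
    constructor
    · refine le_ciInf (fun n => ?_)
      exact (H.wstar_le hx n).trans ((H.good_iter H.good_psi n).mono hx hy hxy)
    · have h : ∀ n : ℕ, wstar xhat β ℓ ℓd y - ℓd xhat * (y - x) ≤ (bellman β ℓ)^[n] ℓ x := by
        intro n
        have h1 := H.wstar_le hy n
        have h2 := (H.good_iter H.good_psi n).lip hx hy hxy
        linarith
      have h2 : wstar xhat β ℓ ℓd y - ℓd xhat * (y - x) ≤ wstar xhat β ℓ ℓd x := le_ciInf h
      linarith
  have hlip : LipschitzOnWith (Real.toNNReal (ℓd xhat)) (wstar xhat β ℓ ℓd) (Icc 0 xhat) := by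
    rw [lipschitzOnWith_iff_dist_le_mul]
    intro x hx y hy
    rw [Real.dist_eq, Real.dist_eq, Real.coe_toNNReal _ hL]
    rcases le_total y x with h | h
    · obtain ⟨h1, h2⟩ := key y hy x hx h
      rw [abs_of_nonneg (by linarith), abs_of_nonneg (by linarith)]
      linarith
    · obtain ⟨h1, h2⟩ := key x hx y hy h
      rw [abs_of_nonpos (by linarith), abs_of_nonpos (by linarith)]
      linarith
  exact hlip.continuousOn

lemma wstar_mem (H : Hyp xhat ℓ ℓd β) : wstar xhat β ℓ ℓd ∈ candidateClass xhat ℓ ℓd :=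
  ⟨H.wstar_cont, fun x hx => ⟨H.wstar_lb hx, H.wstar_ub hx⟩⟩

lemma wstar_fixed (H : Hyp xhat ℓ ℓd β) {x : ℝ} (hx : x ∈ Icc 0 xhat) :
    bellman β ℓ (wstar xhat β ℓ ℓd) x = wstar xhat β ℓ ℓd x := by
  have hub : ∀ n : ℕ, bellman β ℓ (wstar xhat β ℓ ℓd) x ≤ (bellman β ℓ)^[n+1] ℓ x := by
    intro n
    rw [Function.iterate_succ_apply']
    exact H.bellman_mono hx (fun y hy => H.wstar_nonneg hy) (fun y hy => H.wstar_le hy n)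
  have hlb : ∀ n : ℕ, (bellman β ℓ)^[n+1] (fun x => ℓd 0 * x) x ≤
      bellman β ℓ (wstar xhat β ℓ ℓd) x := by
    intro n
    rw [Function.iterate_succ_apply']
    exact H.bellman_mono hx ((H.good_iter H.good_phi n).nonneg H) (fun y hy => H.le_wstar hy n)
  apply le_antisymm
  · apply le_of_forall_pos_le_add
    intro ε hε
    obtain ⟨N, hN⟩ := H.gap hε
    have h1 := hub N
    have h2 := hN (N+1) (by omega) x hx
    have h3 := H.le_wstar hx (N+1)
    linarith
  · apply le_of_forall_pos_le_add
    intro ε hε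
    obtain ⟨N, hN⟩ := H.gap hε
    have h1 := hlb N
    have h2 := hN (N+1) (by omega) x hx
    have h3 := H.wstar_le hx (N+1)
    linarith

lemma fixed_iter (H : Hyp xhat ℓ ℓd β) {w : ℝ → ℝ}
    (hfix : ∀ x ∈ Icc 0 xhat, bellman β ℓ w x = w x) (n : ℕ) :
    ∀ x ∈ Icc 0 xhat, (bellman β ℓ)^[n] w x = w x := by
  induction n with
  | zero => exact fun x _ => rfl
  | succ n ih =>
    intro x hx
    rw [Function.iterate_succ_apply']
    rw [H.bellman_congr hx ih]
    exact hfix x hx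

end Hyp
end BellmanProof

open BellmanProof

/-- the Bellman operator has a unique fixed point `w*` in 𝓘, and for every
`w ∈ 𝓘` the iterates `Tⁿw` converge to `w*` uniformly on `X = [0, x̂]`. -/
theorem bellman_unique_fixed_point_and_uniform_convergence
    (xhat : ℝ) (hxhat : 0 < xhat)
    (ℓ ℓd : ℝ → ℝ)
    (hderiv : ∀ x ∈ Set.Icc 0 xhat, HasDerivAt ℓ (ℓd x) x)
    (hcont_deriv : ContinuousOn ℓd (Set.Icc 0 xhat))
    (hconv : StrictConvexOn ℝ (Set.Icc 0 xhat) ℓ)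
    (hzero : ℓ 0 = 0)
    (hpos : ∀ x ∈ Set.Icc 0 xhat, 0 < ℓd x)
    (β : ℝ) (hβ : 1 < β) :
    ∃ wstar ∈ candidateClass xhat ℓ ℓd,
      (∀ x ∈ Set.Icc 0 xhat, bellman β ℓ wstar x = wstar x) ∧
      (∀ w ∈ candidateClass xhat ℓ ℓd,
        (∀ x ∈ Set.Icc 0 xhat, bellman β ℓ w x = w x) →
        ∀ x ∈ Set.Icc 0 xhat, w x = wstar x) ∧
      (∀ w ∈ candidateClass xhat ℓ ℓd,
        TendstoUniformlyOn (fun n => (bellman β ℓ)^[n] w) wstar atTop (Set.Icc 0 xhat)) := by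
  have H : Hyp xhat ℓ ℓd β := ⟨hxhat, hderiv, hconv, hzero, hpos, hβ⟩
  refine ⟨Hyp.wstar xhat β ℓ ℓd, H.wstar_mem, fun x hx => H.wstar_fixed hx, ?_, ?_⟩
  · -- uniqueness
    intro w hw hfix x hx
    have hsand := fun n => H.iter_sandwich (fun y hy => (hw.2 y hy).1)
      (fun y hy => (hw.2 y hy).2) n x hx
    have heq : ∀ n : ℕ, (bellman β ℓ)^[n] w x = w x := fun n => H.fixed_iter hfix n x hx
    apply le_antisymm
    · apply le_of_forall_pos_le_add
      intro ε hε
      obtain ⟨N, hN⟩ := H.gap hε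
      have h1 := (hsand N).2
      have h2 := hN N (le_refl N) x hx
      have h3 := H.le_wstar hx N
      rw [heq N] at h1
      linarith
    · apply le_of_forall_pos_le_add
      intro ε hε
      obtain ⟨N, hN⟩ := H.gap hε
      have h1 := (hsand N).1
      have h2 := hN N (le_refl N) x hx
      have h3 := H.wstar_le hx N
      rw [heq N] at h1
      linarith
  · -- uniform convergence
    intro w hw
    rw [Metric.tendstoUniformlyOn_iff]
    intro ε hε
    obtain ⟨N, hN⟩ := H.gap (half_pos hε)
    rw [eventually_atTop]
    refine ⟨N, fun n hn x hx => ?_⟩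
    have hsand := H.iter_sandwich (fun y hy => (hw.2 y hy).1) (fun y hy => (hw.2 y hy).2) n x hx
    have h2 := hN n hn x hx
    have h3 := H.le_wstar hx n
    have h4 := H.wstar_le hx n
    rw [Real.dist_eq]
    rw [abs_sub_lt_iff]
    constructor <;> linarith [hsand.1, hsand.2]
end

section
/- The unique fixed point w* of the Bellman operator T in 𝓘 is strictly increasing, strictly convex, and continuously differentiable on the open interval (0, x̂). -/
open Set Filter
open Topology

private lemma convex_hasDerivAt_of_touching (xhat x r l : ℝ) (w φ : ℝ → ℝ)
    (hcw : ConvexOn ℝ (Set.Icc 0 xhat) w)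
    (hr : 0 < r) (hr2 : r ≤ x) (hr3 : r ≤ xhat - x)
    (hφx : φ x = w x)
    (hφd : HasDerivAt φ l x)
    (hmaj : ∀ y ∈ Set.Icc (x - r) (x + r), w y ≤ φ y) :
    HasDerivAt w l x := by
  have hdiv : ∀ A C dd : ℝ, 0 < dd → A ≤ C → A / dd ≤ C / dd := by
    intro A C dd hdd h
    rw [div_le_div_iff₀ hdd hdd]; nlinarith
  rw [hasDerivAt_iff_tendsto_slope]
  have hφt : Tendsto (slope φ x) (𝓝[≠] x) (𝓝 l) := hasDerivAt_iff_tendsto_slope.mp hφd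
  have hrefl : Tendsto (fun y : ℝ => 2*x - y) (𝓝[≠] x) (𝓝[≠] x) := by
    have hc : Continuous fun y : ℝ => 2*x - y := by continuity
    have h1 : Tendsto (fun y : ℝ => 2*x - y) (𝓝 x) (𝓝 x) := by
      have h2 := hc.tendsto x
      simpa [show 2*x - x = x by ring] using h2
    apply tendsto_nhdsWithin_of_tendsto_nhds_of_eventually_within _
      (h1.mono_left nhdsWithin_le_nhds)
    filter_upwards [self_mem_nhdsWithin] with y hy
    simp only [Set.mem_compl_iff, Set.mem_singleton_iff] at hy ⊢
    intro hcc; apply hy; linarith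
  have hφt2 : Tendsto (fun y => slope φ x (2*x - y)) (𝓝[≠] x) (𝓝 l) := hφt.comp hrefl
  have hbound : ∀ᶠ y in 𝓝[≠] x,
      min (slope φ x y) (slope φ x (2*x - y)) ≤ slope w x y ∧
      slope w x y ≤ max (slope φ x y) (slope φ x (2*x - y)) := by
    rw [eventually_nhdsWithin_iff]
    filter_upwards [Metric.ball_mem_nhds x hr] with y hy hyne
    simp only [Metric.mem_ball, Real.dist_eq] at hy
    simp only [Set.mem_compl_iff, Set.mem_singleton_iff] at hyne
    have habs := abs_lt.mp hy
    have hyIcc : y ∈ Set.Icc (x - r) (x + r) := ⟨by linarith [habs.1], by linarith [habs.2]⟩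
    have hyIcc' : (2*x - y) ∈ Set.Icc (x - r) (x + r) :=
      ⟨by linarith [habs.2], by linarith [habs.1]⟩
    have hys : y ∈ Set.Icc 0 xhat := ⟨by linarith [hyIcc.1], by linarith [hyIcc.2]⟩
    have hys' : (2*x - y) ∈ Set.Icc 0 xhat :=
      ⟨by linarith [hyIcc'.1], by linarith [hyIcc'.2]⟩
    have hwy := hmaj y hyIcc
    have hwy' := hmaj (2*x - y) hyIcc'
    rcases lt_or_gt_of_ne hyne with hlt | hgt
    · -- y < x ; reflection 2x - y > x
      have hup : slope w x y ≤ slope φ x (2*x - y) := by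
        have hadj := hcw.slope_mono_adjacent hys hys' hlt (by linarith)
        have hcmp : (w (2*x - y) - w x) / (2*x - y - x) ≤
            (φ (2*x - y) - φ x) / (2*x - y - x) := by
          apply hdiv _ _ _ (by linarith)
          rw [hφx]; linarith
        rw [slope_comm, slope_def_field, slope_def_field]
        calc (w x - w y) / (x - y) ≤ (w (2*x - y) - w x) / (2*x - y - x) := hadj
          _ ≤ (φ (2*x - y) - φ x) / (2*x - y - x) := hcmp
      have hlow : slope φ x y ≤ slope w x y := by
        rw [slope_comm, slope_def_field, slope_comm w, slope_def_field]
        apply hdiv _ _ _ (by linarith)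
        rw [hφx]; linarith
      exact ⟨le_trans (min_le_left _ _) hlow, le_trans hup (le_max_right _ _)⟩
    · -- x < y
      have hup : slope w x y ≤ slope φ x y := by
        rw [slope_def_field, slope_def_field]
        apply hdiv _ _ _ (by linarith)
        rw [hφx]; linarith
      have hlow : slope φ x (2*x - y) ≤ slope w x y := by
        have hadj := hcw.slope_mono_adjacent hys' hys (by linarith) hgt
        have hcmp : (φ x - φ (2*x - y)) / (x - (2*x - y)) ≤
            (w x - w (2*x - y)) / (x - (2*x - y)) := by
          apply hdiv _ _ _ (by linarith)
          rw [hφx]; linarith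
        rw [slope_comm, slope_def_field, slope_def_field]
        calc (φ x - φ (2*x - y)) / (x - (2*x - y)) ≤
            (w x - w (2*x - y)) / (x - (2*x - y)) := hcmp
          _ ≤ (w y - w x) / (y - x) := hadj
      exact ⟨le_trans (min_le_right _ _) hlow, le_trans hup (le_max_left _ _)⟩
  exact tendsto_of_tendsto_of_tendsto_of_le_of_le'
    (by simpa using hφt.min hφt2) (by simpa using hφt.max hφt2)
    (hbound.mono fun y h => h.1) (hbound.mono fun y h => h.2)


set_option maxHeartbeats 3200000 in
/-- the unique fixed point `w*` of the Bellman operator in 𝓘 is strictly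
increasing, strictly convex, and continuously differentiable on `(0, x̂)`. -/
theorem bellman_fixed_point_strictMono_strictConvex_contDiff
    (xhat : ℝ) (hxhat : 0 < xhat)
    (ℓ ℓd : ℝ → ℝ)
    (hderiv : ∀ x ∈ Set.Icc 0 xhat, HasDerivAt ℓ (ℓd x) x)
    (hcont_deriv : ContinuousOn ℓd (Set.Icc 0 xhat))
    (hconv : StrictConvexOn ℝ (Set.Icc 0 xhat) ℓ)
    (hzero : ℓ 0 = 0)
    (hpos : ∀ x ∈ Set.Icc 0 xhat, 0 < ℓd x)
    (β : ℝ) (hβ : 1 < β)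
    (wstar : ℝ → ℝ)
    (hwstar_mem : wstar ∈ candidateClass xhat ℓ ℓd)
    (hwstar_fix : ∀ x ∈ Set.Icc 0 xhat, bellman β ℓ wstar x = wstar x) :
    StrictMonoOn wstar (Set.Icc 0 xhat) ∧
    StrictConvexOn ℝ (Set.Icc 0 xhat) wstar ∧
    ∃ d : ℝ → ℝ, ContinuousOn d (Set.Ioo 0 xhat) ∧
      ∀ x ∈ Set.Ioo 0 xhat, HasDerivAt wstar (d x) x := by
  obtain ⟨hwc, hwb⟩ := hwstar_mem
  set w := wstar with hwdef
  set m := ℓd 0 with hmdef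
  have h0s : (0:ℝ) ∈ Set.Icc 0 xhat := ⟨le_refl 0, hxhat.le⟩
  have hm0 : 0 < m := hpos 0 h0s
  have hβ0 : (0:ℝ) < β := by linarith
  have hw_lb : ∀ x ∈ Set.Icc 0 xhat, m * x ≤ w x := fun x hx => (hwb x hx).1
  have hw_ub : ∀ x ∈ Set.Icc 0 xhat, w x ≤ ℓ x := fun x hx => (hwb x hx).2
  have hw0 : w 0 = 0 := le_antisymm (by simpa [hzero] using hw_ub 0 h0s)
    (by simpa using hw_lb 0 h0s)
  have hsub : ∀ {x : ℝ}, x ∈ Set.Icc 0 xhat → Set.Icc 0 x ⊆ Set.Icc 0 xhat := by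
    rintro x hx a ⟨h1, h2⟩; exact ⟨h1, h2.trans hx.2⟩
  have hmemsub : ∀ {x a : ℝ}, x ∈ Set.Icc 0 xhat → a ∈ Set.Icc 0 x → x - a ∈ Set.Icc 0 xhat := by
    rintro x a hx ⟨h1, h2⟩; exact ⟨by linarith, by linarith [hx.2]⟩
  have hℓ_ge : ∀ x ∈ Set.Icc 0 xhat, m * x ≤ ℓ x := fun x hx =>
    (hw_lb x hx).trans (hw_ub x hx)
  have hℓ_nonneg : ∀ x ∈ Set.Icc 0 xhat, 0 ≤ ℓ x := fun x hx =>
    le_trans (mul_nonneg hm0.le hx.1) (hℓ_ge x hx)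
  have hw_nonneg : ∀ x ∈ Set.Icc 0 xhat, 0 ≤ w x := fun x hx =>
    le_trans (mul_nonneg hm0.le hx.1) (hw_lb x hx)
  -- Bellman inequality
  have hBle : ∀ x ∈ Set.Icc 0 xhat, ∀ a ∈ Set.Icc 0 x, w x ≤ ℓ a + β * w (x - a) := by
    intro x hx a ha
    rw [← hwstar_fix x hx]
    refine csInf_le ⟨0, ?_⟩ ⟨a, ha, rfl⟩
    rintro y ⟨a', ha', rfl⟩
    have h1 := hℓ_nonneg a' (hsub hx ha')
    have h2 := hw_nonneg (x - a') (hmemsub hx ha')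
    positivity
  -- minimizer existence
  have hmin : ∀ x ∈ Set.Icc 0 xhat, ∃ b ∈ Set.Icc 0 x, w x = ℓ b + β * w (x - b) := by
    intro x hx
    have hcont : ContinuousOn (fun a => ℓ a + β * w (x - a)) (Set.Icc 0 x) := by
      refine ContinuousOn.add ?_ (ContinuousOn.mul continuousOn_const ?_)
      · exact fun a ha => ((hderiv a (hsub hx ha)).continuousAt).continuousWithinAt
      · exact hwc.comp ((continuous_const.sub continuous_id).continuousOn)
          (fun a ha => hmemsub hx ha)
    obtain ⟨b, hb, hbmin⟩ := isCompact_Icc.exists_isMinOn ⟨0, ⟨le_refl 0, hx.1⟩⟩ hcont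
    refine ⟨b, hb, le_antisymm (hBle x hx b hb) ?_⟩
    rw [← hwstar_fix x hx]
    refine le_csInf ⟨_, ⟨b, hb, rfl⟩⟩ ?_
    rintro y ⟨a, ha, rfl⟩
    exact hbmin ha
  -- global choice of minimizers
  have hminall : ∀ x : ℝ, ∃ b, x ∈ Set.Icc 0 xhat →
      b ∈ Set.Icc 0 x ∧ w x = ℓ b + β * w (x - b) := by
    intro x
    by_cases hx : x ∈ Set.Icc 0 xhat
    · obtain ⟨b, hb1, hb2⟩ := hmin x hx
      exact ⟨b, fun _ => ⟨hb1, hb2⟩⟩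
    · exact ⟨0, fun h => absurd h hx⟩
  choose B hB using hminall
  set traj : ℝ → ℕ → ℝ := fun x n => (fun y => y - B y)^[n] x with htraj
  have htraj0 : ∀ x, traj x 0 = x := fun x => rfl
  have htrajS : ∀ x n, traj x (n+1) = traj x n - B (traj x n) := by
    intro x n; simp only [htraj, Function.iterate_succ_apply']
  have htraj_mem : ∀ x ∈ Set.Icc 0 xhat, ∀ n, traj x n ∈ Set.Icc 0 xhat := by
    intro x hx n
    induction n with
    | zero => exact hx
    | succ k ih =>
      rw [htrajS]
      exact hmemsub ih (hB (traj x k) ih).1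
  have hkey1 : ∀ x ∈ Set.Icc 0 xhat, ∀ n, β ^ n * w (traj x n) ≤ w x := by
    intro x hx n
    induction n with
    | zero => simp [htraj0]
    | succ k ih =>
      have hmem := htraj_mem x hx k
      have hb := hB (traj x k) hmem
      have hlnn := hℓ_nonneg (B (traj x k)) (hsub hmem hb.1)
      have hstep : β * w (traj x (k+1)) ≤ w (traj x k) := by
        rw [htrajS]; linarith [hb.2]
      calc β ^ (k+1) * w (traj x (k+1)) = β ^ k * (β * w (traj x (k+1))) := by ring
        _ ≤ β ^ k * w (traj x k) := mul_le_mul_of_nonneg_left hstep (by positivity)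
        _ ≤ w x := ih
  have hkey2 : ∀ x ∈ Set.Icc 0 xhat, ∀ n, m * (β ^ n * traj x n) ≤ w x := by
    intro x hx n
    have hmem := htraj_mem x hx n
    have h1 := hw_lb (traj x n) hmem
    calc m * (β ^ n * traj x n) = β ^ n * (m * traj x n) := by ring
      _ ≤ β ^ n * w (traj x n) := mul_le_mul_of_nonneg_left h1 (by positivity)
      _ ≤ w x := hkey1 x hx n
  -- the o(z) estimate at 0
  have heps : ∀ ε : ℝ, 0 < ε → ∃ δ > 0, ∀ z, 0 ≤ z → z ≤ δ → ℓ z - m * z ≤ ε * z := by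
    intro ε hε
    have h := hasDerivAt_iff_tendsto_slope.mp (hderiv 0 h0s)
    have h2 : ∀ᶠ z in nhdsWithin (0:ℝ) {(0:ℝ)}ᶜ, |slope ℓ 0 z - m| < ε :=
      Metric.tendsto_nhds.mp h ε hε
    rw [eventually_nhdsWithin_iff, Metric.eventually_nhds_iff] at h2
    obtain ⟨δ, hδ, hδ2⟩ := h2
    refine ⟨δ/2, by linarith, ?_⟩
    intro z hz0 hzδ
    rcases eq_or_lt_of_le hz0 with rfl | hz0'
    · simp [hzero]
    · have hd1 : dist z (0:ℝ) < δ := by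
        rw [Real.dist_eq, sub_zero, abs_of_pos hz0']; linarith
      have h3 := hδ2 hd1 (by simpa using hz0'.ne')
      rw [slope_def_field, hzero] at h3
      have h4 : (ℓ z - 0)/(z - 0) - m < ε := (abs_lt.mp h3).2
      rw [sub_zero, sub_zero] at h4
      have h5 : ℓ z / z ≤ m + ε := by linarith
      have h6 := (div_le_iff₀ hz0').mp h5
      nlinarith
  -- convexity
  have hcw : ConvexOn ℝ (Set.Icc 0 xhat) w := by
    refine ⟨convex_Icc _ _, ?_⟩
    intro x₁ hx₁ x₂ hx₂ a b ha hb hab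
    simp only [smul_eq_mul]
    rcases eq_or_lt_of_le ha with rfl | ha'
    · rw [zero_add] at hab; subst hab; simp
    rcases eq_or_lt_of_le hb with rfl | hb'
    · rw [add_zero] at hab; subst hab; simp
    set z : ℕ → ℝ := fun n => a * traj x₁ n + b * traj x₂ n with hzdef
    have hy₁mem := htraj_mem x₁ hx₁
    have hy₂mem := htraj_mem x₂ hx₂
    have hzmem : ∀ n, z n ∈ Set.Icc 0 xhat := by
      intro n
      have h1 := hy₁mem n
      have h2 := hy₂mem n
      have h3 : a * traj x₁ n ≤ a * xhat := mul_le_mul_of_nonneg_left h1.2 ha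
      have h4 : b * traj x₂ n ≤ b * xhat := mul_le_mul_of_nonneg_left h2.2 hb
      constructor
      · simp only [hzdef]
        exact add_nonneg (mul_nonneg ha h1.1) (mul_nonneg hb h2.1)
      · simp only [hzdef]
        calc a * traj x₁ n + b * traj x₂ n ≤ a * xhat + b * xhat := by linarith
          _ = xhat := by rw [← add_mul, hab, one_mul]
    have hzsucc : ∀ n, z n - (a * B (traj x₁ n) + b * B (traj x₂ n)) = z (n+1) := by
      intro n; simp only [hzdef, htrajS]; ring
    set D : ℕ → ℝ := fun n => w (z n) - a * w (traj x₁ n) - b * w (traj x₂ n) with hDdef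
    have hstep : ∀ n, D n ≤ β * D (n+1) := by
      intro n
      have hb₁ := hB (traj x₁ n) (hy₁mem n)
      have hb₂ := hB (traj x₂ n) (hy₂mem n)
      have hbb : a * B (traj x₁ n) + b * B (traj x₂ n) ∈ Set.Icc 0 (z n) := by
        constructor
        · nlinarith [hb₁.1.1, hb₂.1.1]
        · simp only [hzdef]; nlinarith [hb₁.1.2, hb₂.1.2]
      have h1 : w (z n) ≤ ℓ (a * B (traj x₁ n) + b * B (traj x₂ n)) + β * w (z (n+1)) := by
        have := hBle (z n) (hzmem n) _ hbb
        rwa [hzsucc n] at this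
      have h2 : ℓ (a * B (traj x₁ n) + b * B (traj x₂ n)) ≤
          a * ℓ (B (traj x₁ n)) + b * ℓ (B (traj x₂ n)) := by
        have := hconv.convexOn.2 (hsub (hy₁mem n) hb₁.1) (hsub (hy₂mem n) hb₂.1)
          ha'.le hb'.le hab
        simpa using this
      have e₁ : w (traj x₁ n) = ℓ (B (traj x₁ n)) + β * w (traj x₁ (n+1)) := by
        rw [← htrajS]at hb₁; exact hb₁.2
      have e₂ : w (traj x₂ n) = ℓ (B (traj x₂ n)) + β * w (traj x₂ (n+1)) := by
        rw [← htrajS] at hb₂; exact hb₂.2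
      simp only [hDdef]
      rw [e₁, e₂]; nlinarith [h1, h2]
    have hchain : ∀ n, D 0 ≤ β ^ n * D n := by
      intro n
      induction n with
      | zero => simp
      | succ k ih =>
        calc D 0 ≤ β ^ k * D k := ih
          _ ≤ β ^ k * (β * D (k+1)) := mul_le_mul_of_nonneg_left (hstep k) (by positivity)
          _ = β ^ (k+1) * D (k+1) := by ring
    have hDle : ∀ n, D n ≤ ℓ (z n) - m * z n := by
      intro n
      have h1 := hw_ub (z n) (hzmem n)
      have h2 := hw_lb (traj x₁ n) (hy₁mem n)
      have h3 := hw_lb (traj x₂ n) (hy₂mem n)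
      simp only [hDdef, hzdef] at *
      nlinarith
    have hzbound : ∀ n, β ^ n * z n ≤ (a * w x₁ + b * w x₂) / m := by
      intro n
      have h1 := hkey2 x₁ hx₁ n
      have h2 := hkey2 x₂ hx₂ n
      rw [le_div_iff₀ hm0]
      simp only [hzdef]; nlinarith
    have hCnn : 0 ≤ (a * w x₁ + b * w x₂) / m := by
      have := hw_nonneg x₁ hx₁; have := hw_nonneg x₂ hx₂; positivity
    have hfinal : D 0 ≤ 0 := by
      by_contra hDpos
      push_neg at hDpos
      set K : ℝ := (a * w x₁ + b * w x₂) / m + 1 with hKdef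
      have hK : 0 < K := by positivity
      obtain ⟨δ, hδ, hδ2⟩ := heps (D 0 / K) (by positivity)
      obtain ⟨n, hn⟩ := pow_unbounded_of_one_lt ((a * w x₁ + b * w x₂) / m / δ) hβ
      have hβn : (0:ℝ) < β ^ n := by positivity
      have hzn_nonneg : 0 ≤ z n := (hzmem n).1
      have hzn : z n ≤ δ := by
        have h1 := hzbound n
        have h2 : (a * w x₁ + b * w x₂) / m < β ^ n * δ := (div_lt_iff₀ hδ).mp hn
        have h3 : β ^ n * z n < β ^ n * δ := lt_of_le_of_lt h1 h2
        exact le_of_lt ((mul_lt_mul_iff_right₀ hβn).mp h3)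
      have h4 := hδ2 (z n) hzn_nonneg hzn
      have h5 : D 0 ≤ β ^ n * (D 0 / K * z n) :=
        le_trans (hchain n) (mul_le_mul_of_nonneg_left (le_trans (hDle n) h4) hβn.le)
      have h6 : β ^ n * (D 0 / K * z n) = D 0 / K * (β ^ n * z n) := by ring
      have h7 : D 0 / K * (β ^ n * z n) ≤ D 0 / K * ((a * w x₁ + b * w x₂) / m) := by
        apply mul_le_mul_of_nonneg_left (hzbound n) (by positivity)
      have h8 : D 0 / K * ((a * w x₁ + b * w x₂) / m) < D 0 := by
        have hlt : (a * w x₁ + b * w x₂) / m < K := by rw [hKdef]; linarith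
        calc D 0 / K * ((a * w x₁ + b * w x₂) / m) < D 0 / K * K :=
              mul_lt_mul_of_pos_left hlt (by positivity)
          _ = D 0 := by field_simp
      linarith
    have hz0 : z 0 = a * x₁ + b * x₂ := by simp [hzdef, htraj0]
    have hD0 : D 0 = w (a * x₁ + b * x₂) - a * w x₁ - b * w x₂ := by
      simp only [hDdef, htraj0, hz0]
    linarith [hz0, hD0 ▸ hfinal]
  -- strict monotonicity
  have hsm : StrictMonoOn w (Set.Icc 0 xhat) := by
    intro x hx y hy hxy
    rcases eq_or_lt_of_le hx.1 with hx0 | hx0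
    · rw [← hx0, hw0]
      have hy0 : 0 < y := by rw [← hx0] at hxy; exact hxy
      exact lt_of_lt_of_le (mul_pos hm0 hy0) (hw_lb y hy)
    · have hy0 : 0 < y := hx0.trans hxy
      have hyne : y ≠ 0 := hy0.ne'
      have h1 : w x ≤ x / y * w y := by
        have hcomb := hcw.2 hy h0s
          (show (0:ℝ) ≤ x / y from div_nonneg hx.1 hy0.le)
          (show (0:ℝ) ≤ 1 - x / y by
            rw [sub_nonneg]; exact (div_le_one hy0).mpr hxy.le)
          (show x / y + (1 - x / y) = 1 by ring)
        simp only [smul_eq_mul, mul_zero, add_zero, hw0] at hcomb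
        rw [div_mul_cancel₀ _ hyne] at hcomb
        linarith [hcomb]
      have hwy : 0 < w y := lt_of_lt_of_le (mul_pos hm0 hy0) (hw_lb y hy)
      have hxy1 : x / y < 1 := (div_lt_one hy0).mpr hxy
      nlinarith
  -- strict convexity
  have hsc : StrictConvexOn ℝ (Set.Icc 0 xhat) w := by
    refine ⟨convex_Icc _ _, ?_⟩
    intro x₁ hx₁ x₂ hx₂ hne a b ha' hb' hab
    simp only [smul_eq_mul]
    by_contra hcon
    push_neg at hcon
    have hle := hcw.2 hx₁ hx₂ ha'.le hb'.le hab
    simp only [smul_eq_mul] at hle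
    have hEq : w (a * x₁ + b * x₂) = a * w x₁ + b * w x₂ := le_antisymm hle hcon
    set z : ℕ → ℝ := fun n => a * traj x₁ n + b * traj x₂ n with hzdef
    have hy₁mem := htraj_mem x₁ hx₁
    have hy₂mem := htraj_mem x₂ hx₂
    have hzmem : ∀ n, z n ∈ Set.Icc 0 xhat := by
      intro n
      have h1 := hy₁mem n
      have h2 := hy₂mem n
      have h3 : a * traj x₁ n ≤ a * xhat := mul_le_mul_of_nonneg_left h1.2 ha'.le
      have h4 : b * traj x₂ n ≤ b * xhat := mul_le_mul_of_nonneg_left h2.2 hb'.le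
      constructor
      · simp only [hzdef]
        exact add_nonneg (mul_nonneg ha'.le h1.1) (mul_nonneg hb'.le h2.1)
      · simp only [hzdef]
        calc a * traj x₁ n + b * traj x₂ n ≤ a * xhat + b * xhat := by linarith
          _ = xhat := by rw [← add_mul, hab, one_mul]
    have hzsucc : ∀ n, z n - (a * B (traj x₁ n) + b * B (traj x₂ n)) = z (n+1) := by
      intro n; simp only [hzdef, htrajS]; ring
    have hkeyn : ∀ n, w (z n) = a * w (traj x₁ n) + b * w (traj x₂ n) ∧
        traj x₂ n - traj x₁ n = x₂ - x₁ := by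
      intro n
      induction n with
      | zero => exact ⟨by simpa [hzdef, htraj0] using hEq, by simp [htraj0]⟩
      | succ k ih =>
        have hb₁ := hB (traj x₁ k) (hy₁mem k)
        have hb₂ := hB (traj x₂ k) (hy₂mem k)
        have hbb : a * B (traj x₁ k) + b * B (traj x₂ k) ∈ Set.Icc 0 (z k) := by
          constructor
          · exact add_nonneg (mul_nonneg ha'.le hb₁.1.1) (mul_nonneg hb'.le hb₂.1.1)
          · simp only [hzdef]
            have h5 := mul_le_mul_of_nonneg_left hb₁.1.2 ha'.le
            have h6 := mul_le_mul_of_nonneg_left hb₂.1.2 hb'.le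
            linarith
        have h1 : w (z k) ≤ ℓ (a * B (traj x₁ k) + b * B (traj x₂ k)) + β * w (z (k+1)) := by
          have := hBle (z k) (hzmem k) _ hbb
          rwa [hzsucc k] at this
        have h2 : ℓ (a * B (traj x₁ k) + b * B (traj x₂ k)) ≤
            a * ℓ (B (traj x₁ k)) + b * ℓ (B (traj x₂ k)) := by
          have := hconv.convexOn.2 (hsub (hy₁mem k) hb₁.1) (hsub (hy₂mem k) hb₂.1)
            ha'.le hb'.le hab
          simpa using this
        have e₁ : w (traj x₁ k) = ℓ (B (traj x₁ k)) + β * w (traj x₁ (k+1)) := by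
          rw [← htrajS] at hb₁; exact hb₁.2
        have e₂ : w (traj x₂ k) = ℓ (B (traj x₂ k)) + β * w (traj x₂ (k+1)) := by
          rw [← htrajS] at hb₂; exact hb₂.2
        have e₁' : a * w (traj x₁ k) =
            a * ℓ (B (traj x₁ k)) + a * β * w (traj x₁ (k+1)) := by rw [e₁]; ring
        have e₂' : b * w (traj x₂ k) =
            b * ℓ (B (traj x₂ k)) + b * β * w (traj x₂ (k+1)) := by rw [e₂]; ring
        have h3 : w (z (k+1)) ≤ a * w (traj x₁ (k+1)) + b * w (traj x₂ (k+1)) := by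
          have := hcw.2 (hy₁mem (k+1)) (hy₂mem (k+1)) ha'.le hb'.le hab
          simpa [hzdef] using this
        have h6 : β * (a * w (traj x₁ (k+1)) + b * w (traj x₂ (k+1))) ≤ β * w (z (k+1)) := by
          linarith [ih.1, e₁', e₂', h1, h2]
        have h7 : a * w (traj x₁ (k+1)) + b * w (traj x₂ (k+1)) ≤ w (z (k+1)) :=
          le_of_mul_le_mul_left h6 hβ0
        have h4 : w (z (k+1)) = a * w (traj x₁ (k+1)) + b * w (traj x₂ (k+1)) :=
          le_antisymm h3 h7
        have h8 : a * ℓ (B (traj x₁ k)) + b * ℓ (B (traj x₂ k)) ≤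
            ℓ (a * B (traj x₁ k) + b * B (traj x₂ k)) := by
          have h4' : β * w (z (k+1)) =
              β * (a * w (traj x₁ (k+1)) + b * w (traj x₂ (k+1))) := by rw [h4]
          linarith [ih.1, e₁', e₂', h1, h4']
        have h9 : ℓ (a * B (traj x₁ k) + b * B (traj x₂ k)) =
            a * ℓ (B (traj x₁ k)) + b * ℓ (B (traj x₂ k)) := le_antisymm h2 h8
        have hBB : B (traj x₁ k) = B (traj x₂ k) := by
          by_contra hne2
          have := hconv.2 (hsub (hy₁mem k) hb₁.1) (hsub (hy₂mem k) hb₂.1) hne2 ha' hb' hab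
          simp only [smul_eq_mul] at this
          linarith [h9 ▸ this]
        refine ⟨h4, ?_⟩
        rw [htrajS, htrajS, hBB]
        linarith [ih.2]
    have hne2 : x₂ - x₁ ≠ 0 := sub_ne_zero.2 (Ne.symm hne)
    have hxdiff : 0 < |x₂ - x₁| := abs_pos.2 hne2
    obtain ⟨n, hn⟩ := pow_unbounded_of_one_lt ((w x₁ + w x₂) / (m * |x₂ - x₁|)) hβ
    have h1 := hkey2 x₁ hx₁ n
    have h2 := hkey2 x₂ hx₂ n
    have hy1nn := (hy₁mem n).1
    have hy2nn := (hy₂mem n).1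
    have h3 : |x₂ - x₁| ≤ traj x₁ n + traj x₂ n := by
      rw [← (hkeyn n).2]
      exact abs_le.mpr ⟨by linarith, by linarith⟩
    have h5 : m * (β ^ n * |x₂ - x₁|) ≤ w x₁ + w x₂ := by
      have h6 : β ^ n * |x₂ - x₁| ≤ β ^ n * (traj x₁ n + traj x₂ n) :=
        mul_le_mul_of_nonneg_left h3 (by positivity)
      calc m * (β ^ n * |x₂ - x₁|) ≤ m * (β ^ n * (traj x₁ n + traj x₂ n)) :=
            mul_le_mul_of_nonneg_left h6 hm0.le
        _ = m * (β ^ n * traj x₁ n) + m * (β ^ n * traj x₂ n) := by ring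
        _ ≤ w x₁ + w x₂ := add_le_add h1 h2
    rw [div_lt_iff₀ (by positivity)] at hn
    nlinarith [h5, hn]
  -- differentiability on the interior
  have hwderiv : ∀ x ∈ Set.Ioo 0 xhat, HasDerivAt w (ℓd (B x)) x := by
    intro x hx
    have hxs : x ∈ Set.Icc 0 xhat := ⟨hx.1.le, hx.2.le⟩
    have hb := hB x hxs
    have hb0 : 0 < B x := by
      rcases eq_or_lt_of_le hb.1.1 with h | h
      · exfalso
        have hwxeq : w x = β * w x := by
          have h2 := hb.2
          rw [← h, sub_zero, hzero, zero_add] at h2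
          exact h2
        have hwx : 0 < w x := lt_of_lt_of_le (mul_pos hm0 hx.1) (hw_lb x hxs)
        nlinarith
      · exact h
    refine convex_hasDerivAt_of_touching xhat x (min (B x) (xhat - x)) (ℓd (B x)) w
      (fun y => ℓ (y - (x - B x)) + β * w (x - B x)) hcw
      (lt_min hb0 (sub_pos.2 hx.2))
      (le_trans (min_le_left _ _) hb.1.2)
      (min_le_right _ _)
      ?_ ?_ ?_
    · -- φ x = w x
      show ℓ (x - (x - B x)) + β * w (x - B x) = w x
      rw [sub_sub_cancel]
      exact hb.2.symm
    · -- HasDerivAt φ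
      have h1 : HasDerivAt (fun y : ℝ => y - (x - B x)) 1 x := (hasDerivAt_id x).sub_const _
      have h2 : HasDerivAt ℓ (ℓd (B x)) ((fun y : ℝ => y - (x - B x)) x) := by
        show HasDerivAt ℓ (ℓd (B x)) (x - (x - B x))
        rw [sub_sub_cancel]
        exact hderiv _ (hsub hxs hb.1)
      have h3 := HasDerivAt.comp x h2 h1
      simp only [mul_one] at h3
      have h4 := h3.add_const (β * w (x - B x))
      simpa [Function.comp_def] using h4
    · -- majorization
      intro y hy
      have hy1 : x - B x ≤ y := by
        have := min_le_left (B x) (xhat - x); linarith [hy.1]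
      have hy2 : y ≤ xhat := by
        have := min_le_right (B x) (xhat - x); linarith [hy.2]
      have hys : y ∈ Set.Icc 0 xhat := ⟨by linarith [hb.1.2, hb.1.1], hy2⟩
      have hay : y - (x - B x) ∈ Set.Icc 0 y :=
        ⟨by linarith, by linarith [hb.1.1, hb.1.2]⟩
      have h5 := hBle y hys (y - (x - B x)) hay
      rwa [show y - (y - (x - B x)) = x - B x by ring] at h5
  -- continuity of the derivative
  refine ⟨hsm, hsc, fun t => ℓd (B t), ?_, hwderiv⟩
  have hdmono : ∀ p ∈ Set.Ioo 0 xhat, ∀ q ∈ Set.Ioo 0 xhat, p < q →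
      ℓd (B p) ≤ slope w p q ∧ slope w p q ≤ ℓd (B q) := by
    intro p hp q hq hpq
    have hps : p ∈ Set.Icc 0 xhat := ⟨hp.1.le, hp.2.le⟩
    have hqs : q ∈ Set.Icc 0 xhat := ⟨hq.1.le, hq.2.le⟩
    exact ⟨hcw.le_slope_of_hasDerivAt hps hqs hpq (hwderiv p hp),
      hcw.slope_le_of_hasDerivAt hps hqs hpq (hwderiv q hq)⟩
  intro x hx
  have hwcont : ContinuousAt w x :=
    hwc.continuousAt (Icc_mem_nhds hx.1 hx.2)
  unfold ContinuousWithinAt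
  rw [Metric.tendsto_nhds]
  intro ε hε
  have hdx := hwderiv x hx
  have hslope := hasDerivAt_iff_tendsto_slope.mp hdx
  -- pick u > x with slope w x u < d x + ε/2
  have htu : Tendsto (slope w x) (𝓝[>] x) (𝓝 (ℓd (B x))) :=
    hslope.mono_left (nhdsWithin_mono x (fun y hy => by simpa using ne_of_gt hy))
  have htv : Tendsto (slope w x) (𝓝[<] x) (𝓝 (ℓd (B x))) :=
    hslope.mono_left (nhdsWithin_mono x (fun y hy => by simpa using ne_of_lt hy))
  have hev_u : ∀ᶠ u in 𝓝[>] x, slope w x u < ℓd (B x) + ε/2 :=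
    htu.eventually_lt_const (by linarith)
  have hev_u2 : ∀ᶠ u in 𝓝[>] x, u ∈ Set.Ioo x xhat :=
    Ioo_mem_nhdsGT_of_mem ⟨le_refl x, hx.2⟩
  obtain ⟨u, hu1, hu2⟩ := (hev_u.and hev_u2).exists
  have hev_v : ∀ᶠ v in 𝓝[<] x, ℓd (B x) - ε/2 < slope w x v :=
    htv.eventually_const_lt (by linarith)
  have hev_v2 : ∀ᶠ v in 𝓝[<] x, v ∈ Set.Ioo 0 x :=
    Ioo_mem_nhdsLT_of_mem ⟨hx.1, le_refl x⟩
  obtain ⟨v, hv1, hv2⟩ := (hev_v.and hev_v2).exists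
  -- continuous comparison functions
  have hg₁ : ContinuousAt (fun y => (w u - w y) / (u - y)) x := by
    apply ContinuousAt.div
    · exact continuous_const.continuousAt.sub hwcont
    · exact continuous_const.continuousAt.sub continuous_id.continuousAt
    · simp only [sub_ne_zero]; exact (hu2.1).ne'
  have hg₂ : ContinuousAt (fun y => (w y - w v) / (y - v)) x := by
    apply ContinuousAt.div
    · exact hwcont.sub continuous_const.continuousAt
    · exact continuous_id.continuousAt.sub continuous_const.continuousAt
    · simp only [sub_ne_zero]; exact (hv2.2).ne'
  have hg₁x : (w u - w x) / (u - x) < ℓd (B x) + ε/2 := by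
    have := hu1; rw [slope_def_field] at this; exact this
  have hg₂x : ℓd (B x) - ε/2 < (w x - w v) / (x - v) := by
    have h := hv1; rw [slope_def_field] at h
    have he : (w x - w v) / (x - v) = (w v - w x) / (v - x) := by
      rw [← neg_div_neg_eq]; ring_nf
    rw [he]; exact h
  have hevg₁ : ∀ᶠ y in 𝓝 x, (w u - w y) / (u - y) < ℓd (B x) + ε/2 :=
    hg₁.eventually_lt_const hg₁x
  have hevg₂ : ∀ᶠ y in 𝓝 x, ℓd (B x) - ε/2 < (w y - w v) / (y - v) :=
    hg₂.eventually_const_lt hg₂x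
  have hevI : ∀ᶠ y in 𝓝 x, y ∈ Set.Ioo v u := Ioo_mem_nhds hv2.2 hu2.1
  have hvI : v ∈ Set.Ioo 0 xhat := ⟨hv2.1, hv2.2.trans hx.2⟩
  have huI : u ∈ Set.Ioo 0 xhat := ⟨hx.1.trans hu2.1, hu2.2⟩
  filter_upwards [mem_nhdsWithin_of_mem_nhds hevg₁, mem_nhdsWithin_of_mem_nhds hevg₂,
    mem_nhdsWithin_of_mem_nhds hevI, self_mem_nhdsWithin] with y h1 h2 h3 h4
  have hyI : y ∈ Set.Ioo 0 xhat := h4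
  have hup : ℓd (B y) < ℓd (B x) + ε/2 := by
    have := (hdmono y hyI u huI h3.2).1
    rw [slope_def_field] at this
    exact lt_of_le_of_lt this h1
  have hdown : ℓd (B x) - ε/2 < ℓd (B y) := by
    have := (hdmono v hvI y hyI h3.1).2
    rw [slope_def_field] at this
    exact lt_of_lt_of_le h2 this
  rw [Real.dist_eq, abs_lt]
  constructor <;> linarith
end

section
/- For each x ∈ X the minimization problem min_{0 ≤ a ≤ x} { ℓ(a) + β·w*(x − a) } has a unique minimizer π*(x), and the envelope condition (w*)'(x) = ℓ'(π*(x)) holds for every x ∈ (0, x̂). -/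
open Set Filter

open Topology

structure BSetup (xhat : ℝ) (ℓ ℓd : ℝ → ℝ) (β : ℝ) (wstar : ℝ → ℝ) : Prop where
  hxhat : 0 < xhat
  hderiv : ∀ x ∈ Set.Icc 0 xhat, HasDerivAt ℓ (ℓd x) x
  hcont_deriv : ContinuousOn ℓd (Set.Icc 0 xhat)
  hconv : StrictConvexOn ℝ (Set.Icc 0 xhat) ℓ
  hzero : ℓ 0 = 0
  hpos : ∀ x ∈ Set.Icc 0 xhat, 0 < ℓd x
  hβ : 1 < β
  hmem : wstar ∈ candidateClass xhat ℓ ℓd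
  hfix : ∀ x ∈ Set.Icc 0 xhat, bellman β ℓ wstar x = wstar x

namespace BSetup

variable {xhat β : ℝ} {ℓ ℓd wstar : ℝ → ℝ} (S : BSetup xhat ℓ ℓd β wstar)
include S

lemma mem0 : (0:ℝ) ∈ Icc (0:ℝ) xhat := ⟨le_rfl, S.hxhat.le⟩

lemma ld0pos : 0 < ℓd 0 := S.hpos 0 S.mem0

lemma βpos : (0:ℝ) < β := lt_trans one_pos S.hβ

lemma lcont : ContinuousOn ℓ (Icc 0 xhat) :=
  fun y hy => (S.hderiv y hy).continuousAt.continuousWithinAt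

lemma tangent0 : ∀ y ∈ Icc (0:ℝ) xhat, ℓd 0 * y ≤ ℓ y := by
  intro y hy
  rcases eq_or_lt_of_le hy.1 with h | h
  · simp [← h, S.hzero]
  · have := S.hconv.convexOn.le_slope_of_hasDerivAt S.mem0 hy h (S.hderiv 0 S.mem0)
    rw [slope_def_field, S.hzero, sub_zero, sub_zero, le_div_iff₀ h] at this
    linarith
  
lemma l_nonneg : ∀ y ∈ Icc (0:ℝ) xhat, 0 ≤ ℓ y := by
  intro y hy
  have := S.tangent0 y hy
  nlinarith [S.ld0pos, hy.1]

lemma l_le : ∀ y ∈ Icc (0:ℝ) xhat, ℓ y ≤ ℓd y * y := by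
  intro y hy
  rcases eq_or_lt_of_le hy.1 with h | h
  · simp [← h, S.hzero]
  · have := S.hconv.convexOn.slope_le_of_hasDerivAt S.mem0 hy h (S.hderiv y hy)
    rw [slope_def_field, S.hzero, sub_zero, sub_zero, div_le_iff₀ h] at this
    linarith

lemma w_lb : ∀ y ∈ Icc (0:ℝ) xhat, ℓd 0 * y ≤ wstar y := fun y hy => (S.hmem.2 y hy).1

lemma w_ub : ∀ y ∈ Icc (0:ℝ) xhat, wstar y ≤ ℓ y := fun y hy => (S.hmem.2 y hy).2

lemma w_nonneg : ∀ y ∈ Icc (0:ℝ) xhat, 0 ≤ wstar y := by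
  intro y hy
  have := S.w_lb y hy
  nlinarith [S.ld0pos, hy.1]

lemma sub_mem {x a : ℝ} (hx : x ∈ Icc (0:ℝ) xhat) (ha : a ∈ Icc (0:ℝ) x) :
    x - a ∈ Icc (0:ℝ) xhat :=
  ⟨by linarith [ha.2], by linarith [ha.1, hx.2]⟩

lemma mem_trans {x a : ℝ} (hx : x ∈ Icc (0:ℝ) xhat) (ha : a ∈ Icc (0:ℝ) x) :
    a ∈ Icc (0:ℝ) xhat := ⟨ha.1, le_trans ha.2 hx.2⟩

/-- the value is at most any feasible one-step cost -/
lemma le_val : ∀ x ∈ Icc (0:ℝ) xhat, ∀ a ∈ Icc (0:ℝ) x,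
    wstar x ≤ ℓ a + β * wstar (x - a) := by
  intro x hx a ha
  rw [← S.hfix x hx, bellman]
  apply csInf_le
  · refine ⟨0, ?_⟩
    rintro z ⟨b, hb, rfl⟩
    have h1 := S.l_nonneg b (S.mem_trans hx hb)
    have h2 := S.w_nonneg _ (S.sub_mem hx hb)
    dsimp only
    exact add_nonneg h1 (mul_nonneg S.βpos.le h2)
  · exact mem_image_of_mem _ ha

lemma exists_min : ∀ x ∈ Icc (0:ℝ) xhat, ∃ a ∈ Icc (0:ℝ) x,
    (∀ b ∈ Icc (0:ℝ) x, ℓ a + β * wstar (x - a) ≤ ℓ b + β * wstar (x - b)) ∧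
    wstar x = ℓ a + β * wstar (x - a) := by
  intro x hx
  have hsub : Icc (0:ℝ) x ⊆ Icc 0 xhat := Icc_subset_Icc le_rfl hx.2
  have hf : ContinuousOn (fun a => ℓ a + β * wstar (x - a)) (Icc 0 x) := by
    apply ContinuousOn.add (S.lcont.mono hsub)
    apply continuousOn_const.mul
    exact S.hmem.1.comp (continuousOn_const.sub continuousOn_id) (fun a ha => S.sub_mem hx ha)
  obtain ⟨a, ha, hmin⟩ := isCompact_Icc.exists_isMinOn ⟨0, ⟨le_rfl, hx.1⟩⟩ hf
  have hmin' : ∀ b ∈ Icc (0:ℝ) x, ℓ a + β * wstar (x - a) ≤ ℓ b + β * wstar (x - b) :=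
    fun b hb => hmin hb
  refine ⟨a, ha, hmin', ?_⟩
  rw [← S.hfix x hx, bellman]
  apply IsLeast.csInf_eq
  exact ⟨mem_image_of_mem _ ha, by rintro z ⟨b, hb, rfl⟩; exact hmin' b hb⟩

lemma lin_bound : ∃ L : ℝ, 0 < L ∧ ∀ y ∈ Icc (0:ℝ) xhat, wstar y ≤ L * y := by
  obtain ⟨c, hc, hmax⟩ := isCompact_Icc.exists_isMaxOn ⟨0, S.mem0⟩ S.hcont_deriv
  refine ⟨ℓd c, S.hpos c hc, fun y hy => ?_⟩
  have h1 := S.w_ub y hy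
  have h2 := S.l_le y hy
  have h3 : ℓd y ≤ ℓd c := hmax hy
  nlinarith [hy.1]

end BSetup
section Traj
variable {xhat β : ℝ} {ℓ ℓd wstar : ℝ → ℝ} (S : BSetup xhat ℓ ℓd β wstar)
include S

lemma BSetup.traj : ∀ x ∈ Icc (0:ℝ) xhat, ∃ r : ℕ → ℝ, r 0 = x ∧
    (∀ n, r n ∈ Icc (0:ℝ) x) ∧ (∀ n, r (n+1) ∈ Icc (0:ℝ) (r n)) ∧
    Tendsto (fun n => β ^ n * r n) atTop (𝓝 0) ∧
    Tendsto (fun n => ∑ i ∈ Finset.range n, β ^ i * ℓ (r i - r (i + 1))) atTop (𝓝 (wstar x)) := by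
  classical
  intro x hx
  choose! π hπ1 hπ2 hπ3 using S.exists_min
  set r : ℕ → ℝ := fun n => (fun y => y - π y)^[n] x with hrdef
  have hr0 : r 0 = x := rfl
  have hrs : ∀ n, r (n + 1) = r n - π (r n) := by
    intro n
    simp only [hrdef, Function.iterate_succ_apply']
  have hβpos := S.βpos
  have hld0 := S.ld0pos
  -- membership
  have hmem : ∀ n, r n ∈ Icc (0:ℝ) x := by
    intro n
    induction n with
    | zero => exact ⟨hx.1, le_rfl⟩
    | succ n ih =>
      have hx' : r n ∈ Icc (0:ℝ) xhat := ⟨ih.1, le_trans ih.2 hx.2⟩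
      have h := hπ1 (r n) hx'
      rw [hrs n]
      exact ⟨by linarith [h.2], by linarith [h.1, ih.2]⟩
  have hmem' : ∀ n, r n ∈ Icc (0:ℝ) xhat := fun n => ⟨(hmem n).1, le_trans (hmem n).2 hx.2⟩
  have hstepmem : ∀ n, r (n+1) ∈ Icc (0:ℝ) (r n) := by
    intro n
    have h := hπ1 (r n) (hmem' n)
    rw [hrs n]
    exact ⟨by linarith [h.2], by linarith [h.1]⟩
  have hamem : ∀ n, r n - r (n+1) ∈ Icc (0:ℝ) xhat := by
    intro n
    have h := hstepmem n
    exact ⟨by linarith [h.2], by linarith [h.1, (hmem' n).2]⟩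
  -- value recursion
  have hval : ∀ n, wstar (r n) = ℓ (r n - r (n+1)) + β * wstar (r (n+1)) := by
    intro n
    have h := hπ3 (r n) (hmem' n)
    have h2 : r n - r (n+1) = π (r n) := by rw [hrs n]; ring
    rw [h2, hrs n]
    exact h
  set Sn : ℕ → ℝ := fun n => ∑ i ∈ Finset.range n, β ^ i * ℓ (r i - r (i + 1)) with hSn
  have hsum : ∀ n, wstar x = Sn n + β ^ n * wstar (r n) := by
    intro n
    induction n with
    | zero => simp [hSn, hr0]
    | succ n ih =>
      rw [ih, hval n]
      simp only [hSn, Finset.sum_range_succ]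
      ring
  have hSnonneg : ∀ n, 0 ≤ Sn n := by
    intro n
    apply Finset.sum_nonneg
    intro i _
    exact mul_nonneg (pow_nonneg hβpos.le i) (S.l_nonneg _ (hamem i))
  have hβn : ∀ n, β ^ n * wstar (r n) ≤ wstar x := by
    intro n
    have := hsum n
    linarith [hSnonneg n]
  have hkey : ∀ n, ℓd 0 * (β ^ n * r n) ≤ wstar x := by
    intro n
    have h1 : ℓd 0 * r n ≤ wstar (r n) := S.w_lb _ (hmem' n)
    have h2 : β ^ n * (ℓd 0 * r n) ≤ β ^ n * wstar (r n) :=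
      mul_le_mul_of_nonneg_left h1 (pow_nonneg hβpos.le n)
    calc ℓd 0 * (β ^ n * r n) = β ^ n * (ℓd 0 * r n) := by ring
    _ ≤ β ^ n * wstar (r n) := h2
    _ ≤ wstar x := hβn n
  -- r n → 0
  have hrb : ∀ n, r n ≤ wstar x / ℓd 0 * (β⁻¹) ^ n := by
    intro n
    have hbn : (0:ℝ) < β ^ n := pow_pos hβpos n
    have h1 : β ^ n * r n ≤ wstar x / ℓd 0 := by
      rw [le_div_iff₀ hld0]
      linarith [hkey n]
    calc r n = β ^ n * r n * (β ^ n)⁻¹ := by field_simp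
    _ ≤ wstar x / ℓd 0 * (β ^ n)⁻¹ := mul_le_mul_of_nonneg_right h1 (inv_nonneg.2 hbn.le)
    _ = wstar x / ℓd 0 * (β⁻¹) ^ n := by rw [inv_pow]
  have hr_to0 : Tendsto r atTop (𝓝 0) := by
    have hg : Tendsto (fun n => wstar x / ℓd 0 * (β⁻¹) ^ n) atTop (𝓝 (wstar x / ℓd 0 * 0)) := by
      apply Tendsto.const_mul
      apply tendsto_pow_atTop_nhds_zero_of_lt_one (inv_nonneg.2 hβpos.le)
      rw [inv_lt_one_iff₀]
      right; exact S.hβ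
    rw [mul_zero] at hg
    apply tendsto_of_tendsto_of_tendsto_of_le_of_le tendsto_const_nhds hg
      (fun n => (hmem n).1) hrb
  -- epsilon / eta
  set ε : ℝ := (β - 1) * ℓd 0 / (2 * β) with hεdef
  have hε : 0 < ε := div_pos (mul_pos (by linarith [S.hβ]) hld0) (by linarith)
  obtain ⟨η, hη, hηprop⟩ := Metric.continuousWithinAt_iff.mp (S.hcont_deriv 0 S.mem0) ε hε
  have hsmall : ∀ y ∈ Icc (0:ℝ) xhat, y < η → wstar y ≤ (ℓd 0 + ε) * y := by
    intro y hy hyη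
    have h1 : dist y 0 < η := by
      rw [Real.dist_eq, sub_zero, abs_of_nonneg hy.1]; exact hyη
    have h2 : ℓd y ≤ ℓd 0 + ε := by
      have := hηprop hy h1
      rw [Real.dist_eq] at this
      have := abs_lt.mp this
      linarith [this.1, this.2]
    have h3 := S.w_ub y hy
    have h4 := S.l_le y hy
    nlinarith [hy.1]
  have hstep : ∀ n, r n < η → r (n+1) ≤ r n / (2 * β) := by
    intro n hrη
    have h1 := hval n
    have h2 : ℓd 0 * (r n - r (n+1)) ≤ ℓ (r n - r (n+1)) := S.tangent0 _ (hamem n)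
    have h3 : ℓd 0 * r (n+1) ≤ wstar (r (n+1)) := S.w_lb _ (S.mem_trans (hmem' n) (hstepmem n))
    have h4 : wstar (r n) ≤ (ℓd 0 + ε) * r n := hsmall _ (hmem' n) hrη
    have h5 : (β - 1) * ℓd 0 * r (n+1) ≤ ε * r n := by nlinarith
    have h6 : ε * r n = (β - 1) * ℓd 0 * (r n / (2 * β)) := by
      rw [hεdef]; field_simp; try ring
    rw [h6] at h5
    exact le_of_mul_le_mul_left h5 (mul_pos (by linarith [S.hβ]) hld0)
  -- theta → 0
  obtain ⟨N, hN⟩ : ∃ N, ∀ n ≥ N, r n < η := eventually_atTop.mp (hr_to0.eventually (gt_mem_nhds hη))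
  have hgeo : ∀ k, β ^ (N + k) * r (N + k) ≤ β ^ N * r N * (1/2 : ℝ) ^ k := by
    intro k
    induction k with
    | zero => simp
    | succ k ih =>
      have h1 : r (N + k + 1) ≤ r (N + k) / (2 * β) := hstep _ (hN _ (Nat.le_add_right N k))
      have hbp : (0:ℝ) < β ^ (N + k + 1) := pow_pos hβpos _
      calc β ^ (N + k + 1) * r (N + k + 1) ≤ β ^ (N + k + 1) * (r (N + k) / (2 * β)) :=
            mul_le_mul_of_nonneg_left h1 hbp.le
      _ = (β ^ (N + k) * r (N + k)) / 2 := by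
            rw [pow_succ]; field_simp; try ring
      _ ≤ (β ^ N * r N * (1/2 : ℝ) ^ k) / 2 := by linarith
      _ = β ^ N * r N * (1/2 : ℝ) ^ (k + 1) := by rw [pow_succ]; ring
  have hθ : Tendsto (fun n => β ^ n * r n) atTop (𝓝 0) := by
    set D : ℝ := β ^ N * r N * 2 ^ N with hD
    have hub : ∀ n ≥ N, β ^ n * r n ≤ D * (1/2 : ℝ) ^ n := by
      intro n hn
      obtain ⟨k, rfl⟩ := Nat.exists_eq_add_of_le hn
      have h1 := hgeo k
      have h2 : (1/2 : ℝ) ^ k = 2 ^ N * (1/2 : ℝ) ^ (N + k) := by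
        rw [pow_add]
        have : (2:ℝ) ^ N * (1/2 : ℝ) ^ N = 1 := by
          rw [div_pow, one_pow]
          field_simp
        calc (1/2 : ℝ) ^ k = ((2:ℝ) ^ N * (1/2 : ℝ) ^ N) * (1/2) ^ k := by rw [this, one_mul]
        _ = 2 ^ N * ((1/2 : ℝ) ^ N * (1/2) ^ k) := by ring
      rw [hD]
      calc β ^ (N + k) * r (N + k) ≤ β ^ N * r N * (1/2 : ℝ) ^ k := h1
      _ = β ^ N * r N * 2 ^ N * (1/2 : ℝ) ^ (N + k) := by rw [h2]; ring
    have hg : Tendsto (fun n : ℕ => D * (1/2 : ℝ) ^ n) atTop (𝓝 (D * 0)) := by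
      apply Tendsto.const_mul
      apply tendsto_pow_atTop_nhds_zero_of_lt_one <;> norm_num
    rw [mul_zero] at hg
    apply tendsto_of_tendsto_of_tendsto_of_le_of_le' tendsto_const_nhds hg
    · filter_upwards with n
      exact mul_nonneg (pow_nonneg hβpos.le n) (hmem n).1
    · filter_upwards [eventually_atTop.mpr ⟨N, hub⟩] with n h using h
  -- Sn → wstar x
  refine ⟨r, hr0, hmem, hstepmem, hθ, ?_⟩
  have hdiff : Tendsto (fun n => wstar x - Sn n) atTop (𝓝 0) := by
    have hg : Tendsto (fun n => (ℓd 0 + ε) * (β ^ n * r n)) atTop (𝓝 ((ℓd 0 + ε) * 0)) :=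
      hθ.const_mul _
    rw [mul_zero] at hg
    apply tendsto_of_tendsto_of_tendsto_of_le_of_le' tendsto_const_nhds hg
    · filter_upwards with n
      rw [hsum n]
      have := mul_nonneg (pow_nonneg hβpos.le n) (S.w_nonneg _ (hmem' n))
      linarith
    · filter_upwards [eventually_atTop.mpr ⟨N, fun n hn => hN n hn⟩] with n hn
      rw [hsum n]
      have h1 : wstar (r n) ≤ (ℓd 0 + ε) * r n := hsmall _ (hmem' n) hn
      have h2 : β ^ n * wstar (r n) ≤ β ^ n * ((ℓd 0 + ε) * r n) :=
        mul_le_mul_of_nonneg_left h1 (pow_nonneg hβpos.le n)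
      calc Sn n + β ^ n * wstar (r n) - Sn n = β ^ n * wstar (r n) := by ring
      _ ≤ β ^ n * ((ℓd 0 + ε) * r n) := h2
      _ = (ℓd 0 + ε) * (β ^ n * r n) := by ring
  have h2 := (tendsto_const_nhds (x := wstar x) (f := atTop)).sub hdiff
  rw [sub_zero] at h2
  have h3 : (fun n => wstar x - (wstar x - Sn n)) = fun n => Sn n := by
    funext n; ring
  rw [h3] at h2
  exact h2

end Traj
section Cvx
variable {xhat β : ℝ} {ℓ ℓd wstar : ℝ → ℝ} (S : BSetup xhat ℓ ℓd β wstar)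
include S

lemma BSetup.wconvex : ConvexOn ℝ (Icc (0:ℝ) xhat) wstar := by
  refine ⟨convex_Icc 0 xhat, ?_⟩
  intro x1 hx1 x2 hx2 t s ht hs hts
  simp only [smul_eq_mul]
  obtain ⟨r1, hr10, hr1m, hr1s, hθ1, hS1⟩ := S.traj x1 hx1
  obtain ⟨r2, hr20, hr2m, hr2s, hθ2, hS2⟩ := S.traj x2 hx2
  obtain ⟨L, hL, hLw⟩ := S.lin_bound
  have hβpos := S.βpos
  set X : ℝ := t * x1 + s * x2 with hX
  have hXmem : X ∈ Icc (0:ℝ) xhat := by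
    constructor
    · have := mul_nonneg ht hx1.1; have := mul_nonneg hs hx2.1; rw [hX]; linarith
    · rw [hX]
      calc t * x1 + s * x2 ≤ t * xhat + s * xhat := by
            have := mul_le_mul_of_nonneg_left hx1.2 ht
            have := mul_le_mul_of_nonneg_left hx2.2 hs
            linarith
      _ = xhat := by rw [← add_mul, hts, one_mul]
  set ρ : ℕ → ℝ := fun n => t * r1 n + s * r2 n with hρ
  have hρmem : ∀ n, ρ n ∈ Icc (0:ℝ) xhat := by
    intro n
    constructor
    · have := mul_nonneg ht (hr1m n).1; have := mul_nonneg hs (hr2m n).1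
      simp only [hρ]; linarith
    · have h1 := mul_le_mul_of_nonneg_left (le_trans (hr1m n).2 hx1.2) ht
      have h2 := mul_le_mul_of_nonneg_left (le_trans (hr2m n).2 hx2.2) hs
      simp only [hρ]
      calc t * r1 n + s * r2 n ≤ t * xhat + s * xhat := by linarith
      _ = xhat := by rw [← add_mul, hts, one_mul]
  have hρstep : ∀ n, ρ (n+1) ∈ Icc (0:ℝ) (ρ n) := by
    intro n
    constructor
    · have := mul_nonneg ht (hr1s n).1; have := mul_nonneg hs (hr2s n).1
      simp only [hρ]; linarith
    · have h1 := mul_le_mul_of_nonneg_left (hr1s n).2 ht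
      have h2 := mul_le_mul_of_nonneg_left (hr2s n).2 hs
      simp only [hρ]; linarith
  have hρ0 : ρ 0 = X := by simp only [hρ, hr10, hr20, hX]
  -- upper bound by feasible plan
  have key : ∀ n, wstar X ≤ (∑ i ∈ Finset.range n, β ^ i * ℓ (ρ i - ρ (i+1)))
      + β ^ n * wstar (ρ n) := by
    intro n
    induction n with
    | zero => simp [hρ0]
    | succ n ih =>
      have hbmem : ρ n - ρ (n+1) ∈ Icc (0:ℝ) (ρ n) :=
        ⟨by linarith [(hρstep n).2], by linarith [(hρstep n).1]⟩
      have h1 : wstar (ρ n) ≤ ℓ (ρ n - ρ (n+1)) + β * wstar (ρ (n+1)) := by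
        have := S.le_val (ρ n) (hρmem n) (ρ n - ρ (n+1)) hbmem
        simpa using this
      have h2 : β ^ n * wstar (ρ n) ≤ β ^ n * (ℓ (ρ n - ρ (n+1)) + β * wstar (ρ (n+1))) :=
        mul_le_mul_of_nonneg_left h1 (pow_nonneg hβpos.le n)
      rw [Finset.sum_range_succ]
      calc wstar X ≤ (∑ i ∈ Finset.range n, β ^ i * ℓ (ρ i - ρ (i+1))) + β ^ n * wstar (ρ n) := ih
      _ ≤ (∑ i ∈ Finset.range n, β ^ i * ℓ (ρ i - ρ (i+1)))
            + (β ^ n * ℓ (ρ n - ρ (n+1)) + β ^ (n+1) * wstar (ρ (n+1))) := by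
          rw [pow_succ]; nlinarith [h2]
      _ = _ := by ring
  -- convexity of each term
  have hamem1 : ∀ i, r1 i - r1 (i+1) ∈ Icc (0:ℝ) xhat := by
    intro i
    have h := hr1s i
    exact ⟨by linarith [h.2], by linarith [h.1, (hr1m i).2, hx1.2]⟩
  have hamem2 : ∀ i, r2 i - r2 (i+1) ∈ Icc (0:ℝ) xhat := by
    intro i
    have h := hr2s i
    exact ⟨by linarith [h.2], by linarith [h.1, (hr2m i).2, hx2.2]⟩
  have hterm : ∀ i, ℓ (ρ i - ρ (i+1)) ≤ t * ℓ (r1 i - r1 (i+1)) + s * ℓ (r2 i - r2 (i+1)) := by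
    intro i
    have heq : ρ i - ρ (i+1) = t • (r1 i - r1 (i+1)) + s • (r2 i - r2 (i+1)) := by
      simp only [hρ, smul_eq_mul]; ring
    rw [heq]
    have := S.hconv.convexOn.2 (hamem1 i) (hamem2 i) ht hs hts
    simpa using this
  have hsum_le : ∀ n, (∑ i ∈ Finset.range n, β ^ i * ℓ (ρ i - ρ (i+1)))
      ≤ t * (∑ i ∈ Finset.range n, β ^ i * ℓ (r1 i - r1 (i+1)))
        + s * (∑ i ∈ Finset.range n, β ^ i * ℓ (r2 i - r2 (i+1))) := by
    intro n
    rw [Finset.mul_sum, Finset.mul_sum, ← Finset.sum_add_distrib]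
    apply Finset.sum_le_sum
    intro i _
    have h := mul_le_mul_of_nonneg_left (hterm i) (pow_nonneg hβpos.le i)
    calc β ^ i * ℓ (ρ i - ρ (i+1))
        ≤ β ^ i * (t * ℓ (r1 i - r1 (i+1)) + s * ℓ (r2 i - r2 (i+1))) := h
    _ = t * (β ^ i * ℓ (r1 i - r1 (i+1))) + s * (β ^ i * ℓ (r2 i - r2 (i+1))) := by ring
  -- tail bound
  have htail : ∀ n, β ^ n * wstar (ρ n) ≤ L * (t * (β ^ n * r1 n) + s * (β ^ n * r2 n)) := by
    intro n
    have h1 : wstar (ρ n) ≤ L * ρ n := hLw _ (hρmem n)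
    calc β ^ n * wstar (ρ n) ≤ β ^ n * (L * ρ n) :=
          mul_le_mul_of_nonneg_left h1 (pow_nonneg hβpos.le n)
    _ = L * (t * (β ^ n * r1 n) + s * (β ^ n * r2 n)) := by simp only [hρ]; ring
  -- limit
  have hRHS : Tendsto (fun n => t * (∑ i ∈ Finset.range n, β ^ i * ℓ (r1 i - r1 (i+1)))
      + s * (∑ i ∈ Finset.range n, β ^ i * ℓ (r2 i - r2 (i+1)))
      + L * (t * (β ^ n * r1 n) + s * (β ^ n * r2 n))) atTop
      (𝓝 (t * wstar x1 + s * wstar x2 + L * (t * 0 + s * 0))) := by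
    exact ((hS1.const_mul t).add (hS2.const_mul s)).add
      (((hθ1.const_mul t).add (hθ2.const_mul s)).const_mul L)
  have hfin : wstar X ≤ t * wstar x1 + s * wstar x2 + L * (t * 0 + s * 0) := by
    apply ge_of_tendsto hRHS
    filter_upwards with n
    calc wstar X ≤ (∑ i ∈ Finset.range n, β ^ i * ℓ (ρ i - ρ (i+1))) + β ^ n * wstar (ρ n) :=
          key n
    _ ≤ _ := by
        have := hsum_le n
        have := htail n
        linarith
  simpa using hfin

end Cvx
/-- for each `x ∈ X` the problem `min_{0 ≤ a ≤ x} { ℓ(a) + β·w*(x − a) }`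
has a unique minimizer `π*(x)`, and the envelope condition `(w*)'(x) = ℓ'(π*(x))` holds
on `(0, x̂)`. -/
theorem bellman_policy_unique_and_envelope
    (xhat : ℝ) (hxhat : 0 < xhat)
    (ℓ ℓd : ℝ → ℝ)
    (hderiv : ∀ x ∈ Set.Icc 0 xhat, HasDerivAt ℓ (ℓd x) x)
    (hcont_deriv : ContinuousOn ℓd (Set.Icc 0 xhat))
    (hconv : StrictConvexOn ℝ (Set.Icc 0 xhat) ℓ)
    (hzero : ℓ 0 = 0)
    (hpos : ∀ x ∈ Set.Icc 0 xhat, 0 < ℓd x)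
    (β : ℝ) (hβ : 1 < β)
    (wstar : ℝ → ℝ)
    (hwstar_mem : wstar ∈ candidateClass xhat ℓ ℓd)
    (hwstar_fix : ∀ x ∈ Set.Icc 0 xhat, bellman β ℓ wstar x = wstar x) :
    ∃ πstar : ℝ → ℝ,
      (∀ x ∈ Set.Icc 0 xhat,
        πstar x ∈ Set.Icc 0 x ∧
        (∀ a ∈ Set.Icc 0 x,
          ℓ (πstar x) + β * wstar (x - πstar x) ≤ ℓ a + β * wstar (x - a)) ∧
        (∀ a ∈ Set.Icc 0 x,
          (∀ b ∈ Set.Icc 0 x, ℓ a + β * wstar (x - a) ≤ ℓ b + β * wstar (x - b)) →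
          a = πstar x)) ∧
      (∀ x ∈ Set.Ioo 0 xhat, HasDerivAt wstar (ℓd (πstar x)) x) := by
  classical
  have S : BSetup xhat ℓ ℓd β wstar :=
    ⟨hxhat, hderiv, hcont_deriv, hconv, hzero, hpos, hβ, hwstar_mem, hwstar_fix⟩
  choose! π hπ1 hπ2 hπ3 using S.exists_min
  have hconvw := S.wconvex
  refine ⟨π, ?_, ?_⟩
  · -- existence and uniqueness of the minimizer
    intro x hx
    refine ⟨hπ1 x hx, hπ2 x hx, ?_⟩
    intro a ha hmina
    by_contra hne
    have hsub : Icc (0:ℝ) x ⊆ Icc 0 xhat := Icc_subset_Icc le_rfl hx.2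
    have hsc : StrictConvexOn ℝ (Icc (0:ℝ) x) ℓ := S.hconv.subset hsub (convex_Icc _ _)
    have hcw : ConvexOn ℝ (Icc (0:ℝ) x) (fun a => β * wstar (x - a)) := by
      refine ⟨convex_Icc _ _, ?_⟩
      intro u hu v hv p q hp hq hpq
      have h1 : x - (p • u + q • v) = p • (x - u) + q • (x - v) := by
        simp only [smul_eq_mul]
        linear_combination x * hpq.symm
      calc β * wstar (x - (p • u + q • v)) = β * wstar (p • (x - u) + q • (x - v)) := by rw [h1]
      _ ≤ β * (p * wstar (x - u) + q * wstar (x - v)) := by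
          apply mul_le_mul_of_nonneg_left _ S.βpos.le
          have := hconvw.2 (S.sub_mem hx hu) (S.sub_mem hx hv) hp hq hpq
          simpa using this
      _ = p • (β * wstar (x - u)) + q • (β * wstar (x - v)) := by
          simp only [smul_eq_mul]; ring
    have hfsc : StrictConvexOn ℝ (Icc (0:ℝ) x) (ℓ + fun a => β * wstar (x - a)) :=
      hsc.add_convexOn hcw
    have hπx := hπ1 x hx
    have hmmem : 1/2 * a + 1/2 * π x ∈ Icc (0:ℝ) x := by
      have := (convex_Icc (0:ℝ) x) ha hπx
        (by norm_num : (0:ℝ) ≤ 1/2) (by norm_num : (0:ℝ) ≤ 1/2) (by norm_num)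
      simpa using this
    have h2 := hfsc.2 ha hπx hne (by norm_num : (0:ℝ) < 1/2) (by norm_num : (0:ℝ) < 1/2)
      (by norm_num)
    simp only [Pi.add_apply, smul_eq_mul] at h2
    have heq : ℓ (π x) + β * wstar (x - π x) = ℓ a + β * wstar (x - a) :=
      le_antisymm (hπ2 x hx a ha) (hmina (π x) hπx)
    have h3 := hmina (1/2 * a + 1/2 * π x) hmmem
    linarith
  · -- envelope condition
    intro x hxoo
    have hx : x ∈ Icc (0:ℝ) xhat := ⟨hxoo.1.le, hxoo.2.le⟩
    set p := π x with hp
    have hpmem : p ∈ Icc (0:ℝ) x := hπ1 x hx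
    have hpmem' : p ∈ Icc (0:ℝ) xhat := S.mem_trans hx hpmem
    have hval : wstar x = ℓ p + β * wstar (x - p) := hπ3 x hx
    have hwxpos : 0 < wstar x := by
      have hw := S.w_lb x hx
      nlinarith [S.ld0pos, hxoo.1]
    have hppos : 0 < p := by
      rcases lt_or_eq_of_le hpmem.1 with h | h
      · exact h
      · exfalso
        have hpz : p = 0 := h.symm
        have h0 : wstar x = β * wstar x := by
          nth_rewrite 1 [hval]
          rw [hpz, S.hzero, sub_zero, zero_add]
        nlinarith [S.hβ]
    set ε0 : ℝ := min p (xhat - x) with hε0def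
    have hε0p : ε0 ≤ p := min_le_left _ _
    have hε0x : ε0 ≤ xhat - x := min_le_right _ _
    have hε0 : 0 < ε0 := lt_min hppos (by linarith [hxoo.2])
    have hpx : p ≤ x := hpmem.2
    set c : ℝ := β * wstar (x - p) with hc
    set g : ℝ → ℝ := fun y => ℓ (y - x + p) + c with hg
    have hsand : ∀ y ∈ Icc (x - ε0) (x + ε0), wstar y ≤ g y := by
      intro y hy
      have hymem : y ∈ Icc (0:ℝ) xhat :=
        ⟨by linarith [hy.1], by linarith [hy.2]⟩
      have hamem : y - x + p ∈ Icc (0:ℝ) y := ⟨by linarith [hy.1], by linarith⟩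
      have h := S.le_val y hymem _ hamem
      have hxy : y - (y - x + p) = x - p := by ring
      rw [hxy] at h
      exact h
    have hgx : g x = wstar x := by
      have h1 : x - x + p = p := by ring
      simp only [hg, h1, hc]
      exact hval.symm
    have hg' : HasDerivAt g (ℓd p) x := by
      have h1 : HasDerivAt ℓ (ℓd p) (x + (p - x)) := by
        have : x + (p - x) = p := by ring
        rw [this]; exact S.hderiv p hpmem'
      have h2 : HasDerivAt (fun y : ℝ => ℓ (y + (p - x))) (ℓd p) x :=
        HasDerivAt.comp_add_const x (p - x) h1
      have h3 : HasDerivAt (fun y : ℝ => ℓ (y - x + p)) (ℓd p) x := by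
        have heqf : (fun y : ℝ => ℓ (y - x + p)) = fun y : ℝ => ℓ (y + (p - x)) := by
          funext y; ring_nf
        rw [heqf]; exact h2
      simpa [hg] using h3.add_const c
    have hgoal : HasDerivAt wstar (ℓd p) x := by
      rw [hasDerivAt_iff_tendsto_slope]
      have hgs : Tendsto (slope g x) (𝓝[≠] x) (𝓝 (ℓd p)) :=
        hasDerivAt_iff_tendsto_slope.mp hg'
      have hrefl : Tendsto (fun y => 2 * x - y) (𝓝[≠] x) (𝓝[≠] x) := by
        rw [tendsto_nhdsWithin_iff]
        constructor
        · have hcont : Tendsto (fun y : ℝ => 2 * x - y) (𝓝 x) (𝓝 (2 * x - x)) :=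
            (continuous_const.sub continuous_id).tendsto x
          have : (2 : ℝ) * x - x = x := by ring
          rw [this] at hcont
          exact hcont.mono_left nhdsWithin_le_nhds
        · filter_upwards [self_mem_nhdsWithin] with y hy
          simp only [mem_compl_iff, mem_singleton_iff] at hy ⊢
          intro hcontra; apply hy; linarith
      have hgs2 : Tendsto (fun y => slope g x (2 * x - y)) (𝓝[≠] x) (𝓝 (ℓd p)) :=
        hgs.comp hrefl
      have hlow : Tendsto (fun y => min (slope g x y) (slope g x (2 * x - y)))
          (𝓝[≠] x) (𝓝 (ℓd p)) := by
        have := hgs.min hgs2; simpa using this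
      have hupp : Tendsto (fun y => max (slope g x y) (slope g x (2 * x - y)))
          (𝓝[≠] x) (𝓝 (ℓd p)) := by
        have := hgs.max hgs2; simpa using this
      have hev : ∀ᶠ y in 𝓝[≠] x, y ∈ Ioo (x - ε0) (x + ε0) := by
        have h1 : ∀ᶠ y in 𝓝 x, y ∈ Ioo (x - ε0) (x + ε0) :=
          eventually_of_mem (Ioo_mem_nhds (by linarith) (by linarith)) (fun y hy => hy)
        exact h1.filter_mono nhdsWithin_le_nhds
      have hkey : ∀ y ∈ Ioo (x - ε0) (x + ε0), y ≠ x →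
          min (slope g x y) (slope g x (2 * x - y)) ≤ slope wstar x y ∧
          slope wstar x y ≤ max (slope g x y) (slope g x (2 * x - y)) := by
        intro y hy hyne
        set y' : ℝ := 2 * x - y with hy'def
        have hy'Icc : y' ∈ Icc (x - ε0) (x + ε0) :=
          ⟨by simp only [hy'def]; linarith [hy.2], by simp only [hy'def]; linarith [hy.1]⟩
        have hyIcc : y ∈ Icc (x - ε0) (x + ε0) := ⟨hy.1.le, hy.2.le⟩
        have hymem : y ∈ Icc (0:ℝ) xhat := ⟨by linarith [hy.1], by linarith [hy.2]⟩
        have hy'mem : y' ∈ Icc (0:ℝ) xhat :=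
          ⟨by simp only [hy'def]; linarith [hy.2], by simp only [hy'def]; linarith [hy.1]⟩
        have hwy : wstar y ≤ g y := hsand y hyIcc
        have hwy' : wstar y' ≤ g y' := hsand y' hy'Icc
        rcases lt_or_gt_of_ne hyne with hlt | hgt
        · -- y < x, y' > x
          have d1 : (0:ℝ) < x - y := by linarith
          have d2 : (0:ℝ) < y' - x := by simp only [hy'def]; linarith
          have hmono := hconvw.slope_mono_adjacent hymem hy'mem hlt
            (show x < y' by simp only [hy'def]; linarith)
          -- hmono : (w x - w y)/(x - y) ≤ (w y' - w x)/(y' - x)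
          have hup : slope wstar x y ≤ slope g x y' := by
            have hB : (wstar y' - wstar x) / (y' - x) ≤ (g y' - g x) / (y' - x) := by
              rw [div_le_div_iff₀ d2 d2]
              nlinarith [hwy', hgx]
            rw [slope_comm wstar x y, slope_def_field, slope_def_field]
            exact le_trans hmono hB
          have hdown : slope g x y ≤ slope wstar x y := by
            rw [slope_comm wstar x y, slope_comm g x y, slope_def_field, slope_def_field]
            rw [div_le_div_iff₀ d1 d1]
            nlinarith [hwy, hgx]
          exact ⟨le_trans (min_le_left _ _) hdown, le_trans hup (le_max_right _ _)⟩
        · -- y > x, y' < x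
          have d1 : (0:ℝ) < y - x := by linarith
          have d2 : (0:ℝ) < x - y' := by simp only [hy'def]; linarith
          have hmono := hconvw.slope_mono_adjacent hy'mem hymem
            (show y' < x by simp only [hy'def]; linarith) hgt
          -- hmono : (w x - w y')/(x - y') ≤ (w y - w x)/(y - x)
          have hup : slope wstar x y ≤ slope g x y := by
            rw [slope_def_field, slope_def_field]
            rw [div_le_div_iff₀ d1 d1]
            nlinarith [hwy, hgx]
          have hdown : slope g x y' ≤ slope wstar x y := by
            have hA : (g x - g y') / (x - y') ≤ (wstar x - wstar y') / (x - y') := by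
              rw [div_le_div_iff₀ d2 d2]
              nlinarith [hwy', hgx]
            rw [slope_comm g x y', slope_def_field, slope_def_field]
            exact le_trans hA hmono
          exact ⟨le_trans (min_le_right _ _) hdown, le_trans hup (le_max_left _ _)⟩
      apply tendsto_of_tendsto_of_tendsto_of_le_of_le' hlow hupp
      · filter_upwards [hev, self_mem_nhdsWithin] with y hy hyne
        exact (hkey y hy hyne).1
      · filter_upwards [hev, self_mem_nhdsWithin] with y hy hyne
        exact (hkey y hy hyne).2
    exact hgoal
end

section
/- Define a sequence {a_t*} recursively by x_0 = x̂, a_t* = π*(x_t), and x_{t+1} = x_t − a_t*. Then {a_t*} is the unique minimizer of ∑_{t=0}^∞ β^t ℓ(a_t) over all sequences {a_t} with a_t ≥ 0 for all t and ∑_{t=0}^∞ a_t = x̂. Moreover the value function W coincides with w* on X. -/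
open Set Filter ENNReal

/-- Total discounted loss `∑_{t=0}^∞ β^t ℓ(a_t)` of an action sequence, valued in `ℝ≥0∞`
(divergent sums are `∞`; the losses `ℓ(a_t)` are nonnegative for feasible sequences). -/
noncomputable def totalLoss (β : ℝ) (ℓ : ℝ → ℝ) (a : ℕ → ℝ) : ℝ≥0∞ :=
  ∑' t, ENNReal.ofReal (β ^ t * ℓ (a t))

/-- A sequence is feasible for remaining stock `x` if it is nonnegative and sums to `x`. -/
def Feasible (x : ℝ) (a : ℕ → ℝ) : Prop :=
  (∀ t, 0 ≤ a t) ∧ HasSum a x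

/-- The value function `W(x) = min { ∑_{t=0}^∞ β^t ℓ(a_t) : a feasible for x }`. -/
noncomputable def valueFun (β : ℝ) (ℓ : ℝ → ℝ) (x : ℝ) : ℝ :=
  (⨅ (a : ℕ → ℝ) (_ : Feasible x a), totalLoss β ℓ a).toReal

/-- Main auxiliary lemma: all the dynamic-programming facts, for an arbitrary start `x`. -/
theorem mainAux
    (xhat : ℝ) (hxhat : 0 < xhat)
    (ℓ ℓd : ℝ → ℝ)
    (hderiv : ∀ x ∈ Set.Icc 0 xhat, HasDerivAt ℓ (ℓd x) x)
    (hcont_deriv : ContinuousOn ℓd (Set.Icc 0 xhat))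
    (hconv : StrictConvexOn ℝ (Set.Icc 0 xhat) ℓ)
    (hzero : ℓ 0 = 0)
    (hpos : ∀ x ∈ Set.Icc 0 xhat, 0 < ℓd x)
    (β : ℝ) (hβ : 1 < β)
    (wstar : ℝ → ℝ)
    (hwstar_mem : wstar ∈ candidateClass xhat ℓ ℓd)
    (hwstar_fix : ∀ x ∈ Set.Icc 0 xhat, bellman β ℓ wstar x = wstar x)
    (πstar : ℝ → ℝ)
    (hπstar : ∀ x ∈ Set.Icc 0 xhat,
      πstar x ∈ Set.Icc 0 x ∧
      (∀ a ∈ Set.Icc 0 x,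
        ℓ (πstar x) + β * wstar (x - πstar x) ≤ ℓ a + β * wstar (x - a)) ∧
      (∀ a ∈ Set.Icc 0 x,
        (∀ b ∈ Set.Icc 0 x, ℓ a + β * wstar (x - a) ≤ ℓ b + β * wstar (x - b)) →
        a = πstar x)) :
    ∀ x ∈ Set.Icc 0 xhat,
      Feasible x (fun t => πstar ((fun y => y - πstar y)^[t] x)) ∧
      totalLoss β ℓ (fun t => πstar ((fun y => y - πstar y)^[t] x))
        = ENNReal.ofReal (wstar x) ∧
      (∀ a, Feasible x a → ENNReal.ofReal (wstar x) ≤ totalLoss β ℓ a) ∧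
      (∀ a, Feasible x a → totalLoss β ℓ a = ENNReal.ofReal (wstar x) →
        ∀ t, a t = πstar ((fun y => y - πstar y)^[t] x)) ∧
      0 ≤ wstar x := by
  classical
  have hx0I : (0:ℝ) ∈ Set.Icc 0 xhat := ⟨le_refl 0, hxhat.le⟩
  have hβ0 : (0:ℝ) < β := lt_trans one_pos hβ
  have hld0 : 0 < ℓd 0 := hpos 0 hx0I
  -- tangent-line bounds for ℓ
  have hlow_l : ∀ a ∈ Set.Icc 0 xhat, ℓd 0 * a ≤ ℓ a := by
    intro a ha
    rcases eq_or_lt_of_le ha.1 with h0 | h0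
    · simp [← h0, hzero]
    · have h := hconv.convexOn.le_slope_of_hasDerivAt hx0I ha h0 (hderiv 0 hx0I)
      rw [slope_def_field, hzero, sub_zero, sub_zero] at h
      exact (le_div_iff₀ h0).mp h
  have hnn_l : ∀ a ∈ Set.Icc 0 xhat, 0 ≤ ℓ a := fun a ha =>
    le_trans (mul_nonneg hld0.le ha.1) (hlow_l a ha)
  have hup_l : ∀ a ∈ Set.Icc 0 xhat, ℓ a ≤ ℓd a * a := by
    intro a ha
    rcases eq_or_lt_of_le ha.1 with h0 | h0
    · simp [← h0, hzero]
    · have h := hconv.convexOn.slope_le_of_hasDerivAt hx0I ha h0 (hderiv a ha)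
      rw [slope_def_field, hzero, sub_zero, sub_zero] at h
      exact (div_le_iff₀ h0).mp h
  -- a bound for ℓd on the interval
  obtain ⟨m, hmI, hM'⟩ :=
    IsCompact.exists_isMaxOn isCompact_Icc ⟨0, hx0I⟩ hcont_deriv
  have hM : ∀ y ∈ Set.Icc 0 xhat, ℓd y ≤ ℓd m := fun y hy => hM' hy
  have hMpos : 0 < ℓd m := lt_of_lt_of_le hld0 (hM 0 hx0I)
  set K : ℝ := ℓd m / ℓd 0 with hK
  have hKnn : 0 ≤ K := div_nonneg hMpos.le hld0.le
  -- wstar facts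
  have hwub : ∀ y ∈ Set.Icc 0 xhat, wstar y ≤ ℓ y := fun y hy => (hwstar_mem.2 y hy).2
  have hwlb : ∀ y ∈ Set.Icc 0 xhat, ℓd 0 * y ≤ wstar y := fun y hy => (hwstar_mem.2 y hy).1
  have hwnn : ∀ y ∈ Set.Icc 0 xhat, 0 ≤ wstar y := fun y hy =>
    le_trans (mul_nonneg hld0.le hy.1) (hwlb y hy)
  -- Bellman equation at the optimal policy + Bellman inequality
  have hbell : ∀ x ∈ Set.Icc 0 xhat,
      wstar x = ℓ (πstar x) + β * wstar (x - πstar x) ∧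
      ∀ a ∈ Set.Icc 0 x, wstar x ≤ ℓ a + β * wstar (x - a) := by
    intro x hx
    obtain ⟨hpmem, hpmin, -⟩ := hπstar x hx
    have key : bellman β ℓ wstar x = ℓ (πstar x) + β * wstar (x - πstar x) := by
      rw [bellman]
      apply le_antisymm
      · apply csInf_le
        · refine ⟨ℓ (πstar x) + β * wstar (x - πstar x), ?_⟩
          rintro _ ⟨a, ha, rfl⟩
          exact hpmin a ha
        · exact ⟨πstar x, hpmem, rfl⟩
      · refine le_csInf ⟨ℓ (πstar x) + β * wstar (x - πstar x), πstar x, hpmem, rfl⟩ ?_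
        rintro _ ⟨a, ha, rfl⟩
        exact hpmin a ha
    refine ⟨by rw [← hwstar_fix x hx, key], ?_⟩
    intro a ha
    rw [← hwstar_fix x hx, key]
    exact hpmin a ha
  have huniqmin : ∀ x ∈ Set.Icc 0 xhat, ∀ a ∈ Set.Icc 0 x,
      ℓ a + β * wstar (x - a) = wstar x → a = πstar x := by
    intro x hx a ha heq
    obtain ⟨-, -, huni⟩ := hπstar x hx
    refine huni a ha ?_
    intro b hb
    rw [heq]
    exact (hbell x hx).2 b hb
  -- the trajectory
  set g : ℝ → ℝ := fun y => y - πstar y with hg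
  have hys_succ : ∀ (x : ℝ) (t : ℕ), g^[t+1] x = g^[t] x - πstar (g^[t] x) := by
    intro x t
    rw [Function.iterate_succ_apply']
  have hysIcc : ∀ x ∈ Set.Icc 0 xhat, ∀ t, g^[t] x ∈ Set.Icc 0 x := by
    intro x hx t
    induction t with
    | zero =>
      rw [Function.iterate_zero_apply]
      exact ⟨hx.1, le_refl x⟩
    | succ t ih =>
      have hyI : g^[t] x ∈ Set.Icc 0 xhat := ⟨ih.1, le_trans ih.2 hx.2⟩
      have hp := (hπstar _ hyI).1
      rw [hys_succ]
      exact ⟨by linarith [hp.2], by linarith [hp.1, ih.2]⟩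
  have hysI : ∀ x ∈ Set.Icc 0 xhat, ∀ t, g^[t] x ∈ Set.Icc 0 xhat := by
    intro x hx t
    exact ⟨(hysIcc x hx t).1, le_trans (hysIcc x hx t).2 hx.2⟩
  have hanng : ∀ x ∈ Set.Icc 0 xhat, ∀ t, 0 ≤ πstar (g^[t] x) := by
    intro x hx t
    exact (hπstar _ (hysI x hx t)).1.1
  -- telescoping sums of actions
  have tele_sum : ∀ x ∈ Set.Icc 0 xhat, ∀ T,
      ∑ t ∈ Finset.range T, πstar (g^[t] x) = x - g^[T] x := by
    intro x hx T
    induction T with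
    | zero => simp
    | succ T ih =>
      rw [Finset.sum_range_succ, ih, hys_succ]
      ring
  -- telescoping Bellman identity
  have traj_G : ∀ x ∈ Set.Icc 0 xhat, ∀ T,
      (∑ t ∈ Finset.range T, β^t * ℓ (πstar (g^[t] x))) + β^T * wstar (g^[T] x)
        = wstar x := by
    intro x hx T
    induction T with
    | zero => simp
    | succ T ih =>
      rw [Finset.sum_range_succ, ← ih]
      have hb := (hbell _ (hysI x hx T)).1
      rw [← hys_succ] at hb
      rw [pow_succ]
      rw [hb]
      ring
  have hl_nn_traj : ∀ x ∈ Set.Icc 0 xhat, ∀ t, 0 ≤ ℓ (πstar (g^[t] x)) := by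
    intro x hx t
    refine hnn_l _ ⟨hanng x hx t, ?_⟩
    have h1 := (hπstar _ (hysI x hx t)).1.2
    exact le_trans h1 (hysI x hx t).2
  have hS_nn_traj : ∀ x ∈ Set.Icc 0 xhat, ∀ T,
      0 ≤ ∑ t ∈ Finset.range T, β^t * ℓ (πstar (g^[t] x)) := by
    intro x hx T
    exact Finset.sum_nonneg fun t _ =>
      mul_nonneg (pow_nonneg hβ0.le t) (hl_nn_traj x hx t)
  have hwsmall : ∀ x ∈ Set.Icc 0 xhat, ∀ T, β^T * wstar (g^[T] x) ≤ wstar x := by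
    intro x hx T
    have := traj_G x hx T
    nlinarith [hS_nn_traj x hx T]
  -- the remaining stock tends to 0
  have traj_tendsto : ∀ x ∈ Set.Icc 0 xhat,
      Tendsto (fun T => g^[T] x) atTop (nhds 0) := by
    intro x hx
    have hb1 : ∀ T, g^[T] x ≤ (wstar x / ℓd 0) * (β⁻¹)^T := by
      intro T
      have h1 : ℓd 0 * g^[T] x ≤ wstar (g^[T] x) := hwlb _ (hysI x hx T)
      have h2 := hwsmall x hx T
      have hbp : (0:ℝ) < β^T := pow_pos hβ0 T
      have h3 : g^[T] x ≤ wstar x / (ℓd 0 * β ^ T) := by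
        rw [le_div_iff₀ (by positivity)]
        nlinarith [mul_le_mul_of_nonneg_left h1 hbp.le]
      calc g^[T] x ≤ wstar x / (ℓd 0 * β ^ T) := h3
        _ = (wstar x / ℓd 0) * (β⁻¹)^T := by
            rw [inv_pow]
            field_simp
    have h0le : ∀ T, 0 ≤ g^[T] x := fun T => (hysIcc x hx T).1
    have htend2 : Tendsto (fun T : ℕ => (wstar x / ℓd 0) * (β⁻¹)^T) atTop (nhds 0) := by
      have h := tendsto_pow_atTop_nhds_zero_of_lt_one (inv_nonneg.2 hβ0.le) (inv_lt_one_of_one_lt₀ hβ)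
      simpa using h.const_mul (wstar x / ℓd 0)
    exact tendsto_of_tendsto_of_tendsto_of_le_of_le tendsto_const_nhds htend2 h0le hb1
  -- the generated trajectory is feasible
  have traj_feas : ∀ x ∈ Set.Icc 0 xhat, Feasible x (fun t => πstar (g^[t] x)) := by
    intro x hx
    refine ⟨hanng x hx, ?_⟩
    rw [hasSum_iff_tendsto_nat_of_nonneg (hanng x hx)]
    have he : (fun n => ∑ t ∈ Finset.range n, πstar (g^[t] x))
        = fun n => x - g^[n] x := funext (tele_sum x hx)
    rw [he]
    simpa using tendsto_const_nhds.sub (traj_tendsto x hx)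
  -- its total loss is at most wstar x
  have traj_loss_le : ∀ x ∈ Set.Icc 0 xhat,
      totalLoss β ℓ (fun t => πstar (g^[t] x)) ≤ ENNReal.ofReal (wstar x) := by
    intro x hx
    rw [totalLoss, ENNReal.tsum_eq_iSup_nat]
    apply iSup_le
    intro n
    rw [← ENNReal.ofReal_sum_of_nonneg
      (fun t _ => mul_nonneg (pow_nonneg hβ0.le t) (hl_nn_traj x hx t))]
    apply ENNReal.ofReal_le_ofReal
    have h := traj_G x hx n
    nlinarith [mul_nonneg (pow_nonneg hβ0.le n) (hwnn _ (hysI x hx n))]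
  -- the key comparison lemma
  have key : ∀ x ∈ Set.Icc 0 xhat, ∀ a : ℕ → ℝ, Feasible x a →
      ENNReal.ofReal (wstar x) ≤ totalLoss β ℓ a ∧
      (totalLoss β ℓ a = ENNReal.ofReal (wstar x) → ∀ t, a t = πstar (g^[t] x)) := by
    intro x hx a ha
    by_cases htop : totalLoss β ℓ a = ⊤
    · refine ⟨by rw [htop]; exact le_top, ?_⟩
      intro h
      rw [h] at htop
      exact absurd htop ENNReal.ofReal_ne_top
    have hsum : Summable a := ha.2.summable
    have hsumT : ∀ T, Summable (fun k => a (k + T)) := fun T =>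
      (summable_nat_add_iff T).2 hsum
    set r : ℕ → ℝ := fun T => ∑' k, a (k + T) with hrdef
    have hr : ∀ T, r T = ∑' k, a (k + T) := fun T => rfl
    have hr0 : r 0 = x := by
      rw [hr]
      simpa using ha.2.tsum_eq
    have hrnn : ∀ T, 0 ≤ r T := fun T => tsum_nonneg fun k => ha.1 _
    have hale : ∀ T, a T ≤ r T := by
      intro T
      have h := Summable.le_tsum (hsumT T) 0 (fun j _ => ha.1 _)
      simpa using h
    have hrsucc : ∀ T, r (T + 1) = r T - a T := by
      intro T
      have h1 := Summable.tsum_eq_zero_add (hsumT T)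
      have h2 : ∑' k, a ((k + 1) + T) = ∑' k, a (k + (T + 1)) :=
        tsum_congr fun k => congrArg a (by ring)
      rw [hr, hr, h1, h2]
      simp
    have hpart : ∀ T, ∑ t ∈ Finset.range T, a t = x - r T := by
      intro T
      have h1 := Summable.sum_add_tsum_nat_add T hsum
      have h2 : (∑' i, a i) = x := ha.2.tsum_eq
      rw [hr]
      linarith
    have hrx : ∀ T, r T ≤ x := by
      intro T
      have h1 := hpart T
      have h2 : (0:ℝ) ≤ ∑ t ∈ Finset.range T, a t := Finset.sum_nonneg fun t _ => ha.1 t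
      linarith
    have hrI : ∀ T, r T ∈ Set.Icc 0 xhat := fun T => ⟨hrnn T, le_trans (hrx T) hx.2⟩
    have haIcc : ∀ t, a t ∈ Set.Icc 0 (r t) := fun t => ⟨ha.1 t, hale t⟩
    have haI : ∀ t, a t ∈ Set.Icc 0 xhat := fun t =>
      ⟨ha.1 t, le_trans (hale t) (le_trans (hrx t) hx.2)⟩
    have hcnn : ∀ t, 0 ≤ β ^ t * ℓ (a t) := fun t =>
      mul_nonneg (pow_nonneg hβ0.le t) (hnn_l _ (haI t))
    have hcs : Summable (fun t => β ^ t * ℓ (a t)) := by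
      have hne : (∑' t, ENNReal.ofReal (β ^ t * ℓ (a t))) ≠ ⊤ := htop
      have h1 := ENNReal.summable_toReal hne
      exact h1.congr fun t => ENNReal.toReal_ofReal (hcnn t)
    have hLloss : totalLoss β ℓ a = ENNReal.ofReal (∑' t, β ^ t * ℓ (a t)) := by
      rw [ENNReal.ofReal_tsum_of_nonneg hcnn hcs]
      rfl
    have hStend : Tendsto (fun T => ∑ t ∈ Finset.range T, β ^ t * ℓ (a t)) atTop
        (nhds (∑' t, β ^ t * ℓ (a t))) := hcs.hasSum.tendsto_sum_nat
    have hbound : ∀ T, β ^ T * ℓ (r T) ≤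
        K * ((∑' t, β ^ t * ℓ (a t)) - ∑ t ∈ Finset.range T, β ^ t * ℓ (a t)) := by
      intro T
      have htail := Summable.sum_add_tsum_nat_add T hcs
      have h1 : ℓd 0 * (β ^ T * r T) ≤
          (∑' t, β ^ t * ℓ (a t)) - ∑ t ∈ Finset.range T, β ^ t * ℓ (a t) := by
        have e1 : ℓd 0 * (β ^ T * r T) = ∑' k, (ℓd 0 * β ^ T) * a (k + T) := by
          rw [hr, ← mul_assoc, ← tsum_mul_left]
        have e2 : ∀ k, (ℓd 0 * β ^ T) * a (k + T) ≤ β ^ (k + T) * ℓ (a (k + T)) := by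
          intro k
          have l1 : ℓd 0 * a (k + T) ≤ ℓ (a (k + T)) := hlow_l _ (haI _)
          have l2 : β ^ T ≤ β ^ (k + T) := pow_le_pow_right₀ hβ.le (Nat.le_add_left T k)
          calc (ℓd 0 * β ^ T) * a (k + T) = β ^ T * (ℓd 0 * a (k + T)) := by ring
            _ ≤ β ^ T * ℓ (a (k + T)) :=
                mul_le_mul_of_nonneg_left l1 (pow_pos hβ0 T).le
            _ ≤ β ^ (k + T) * ℓ (a (k + T)) :=
                mul_le_mul_of_nonneg_right l2 (hnn_l _ (haI (k + T)))
        have e3 : ∑' k, (ℓd 0 * β ^ T) * a (k + T) ≤ ∑' k, β ^ (k + T) * ℓ (a (k + T)) :=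
          Summable.tsum_le_tsum e2 ((hsumT T).mul_left _) ((summable_nat_add_iff T).2 hcs)
        rw [e1]
        linarith [e3, htail]
      have h2 : ℓ (r T) ≤ ℓd m * r T :=
        le_trans (hup_l _ (hrI T)) (mul_le_mul_of_nonneg_right (hM _ (hrI T)) (hrnn T))
      have hbp : (0:ℝ) < β ^ T := pow_pos hβ0 T
      calc β ^ T * ℓ (r T) ≤ β ^ T * (ℓd m * r T) :=
            mul_le_mul_of_nonneg_left h2 hbp.le
        _ = K * (ℓd 0 * (β ^ T * r T)) := by
            rw [hK]
            field_simp
        _ ≤ K * _ := mul_le_mul_of_nonneg_left h1 hKnn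
    have hGmono : Monotone (fun T =>
        (∑ t ∈ Finset.range T, β ^ t * ℓ (a t)) + β ^ T * wstar (r T)) := by
      apply monotone_nat_of_le_succ
      intro T
      simp only [Finset.sum_range_succ]
      have hb := (hbell (r T) (hrI T)).2 (a T) (haIcc T)
      rw [← hrsucc T] at hb
      have hp : (0:ℝ) ≤ β ^ T := (pow_pos hβ0 T).le
      rw [pow_succ]
      nlinarith [mul_le_mul_of_nonneg_left hb hp]
    have hG0 : (∑ t ∈ Finset.range 0, β ^ t * ℓ (a t)) + β ^ 0 * wstar (r 0) = wstar x := by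
      simp [hr0]
    have hGleF : ∀ T,
        (∑ t ∈ Finset.range T, β ^ t * ℓ (a t)) + β ^ T * wstar (r T) ≤
        (∑ t ∈ Finset.range T, β ^ t * ℓ (a t)) +
          K * ((∑' t, β ^ t * ℓ (a t)) - ∑ t ∈ Finset.range T, β ^ t * ℓ (a t)) := by
      intro T
      have h1 : wstar (r T) ≤ ℓ (r T) := hwub (r T) (hrI T)
      have h2 := hbound T
      have hp : (0:ℝ) ≤ β ^ T := (pow_pos hβ0 T).le
      nlinarith [mul_le_mul_of_nonneg_left h1 hp]
    have hFtend : Tendsto (fun T =>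
        (∑ t ∈ Finset.range T, β ^ t * ℓ (a t)) +
          K * ((∑' t, β ^ t * ℓ (a t)) - ∑ t ∈ Finset.range T, β ^ t * ℓ (a t))) atTop
        (nhds (∑' t, β ^ t * ℓ (a t))) := by
      have h1 : Tendsto (fun T =>
          (∑' t, β ^ t * ℓ (a t)) - ∑ t ∈ Finset.range T, β ^ t * ℓ (a t)) atTop
          (nhds 0) := by
        simpa using (tendsto_const_nhds :
          Tendsto (fun _ : ℕ => (∑' t, β ^ t * ℓ (a t))) atTop _).sub hStend
      have h2 := hStend.add (h1.const_mul K)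
      simpa using h2
    have hwleL : wstar x ≤ ∑' t, β ^ t * ℓ (a t) := by
      refine ge_of_tendsto hFtend (Filter.Eventually.of_forall fun T => ?_)
      calc wstar x = (∑ t ∈ Finset.range 0, β ^ t * ℓ (a t)) + β ^ 0 * wstar (r 0) :=
            hG0.symm
        _ ≤ (∑ t ∈ Finset.range T, β ^ t * ℓ (a t)) + β ^ T * wstar (r T) :=
            hGmono (Nat.zero_le T)
        _ ≤ _ := hGleF T
    refine ⟨by rw [hLloss]; exact ENNReal.ofReal_le_ofReal hwleL, ?_⟩
    intro heq
    have hL0 : 0 ≤ ∑' t, β ^ t * ℓ (a t) := tsum_nonneg hcnn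
    have hLw : (∑' t, β ^ t * ℓ (a t)) = wstar x := by
      rw [hLloss] at heq
      exact (ENNReal.ofReal_eq_ofReal_iff hL0 (hwnn x hx)).1 heq
    have hβw_nn : ∀ T, 0 ≤ β ^ T * wstar (r T) := fun T =>
      mul_nonneg (pow_pos hβ0 T).le (hwnn _ (hrI T))
    have hGtend : Tendsto (fun T =>
        (∑ t ∈ Finset.range T, β ^ t * ℓ (a t)) + β ^ T * wstar (r T)) atTop
        (nhds (∑' t, β ^ t * ℓ (a t))) :=
      tendsto_of_tendsto_of_tendsto_of_le_of_le hStend hFtend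
        (fun T => le_add_of_nonneg_right (hβw_nn T)) hGleF
    have hGconst : ∀ T,
        (∑ t ∈ Finset.range T, β ^ t * ℓ (a t)) + β ^ T * wstar (r T)
          = ∑' t, β ^ t * ℓ (a t) := by
      intro T
      refine le_antisymm (hGmono.ge_of_tendsto hGtend T) ?_
      calc (∑' t, β ^ t * ℓ (a t)) = wstar x := hLw
        _ = (∑ t ∈ Finset.range 0, β ^ t * ℓ (a t)) + β ^ 0 * wstar (r 0) := hG0.symm
        _ ≤ _ := hGmono (Nat.zero_le T)
    have hstep : ∀ T, wstar (r T) = ℓ (a T) + β * wstar (r (T + 1)) := by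
      intro T
      have h1 := hGconst T
      have h2 := hGconst (T + 1)
      rw [Finset.sum_range_succ, pow_succ] at h2
      have hbp : (β:ℝ) ^ T ≠ 0 := (pow_pos hβ0 T).ne'
      have h3 : β ^ T * (ℓ (a T) + β * wstar (r (T + 1)) - wstar (r T)) = 0 := by
        linear_combination h2 - h1
      rcases mul_eq_zero.mp h3 with h | h
      · exact absurd h hbp
      · linarith
    have hres : ∀ T, a T = πstar (r T) := by
      intro T
      refine huniqmin (r T) (hrI T) (a T) (haIcc T) ?_
      rw [← hrsucc T]
      exact (hstep T).symm
    intro t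
    have hry : ∀ T, r T = g^[T] x := by
      intro T
      induction T with
      | zero => rw [hr0, Function.iterate_zero_apply]
      | succ T ih => rw [hrsucc T, hres T, ih, hys_succ]
    rw [hres t, hry t]
  -- assemble
  intro x hx
  refine ⟨traj_feas x hx, ?_, fun a ha => (key x hx a ha).1,
    fun a ha h => (key x hx a ha).2 h, hwnn x hx⟩
  exact le_antisymm (traj_loss_le x hx) ((key x hx _ (traj_feas x hx)).1)

/-- the sequence generated by the optimal policy `π*` is the unique minimizer
of the negative discount dynamic program, and the value function `W` coincides with `w*`. -/
theorem optimal_policy_generates_unique_solution_and_W_eq_wstar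
    (xhat : ℝ) (hxhat : 0 < xhat)
    (ℓ ℓd : ℝ → ℝ)
    (hderiv : ∀ x ∈ Set.Icc 0 xhat, HasDerivAt ℓ (ℓd x) x)
    (hcont_deriv : ContinuousOn ℓd (Set.Icc 0 xhat))
    (hconv : StrictConvexOn ℝ (Set.Icc 0 xhat) ℓ)
    (hzero : ℓ 0 = 0)
    (hpos : ∀ x ∈ Set.Icc 0 xhat, 0 < ℓd x)
    (β : ℝ) (hβ : 1 < β)
    (wstar : ℝ → ℝ)
    (hwstar_mem : wstar ∈ candidateClass xhat ℓ ℓd)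
    (hwstar_fix : ∀ x ∈ Set.Icc 0 xhat, bellman β ℓ wstar x = wstar x)
    (πstar : ℝ → ℝ)
    (hπstar : ∀ x ∈ Set.Icc 0 xhat,
      πstar x ∈ Set.Icc 0 x ∧
      (∀ a ∈ Set.Icc 0 x,
        ℓ (πstar x) + β * wstar (x - πstar x) ≤ ℓ a + β * wstar (x - a)) ∧
      (∀ a ∈ Set.Icc 0 x,
        (∀ b ∈ Set.Icc 0 x, ℓ a + β * wstar (x - a) ≤ ℓ b + β * wstar (x - b)) →
        a = πstar x))
    (xs : ℕ → ℝ) (hxs0 : xs 0 = xhat)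
    (hxsrec : ∀ t, xs (t + 1) = xs t - πstar (xs t))
    (astar : ℕ → ℝ) (hastar : ∀ t, astar t = πstar (xs t)) :
    Feasible xhat astar ∧
    (∀ a : ℕ → ℝ, Feasible xhat a → totalLoss β ℓ astar ≤ totalLoss β ℓ a) ∧
    (∀ a : ℕ → ℝ, Feasible xhat a → totalLoss β ℓ a = totalLoss β ℓ astar → a = astar) ∧
    (∀ x ∈ Set.Icc 0 xhat, valueFun β ℓ x = wstar x) := by
  have main := mainAux xhat hxhat ℓ ℓd hderiv hcont_deriv hconv hzero hpos β hβ
    wstar hwstar_mem hwstar_fix πstar hπstar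
  have hxhatI : xhat ∈ Set.Icc 0 xhat := ⟨hxhat.le, le_refl _⟩
  obtain ⟨hfeas, hloss, hlow, huniq, -⟩ := main xhat hxhatI
  have hxs_eq : ∀ t, xs t = (fun y => y - πstar y)^[t] xhat := by
    intro t
    induction t with
    | zero => simpa using hxs0
    | succ t ih => rw [hxsrec, ih, Function.iterate_succ_apply']
  have hastar_eq : astar = fun t => πstar ((fun y => y - πstar y)^[t] xhat) := by
    funext t
    rw [hastar, hxs_eq]
  refine ⟨?_, ?_, ?_, ?_⟩
  · rw [hastar_eq]; exact hfeas
  · intro a ha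
    rw [hastar_eq, hloss]
    exact hlow a ha
  · intro a ha heq
    rw [hastar_eq, hloss] at heq
    funext t
    rw [hastar_eq]
    exact huniq a ha heq t
  · intro x hx
    obtain ⟨hfeasx, hlossx, hlowx, -, hwnnx⟩ := main x hx
    have hiInf : (⨅ (a : ℕ → ℝ) (_ : Feasible x a), totalLoss β ℓ a)
        = ENNReal.ofReal (wstar x) := by
      apply le_antisymm
      · exact le_trans (iInf₂_le _ hfeasx) (le_of_eq hlossx)
      · exact le_iInf fun a => le_iInf fun ha => hlowx a ha
    rw [valueFun, hiInf, ENNReal.toReal_ofReal hwnnx]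
end

section
/- The unique solution {a_t*} of the negative discount dynamic program satisfies the Euler equation ℓ'(a*_{t+1}) = max { β^{-1} ℓ'(a*_t), ℓ'(0) } for all t ≥ 0; in particular the sequence {a_t*} is monotone decreasing. -/
open Set Filter ENNReal

/-!
Moving `ε ≥ 0` units of the stock from period `j` to period `i` keeps a sequence feasible, so at
an optimum `a` the function `ε ↦ β^i ℓ(a_i + ε) + β^j ℓ(a_j - ε)` is minimal at `ε = 0` from the
right whenever `a_j > 0`; its derivative there gives `β^j ℓ'(a_j) ≤ β^i ℓ'(a_i)`. For consecutive
periods this yields `β ℓ'(a_{t+1}) = ℓ'(a_t)` when `a_{t+1} > 0` (which forces `a_t > 0`, as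
`β > 1` and `ℓ'` is increasing and positive), and `ℓ'(a_t) ≤ β ℓ'(0)` when `a_{t+1} = 0`. Since
`ℓ'` is strictly increasing, the Euler equation in turn gives `a_{t+1} ≤ a_t`.
-/

open Topology

theorem ENNReal.sum_le_sum_of_tsum_le_of_eqOn_compl {ι : Type*} {f g : ι → ℝ≥0∞}
    (s : Finset ι) (hfg : ∀ i ∉ s, f i = g i) (hf : ∑' i, f i ≠ ∞)
    (h : ∑' i, f i ≤ ∑' i, g i) : ∑ i ∈ s, f i ≤ ∑ i ∈ s, g i := by
  have htail : ∑' i : ↥(s : Set ι)ᶜ, f i = ∑' i : ↥(s : Set ι)ᶜ, g i :=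
    tsum_congr fun i => hfg i i.2
  rw [← ENNReal.sum_add_tsum_compl s f] at hf h
  rw [← ENNReal.sum_add_tsum_compl s g, ← htail] at h
  exact (ENNReal.add_le_add_iff_right (ENNReal.add_ne_top.mp hf).2).mp h

theorem HasDerivAt.nonneg_of_eventually_le_right {g : ℝ → ℝ} {g' x : ℝ} (hg : HasDerivAt g g' x)
    (hmin : ∀ᶠ y in 𝓝[>] x, g x ≤ g y) : 0 ≤ g' := by
  refine ge_of_tendsto (hg.tendsto_slope.mono_left (nhdsGT_le_nhdsNE x)) ?_
  filter_upwards [hmin, self_mem_nhdsWithin] with y hy hxy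
  rw [slope_def_field]
  exact div_nonneg (sub_nonneg.2 hy) (sub_nonneg.2 (le_of_lt hxy))

theorem StrictConvexOn.strictMonoOn_of_hasDerivAt {s : Set ℝ} {f f' : ℝ → ℝ}
    (hf : StrictConvexOn ℝ s f) (hd : ∀ x ∈ s, HasDerivAt f (f' x) x) : StrictMonoOn f' s :=
  fun _ hx _ hy hxy => (hf.lt_slope_of_hasDerivAt hx hy hxy (hd _ hx)).trans
    (hf.slope_lt_of_hasDerivAt hx hy hxy (hd _ hy))

theorem ConvexOn.nonneg_of_hasDerivAt_zero {b f' : ℝ} {f : ℝ → ℝ} (hf : ConvexOn ℝ (Icc 0 b) f)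
    (h0 : f 0 = 0) (hd : HasDerivAt f f' 0) (hf' : 0 ≤ f') {y : ℝ} (hy : y ∈ Icc 0 b) :
    0 ≤ f y := by
  obtain rfl | hy0 := hy.1.eq_or_lt
  · exact h0.ge
  have hslope := hf.le_slope_of_hasDerivAt ⟨le_rfl, hy.1.trans hy.2⟩ hy hy0 hd
  rw [slope_def_field, h0, sub_zero, sub_zero, le_div_iff₀ hy0] at hslope
  exact (mul_nonneg hf' hy.1).trans hslope

def transfer (a : ℕ → ℝ) (i j : ℕ) (ε : ℝ) : ℕ → ℝ :=
  a + Pi.single i ε - Pi.single j ε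

section transfer

variable {a : ℕ → ℝ} {i j n : ℕ} {ε : ℝ}

@[simp]
theorem transfer_apply_left (hij : i ≠ j) : transfer a i j ε i = a i + ε := by
  simp [transfer, hij]

@[simp]
theorem transfer_apply_right (hij : i ≠ j) : transfer a i j ε j = a j - ε := by
  simp [transfer, hij.symm]

theorem transfer_apply_of_ne (hi : n ≠ i) (hj : n ≠ j) : transfer a i j ε n = a n := by
  simp [transfer, hi, hj]

end transfer

namespace Feasible

variable {x : ℝ} {a : ℕ → ℝ}

theorem nonneg_stock (ha : Feasible x a) : 0 ≤ x :=
  ha.2.nonneg ha.1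

theorem mem_Icc (ha : Feasible x a) (t : ℕ) : a t ∈ Icc 0 x :=
  ⟨ha.1 t, le_hasSum ha.2 t fun i _ => ha.1 i⟩

theorem transfer (ha : Feasible x a) {i j : ℕ} {ε : ℝ} (hij : i ≠ j) (hε : 0 ≤ ε)
    (hεj : ε ≤ a j) : Feasible x (transfer a i j ε) := by
  refine ⟨fun n => ?_, ?_⟩
  · by_cases hni : n = i
    · subst hni; rw [transfer_apply_left hij]; linarith [ha.1 n]
    by_cases hnj : n = j
    · subst hnj; rw [transfer_apply_right hij]; linarith
    · rw [transfer_apply_of_ne hni hnj]; exact ha.1 n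
  · exact add_sub_cancel_right x ε ▸ (ha.2.add (hasSum_pi_single i ε)).sub (hasSum_pi_single j ε)

end Feasible

theorem feasible_single {x : ℝ} (hx : 0 ≤ x) (t : ℕ) : Feasible x (Pi.single t x) :=
  ⟨(Pi.single_nonneg (α := fun _ : ℕ => ℝ)).2 hx, hasSum_pi_single t x⟩

theorem totalLoss_single {β x : ℝ} {ℓ : ℝ → ℝ} (h0 : ℓ 0 = 0) :
    totalLoss β ℓ (Pi.single 0 x) = ENNReal.ofReal (ℓ x) := by
  rw [totalLoss, tsum_eq_single 0 fun n hn => by simp [hn, h0]]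
  simp

def IsOptimal (β : ℝ) (ℓ : ℝ → ℝ) (x : ℝ) (a : ℕ → ℝ) : Prop :=
  Feasible x a ∧ ∀ b, Feasible x b → totalLoss β ℓ a ≤ totalLoss β ℓ b

namespace IsOptimal

variable {β x : ℝ} {ℓ ℓd : ℝ → ℝ} {a : ℕ → ℝ}

theorem totalLoss_ne_top (ha : IsOptimal β ℓ x a) (h0 : ℓ 0 = 0) : totalLoss β ℓ a ≠ ∞ :=
  ne_top_of_le_ne_top (by simp [totalLoss_single h0]) (ha.2 _ (feasible_single ha.1.nonneg_stock 0))

theorem exchange_le (ha : IsOptimal β ℓ x a) (h0 : ℓ 0 = 0) (hβ : 0 ≤ β)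
    (hℓ : ∀ y ∈ Icc 0 x, 0 ≤ ℓ y) {i j : ℕ} {ε : ℝ} (hij : i ≠ j) (hε : 0 ≤ ε)
    (hεj : ε ≤ a j) :
    β ^ i * ℓ (a i) + β ^ j * ℓ (a j) ≤ β ^ i * ℓ (a i + ε) + β ^ j * ℓ (a j - ε) := by
  set b := transfer a i j ε
  have hb : Feasible x b := ha.1.transfer hij hε hεj
  have hloss_nonneg : ∀ c, Feasible x c → ∀ n, 0 ≤ β ^ n * ℓ (c n) :=
    fun c hc n => mul_nonneg (pow_nonneg hβ n) (hℓ _ (hc.mem_Icc n))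
  have hpair := ENNReal.sum_le_sum_of_tsum_le_of_eqOn_compl {i, j}
    (fun n hn => by simp_all [b, transfer_apply_of_ne]) (ha.totalLoss_ne_top h0) (ha.2 b hb)
  rw [← ofReal_sum_of_nonneg fun n _ => hloss_nonneg a ha.1 n,
    ← ofReal_sum_of_nonneg fun n _ => hloss_nonneg b hb n,
    ofReal_le_ofReal_iff (Finset.sum_nonneg fun n _ => hloss_nonneg b hb n),
    Finset.sum_pair hij, Finset.sum_pair hij] at hpair
  simpa [b, hij] using hpair

theorem pow_mul_deriv_le (ha : IsOptimal β ℓ x a) (h0 : ℓ 0 = 0) (hβ : 0 ≤ β)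
    (hℓ : ∀ y ∈ Icc 0 x, 0 ≤ ℓ y) {i j : ℕ} (hij : i ≠ j) (hj : 0 < a j)
    (hdi : HasDerivAt ℓ (ℓd (a i)) (a i)) (hdj : HasDerivAt ℓ (ℓd (a j)) (a j)) :
    β ^ j * ℓd (a j) ≤ β ^ i * ℓd (a i) := by
  have hg : HasDerivAt (fun ε => β ^ i * ℓ (a i + ε) + β ^ j * ℓ (a j - ε))
      (β ^ i * ℓd (a i) + β ^ j * -ℓd (a j)) 0 := by
    refine ((HasDerivAt.comp_const_add _ (0 : ℝ) ?_).const_mul _).add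
      ((HasDerivAt.comp_const_sub _ (0 : ℝ) ?_).const_mul _)
    exacts [by simpa using hdi, by simpa using hdj]
  have := hg.nonneg_of_eventually_le_right <| by
    filter_upwards [Ioo_mem_nhdsGT hj] with ε hε
    simpa using ha.exchange_le h0 hβ hℓ hij hε.1.le hε.2.le
  linarith

theorem mul_deriv_succ_le (ha : IsOptimal β ℓ x a) (h0 : ℓ 0 = 0) (hβ : 0 < β)
    (hℓ : ∀ y ∈ Icc 0 x, 0 ≤ ℓ y) (hd : ∀ t, HasDerivAt ℓ (ℓd (a t)) (a t)) {t : ℕ}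
    (ht : 0 < a (t + 1)) : β * ℓd (a (t + 1)) ≤ ℓd (a t) := by
  have := ha.pow_mul_deriv_le h0 hβ.le hℓ (Nat.succ_ne_self t).symm ht (hd t) (hd (t + 1))
  rwa [pow_succ, mul_assoc, mul_le_mul_iff_right₀ (pow_pos hβ t)] at this

theorem deriv_le_mul_deriv_succ (ha : IsOptimal β ℓ x a) (h0 : ℓ 0 = 0) (hβ : 0 < β)
    (hℓ : ∀ y ∈ Icc 0 x, 0 ≤ ℓ y) (hd : ∀ t, HasDerivAt ℓ (ℓd (a t)) (a t)) {t : ℕ}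
    (ht : 0 < a t) : ℓd (a t) ≤ β * ℓd (a (t + 1)) := by
  have := ha.pow_mul_deriv_le h0 hβ.le hℓ (Nat.succ_ne_self t) ht (hd (t + 1)) (hd t)
  rwa [pow_succ, mul_assoc, mul_le_mul_iff_right₀ (pow_pos hβ t)] at this

end IsOptimal

section EulerEquation

variable {x β u v : ℝ} {ℓd : ℝ → ℝ}

theorem eq_max_of_first_order_conditions (hβ : 1 < β) (hmono : StrictMonoOn ℓd (Icc 0 x))
    (hpos : ∀ y ∈ Icc 0 x, 0 < ℓd y) (hu : u ∈ Icc 0 x) (hv : v ∈ Icc 0 x)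
    (hfwd : 0 < v → β * ℓd v ≤ ℓd u) (hbwd : 0 < u → ℓd u ≤ β * ℓd v) :
    ℓd v = max (β⁻¹ * ℓd u) (ℓd 0) := by
  have hβ0 : 0 < β := one_pos.trans hβ
  have h0 : (0 : ℝ) ∈ Icc 0 x := ⟨le_rfl, hu.1.trans hu.2⟩
  obtain rfl | hv0 := hv.1.eq_or_lt
  · refine (max_eq_right ((inv_mul_le_iff₀ hβ0).2 ?_)).symm
    obtain rfl | hu0 := hu.1.eq_or_lt
    · exact le_mul_of_one_le_left (hpos 0 h0).le hβ.le
    · exact hbwd hu0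
  · have hlt : ℓd 0 < ℓd v := hmono h0 hv hv0
    -- `u = 0` would give `β * ℓd v ≤ ℓd 0 < ℓd v`
    have hu0 : 0 < u := by
      refine hu.1.lt_of_ne fun hu0 => ?_
      subst hu0
      nlinarith [hfwd hv0, hpos v hv]
    have heq : β * ℓd v = ℓd u := (hfwd hv0).antisymm (hbwd hu0)
    rw [← heq, inv_mul_cancel_left₀ hβ0.ne', max_eq_left hlt.le]

theorem le_of_eq_max_inv_mul (hβ : 1 ≤ β) (hmono : StrictMonoOn ℓd (Icc 0 x))
    (hpos : 0 ≤ ℓd u) (hu : u ∈ Icc 0 x) (hv : v ∈ Icc 0 x)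
    (h : ℓd v = max (β⁻¹ * ℓd u) (ℓd 0)) : v ≤ u := by
  have h0 : (0 : ℝ) ∈ Icc 0 x := ⟨le_rfl, hu.1.trans hu.2⟩
  refine (hmono.le_iff_le hv hu).1 (h ▸ max_le ?_ (hmono.monotoneOn h0 hu hu.1))
  exact (inv_mul_le_iff₀ (one_pos.trans_le hβ)).2 (le_mul_of_one_le_left hpos hβ)

end EulerEquation

theorem euler_equation_of_optimal_sequence_general
    (xhat : ℝ)
    (ℓ ℓd : ℝ → ℝ)
    (hderiv : ∀ x ∈ Set.Icc 0 xhat, HasDerivAt ℓ (ℓd x) x)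
    (hconv : StrictConvexOn ℝ (Set.Icc 0 xhat) ℓ)
    (hzero : ℓ 0 = 0)
    (hpos : ∀ x ∈ Set.Icc 0 xhat, 0 < ℓd x)
    (β : ℝ) (hβ : 1 < β)
    (astar : ℕ → ℝ)
    (hfeas : Feasible xhat astar)
    (hmin : ∀ a : ℕ → ℝ, Feasible xhat a → totalLoss β ℓ astar ≤ totalLoss β ℓ a) :
    (∀ t : ℕ, ℓd (astar (t + 1)) = max (β⁻¹ * ℓd (astar t)) (ℓd 0)) ∧
    Antitone astar := by
  have hopt : IsOptimal β ℓ xhat astar := ⟨hfeas, hmin⟩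
  have hβ0 : 0 < β := one_pos.trans hβ
  have hmem := hfeas.mem_Icc
  have h0 : (0 : ℝ) ∈ Icc 0 xhat := ⟨le_rfl, hfeas.nonneg_stock⟩
  have hℓ : ∀ y ∈ Icc 0 xhat, 0 ≤ ℓ y := fun y hy =>
    hconv.convexOn.nonneg_of_hasDerivAt_zero hzero (hderiv 0 h0) (hpos 0 h0).le hy
  have hmono := hconv.strictMonoOn_of_hasDerivAt hderiv
  have hd : ∀ t, HasDerivAt ℓ (ℓd (astar t)) (astar t) := fun t => hderiv _ (hmem t)
  have heuler : ∀ t, ℓd (astar (t + 1)) = max (β⁻¹ * ℓd (astar t)) (ℓd 0) := fun t =>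
    eq_max_of_first_order_conditions hβ hmono hpos (hmem t) (hmem (t + 1))
      (hopt.mul_deriv_succ_le hzero hβ0 hℓ hd) (hopt.deriv_le_mul_deriv_succ hzero hβ0 hℓ hd)
  exact ⟨heuler, antitone_nat_of_succ_le fun t =>
    le_of_eq_max_inv_mul hβ.le hmono (hpos _ (hmem t)).le (hmem t) (hmem (t + 1)) (heuler t)⟩

/-- the unique solution `{a_t*}` of the negative discount dynamic program
satisfies the Euler equation `ℓ'(a*_{t+1}) = max { β⁻¹ ℓ'(a*_t), ℓ'(0) }` for all `t ≥ 0`;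
in particular `{a_t*}` is monotone decreasing. -/
theorem euler_equation_of_optimal_sequence
    (xhat : ℝ) (hxhat : 0 < xhat)
    (ℓ ℓd : ℝ → ℝ)
    (hderiv : ∀ x ∈ Set.Icc 0 xhat, HasDerivAt ℓ (ℓd x) x)
    (hcont_deriv : ContinuousOn ℓd (Set.Icc 0 xhat))
    (hconv : StrictConvexOn ℝ (Set.Icc 0 xhat) ℓ)
    (hzero : ℓ 0 = 0)
    (hpos : ∀ x ∈ Set.Icc 0 xhat, 0 < ℓd x)
    (β : ℝ) (hβ : 1 < β)
    (astar : ℕ → ℝ)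
    (hfeas : Feasible xhat astar)
    (hmin : ∀ a : ℕ → ℝ, Feasible xhat a → totalLoss β ℓ astar ≤ totalLoss β ℓ a) :
    (∀ t : ℕ, ℓd (astar (t + 1)) = max (β⁻¹ * ℓd (astar t)) (ℓd 0)) ∧
    Antitone astar :=
  euler_equation_of_optimal_sequence_general xhat ℓ ℓd hderiv hconv hzero hpos β hβ astar hfeas hmin
end

section
/- Suppose ℓ'(0) > 0. Then the unique solution {a_t*} of the negative discount dynamic program has only finitely many nonzero terms: there exists T ∈ ℕ such that a_t* = 0 for all t > T. -/
/-!
If `a t > 0` for a late period `t`, move that mass to period `0`. By convexity the extra loss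
at period `0` is at most `ℓ'(x̂) · a t`, while the loss saved at period `t` is at least
`β^t ℓ'(0) · a t`. Once `β^t > ℓ'(x̂) / ℓ'(0)` the move strictly lowers the total loss, which
is finite at an optimum, so an optimal sequence vanishes after such a `T`.
-/

open Set Filter ENNReal

open Function

theorem ConvexOn.deriv_mul_sub_le {f : ℝ → ℝ} {f' a b y : ℝ} (hf : ConvexOn ℝ (Icc a b) f)
    (ha : HasDerivAt f f' a) (hy : y ∈ Icc a b) : f' * (y - a) ≤ f y - f a := by
  rcases hy.1.eq_or_lt with rfl | hay
  · simp
  · have h := hf.le_slope_of_hasDerivAt (left_mem_Icc.2 (hay.le.trans hy.2)) hy hay ha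
    rwa [slope_def_field, le_div_iff₀ (sub_pos.2 hay)] at h

theorem ConvexOn.sub_le_deriv_mul_sub {f : ℝ → ℝ} {f' a b x y : ℝ} (hf : ConvexOn ℝ (Icc a b) f)
    (hb : HasDerivAt f f' b) (hax : a ≤ x) (hxy : x ≤ y) (hyb : y ≤ b) :
    f y - f x ≤ f' * (y - x) := by
  rcases hxy.eq_or_lt with rfl | hxy
  · simp
  have hx : x ∈ Icc a b := ⟨hax, hxy.le.trans hyb⟩
  have hy : y ∈ Icc a b := ⟨hax.trans hxy.le, hyb⟩
  have hb' : b ∈ Icc a b := right_mem_Icc.2 (hx.2.trans' hax)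
  have hxb : x < b := hxy.trans_le hyb
  have hslope := hf.slope_le_of_hasDerivAt hx hb' hxb hb
  rw [slope_def_field] at hslope
  have h := (hf.secant_mono hx hy hb' hxy.ne' hxb.ne' hyb).trans hslope
  rwa [div_le_iff₀ (sub_pos.2 hxy)] at h

theorem ConvexOn.map_add_lt_add_mul {f : ℝ → ℝ} {d₀ d₁ b c x y : ℝ}
    (hf : ConvexOn ℝ (Icc 0 b) f) (hf0 : f 0 = 0) (h₀ : HasDerivAt f d₀ 0)
    (h₁ : HasDerivAt f d₁ b) (hc : 0 ≤ c) (hd : d₁ < c * d₀) (hx : 0 ≤ x) (hy : 0 < y)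
    (hxy : x + y ≤ b) : f (x + y) < f x + c * f y := by
  have hupper := hf.sub_le_deriv_mul_sub h₁ hx (le_add_of_nonneg_right hy.le) hxy
  have hlower := hf.deriv_mul_sub_le h₀ ⟨hy.le, (le_add_of_nonneg_left hx).trans hxy⟩
  rw [add_sub_cancel_left] at hupper
  rw [sub_zero, hf0, sub_zero] at hlower
  calc f (x + y) ≤ f x + d₁ * y := by linarith
    _ < f x + c * (d₀ * y) := by rw [← mul_assoc]; gcongr
    _ ≤ f x + c * f y := by gcongr

theorem ENNReal.tsum_lt_tsum_of_sum_lt {ι : Type*} {f g : ι → ℝ≥0∞} (s : Finset ι)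
    (hfg : ∀ i ∉ s, f i = g i) (hs : ∑ i ∈ s, f i < ∑ i ∈ s, g i) (hg : ∑' i, g i ≠ ∞) :
    ∑' i, f i < ∑' i, g i := by
  have hcompl : ∑' i : ↥(s : Set ι)ᶜ, f i = ∑' i : ↥(s : Set ι)ᶜ, g i :=
    tsum_congr fun i => hfg i i.2
  rw [← ENNReal.sum_add_tsum_compl s f, ← ENNReal.sum_add_tsum_compl s g, hcompl]
  refine ENNReal.add_lt_add_right ?_ hs
  rw [← ENNReal.sum_add_tsum_compl s g] at hg
  exact (ENNReal.add_ne_top.1 hg).2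

theorem Feasible.add_le {x : ℝ} {a : ℕ → ℝ} (h : Feasible x a) {i j : ℕ} (hij : i ≠ j) :
    a i + a j ≤ x := by
  simpa [Finset.sum_pair hij] using sum_le_hasSum {i, j} (fun k _ => h.1 k) h.2

theorem feasible_pi_single {x : ℝ} (hx : 0 ≤ x) (i : ℕ) : Feasible x (Pi.single i x) :=
  ⟨fun k => by by_cases hk : k = i <;> simp [hk, hx], hasSum_pi_single i x⟩

theorem totalLoss_pi_single {β : ℝ} {ℓ : ℝ → ℝ} (hℓ : ℓ 0 = 0) (i : ℕ) (x : ℝ) :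
    totalLoss β ℓ (Pi.single i x) = ENNReal.ofReal (β ^ i * ℓ x) := by
  rw [totalLoss, tsum_eq_single i fun k hk => by simp [hk, hℓ]]
  simp

def moveMass (a : ℕ → ℝ) (i j : ℕ) : ℕ → ℝ :=
  update (update a j 0) i (a i + a j)

theorem Feasible.moveMass {x : ℝ} {a : ℕ → ℝ} (h : Feasible x a) {i j : ℕ} (hij : i ≠ j) :
    Feasible x (moveMass a i j) := by
  refine ⟨fun k => ?_, ?_⟩
  · unfold _root_.moveMass
    rcases eq_or_ne k i with rfl | hki
    · simpa using add_nonneg (h.1 k) (h.1 j)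
    rcases eq_or_ne k j with rfl | hkj
    · simp [hki]
    · simpa [hki, hkj] using h.1 k
  · have hsum := (h.2.update j 0).update i (a i + a j)
    rwa [update_of_ne hij, show a i + a j - a i + (0 - a j + x) = x by ring] at hsum

theorem totalLoss_moveMass_lt {β : ℝ} {ℓ : ℝ → ℝ} {a : ℕ → ℝ} {i j : ℕ} (hij : i ≠ j)
    (hℓ : ℓ 0 = 0) (hfin : totalLoss β ℓ a ≠ ∞) (hnonneg : 0 ≤ β ^ i * ℓ (a i + a j))
    (hgain : β ^ i * ℓ (a i + a j) < β ^ i * ℓ (a i) + β ^ j * ℓ (a j)) :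
    totalLoss β ℓ (moveMass a i j) < totalLoss β ℓ a := by
  refine ENNReal.tsum_lt_tsum_of_sum_lt {i, j} (fun k hk => ?_) ?_ hfin
  · simp only [Finset.mem_insert, Finset.mem_singleton, not_or] at hk
    simp [moveMass, hk.1, hk.2]
  · simp only [Finset.sum_pair hij, moveMass, update_self, update_of_ne hij.symm, hℓ,
      mul_zero, ofReal_zero, add_zero]
    calc ENNReal.ofReal (β ^ i * ℓ (a i + a j))
        < ENNReal.ofReal (β ^ i * ℓ (a i) + β ^ j * ℓ (a j)) :=
          (ofReal_lt_ofReal_iff_of_nonneg hnonneg).2 hgain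
      _ ≤ _ := ofReal_add_le

theorem optimal_sequence_finitely_many_nonzero_terms_general
    (xhat : ℝ) (hxhat : 0 < xhat)
    (ℓ ℓd : ℝ → ℝ)
    (hderiv : ∀ x ∈ Set.Icc 0 xhat, HasDerivAt ℓ (ℓd x) x)
    (hconv : StrictConvexOn ℝ (Set.Icc 0 xhat) ℓ)
    (hzero : ℓ 0 = 0)
    (hd0 : 0 < ℓd 0)
    (β : ℝ) (hβ : 1 < β)
    (astar : ℕ → ℝ)
    (hfeas : Feasible xhat astar)
    (hmin : ∀ a : ℕ → ℝ, Feasible xhat a → totalLoss β ℓ astar ≤ totalLoss β ℓ a) :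
    ∃ T : ℕ, ∀ t : ℕ, T < t → astar t = 0 := by
  have h₀ := hderiv 0 (left_mem_Icc.2 hxhat.le)
  have hℓ_nonneg : ∀ y ∈ Icc 0 xhat, 0 ≤ ℓ y := fun y hy => by
    have := hconv.convexOn.deriv_mul_sub_le h₀ hy
    rw [sub_zero, hzero, sub_zero] at this
    nlinarith [hy.1]
  have hfin : totalLoss β ℓ astar ≠ ∞ := ne_top_of_le_ne_top
    (by rw [totalLoss_pi_single hzero]; exact ofReal_ne_top)
    (hmin _ (feasible_pi_single hxhat.le 0))
  obtain ⟨T, hT⟩ := pow_unbounded_of_one_lt (ℓd xhat / ℓd 0) hβ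
  refine ⟨T, fun t ht => by_contra fun hne => ?_⟩
  have ht0 : 0 ≠ t := by omega
  have hle := hfeas.add_le ht0
  have hβt : ℓd xhat < β ^ t * ℓd 0 :=
    (div_lt_iff₀ hd0).1 (hT.trans_le (pow_le_pow_right₀ hβ.le ht.le))
  have hgain := hconv.convexOn.map_add_lt_add_mul hzero h₀
    (hderiv xhat (right_mem_Icc.2 hxhat.le)) (by positivity) hβt (hfeas.1 0)
    ((hfeas.1 t).lt_of_ne' hne) hle
  refine (hmin _ (hfeas.moveMass ht0)).not_gt (totalLoss_moveMass_lt ht0 hzero hfin ?_ ?_)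
  · simpa using hℓ_nonneg _ ⟨add_nonneg (hfeas.1 0) (hfeas.1 t), hle⟩
  · simpa using hgain

/-- if `ℓ'(0) > 0`, the unique solution `{a_t*}` of the negative discount
dynamic program has only finitely many nonzero terms. -/
theorem optimal_sequence_finitely_many_nonzero_terms
    (xhat : ℝ) (hxhat : 0 < xhat)
    (ℓ ℓd : ℝ → ℝ)
    (hderiv : ∀ x ∈ Set.Icc 0 xhat, HasDerivAt ℓ (ℓd x) x)
    (hcont_deriv : ContinuousOn ℓd (Set.Icc 0 xhat))
    (hconv : StrictConvexOn ℝ (Set.Icc 0 xhat) ℓ)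
    (hzero : ℓ 0 = 0)
    (hpos : ∀ x ∈ Set.Icc 0 xhat, 0 < ℓd x)
    (hd0 : 0 < ℓd 0)
    (β : ℝ) (hβ : 1 < β)
    (astar : ℕ → ℝ)
    (hfeas : Feasible xhat astar)
    (hmin : ∀ a : ℕ → ℝ, Feasible xhat a → totalLoss β ℓ astar ≤ totalLoss β ℓ a) :
    ∃ T : ℕ, ∀ t : ℕ, T < t → astar t = 0 :=
  optimal_sequence_finitely_many_nonzero_terms_general xhat hxhat ℓ ℓd hderiv hconv hzero hd0 β hβ
    astar hfeas hmin
end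

section
/- For every n ∈ ℕ and every increasing convex w ∈ 𝓘, the n-th Bellman iterate satisfies (Tⁿw)(x) = w*(x) for all x ∈ X with x ≤ n·η. In particular, for n ≥ x̂/η one has Tⁿw = w* on all of X. -/
open Set Filter

/-!
`T` is monotone and preserves the class of convex functions `F` with `F 0 = 0` and `F ≥ φ`, to
which both `φ` and `ψ = ℓ` belong. Hence `Tⁿφ ≤ Tⁿw ≤ Tⁿψ`, likewise for `w* = Tⁿw*`, and it
suffices to show `Tⁿφ = Tⁿψ` on `[0, nη]`. Inductively, let `F ≤ G` agree on `[0, m]` with `F` in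
the class, and let `x ≤ m + η`. An action `a` leaving `x - a > m` is beaten by `a₀ = x - m ≤ η`:
on `[0, η]` the marginal loss `ℓ'` is at most `β ℓ'(0)`, while beyond `m` the convex `F` grows
with slope at least `ℓ'(0)`. So both infima may be restricted to actions with `x - a ≤ m`, where
`F = G`.
-/

section Convex

variable {S : Set ℝ} {f f' : ℝ → ℝ} {a b c : ℝ}

lemma ConvexOn.mul_sub_le_sub_of_hasDerivAt (hf : ConvexOn ℝ S f)
    (hf' : ∀ x ∈ S, HasDerivAt f (f' x) x) (ha : a ∈ S) (hb : b ∈ S) (hab : a ≤ b) :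
    f' a * (b - a) ≤ f b - f a := by
  rcases hab.eq_or_lt with rfl | hlt
  · simp
  · have h := hf.le_slope_of_hasDerivAt ha hb hlt (hf' a ha)
    rwa [slope_def_field, le_div_iff₀ (sub_pos.2 hlt)] at h

lemma ConvexOn.sub_le_mul_sub_of_hasDerivAt (hf : ConvexOn ℝ S f)
    (hf' : ∀ x ∈ S, HasDerivAt f (f' x) x) (ha : a ∈ S) (hc : c ∈ S) (hab : a ≤ b)
    (hbc : b ≤ c) : f b - f a ≤ f' c * (b - a) := by
  have hb : b ∈ S := hf.1.ordConnected.out ha hc ⟨hab, hbc⟩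
  have hf'_mono : f' b ≤ f' c := by
    have h := hf.monotoneOn_deriv (fun x hx => (hf' x hx).differentiableAt) hb hc hbc
    rwa [(hf' b hb).deriv, (hf' c hc).deriv] at h
  refine le_trans ?_ (mul_le_mul_of_nonneg_right hf'_mono (sub_nonneg.2 hab))
  rcases hab.eq_or_lt with rfl | hlt
  · simp
  · have h := hf.slope_le_of_hasDerivAt ha hb hlt (hf' b hb)
    rwa [slope_def_field, div_le_iff₀ (sub_pos.2 hlt)] at h

end Convex

lemma exists_mem_Ioc_lt_of_continuousWithinAt {f : ℝ → ℝ} {xhat K : ℝ} (hxhat : 0 < xhat)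
    (hf : ContinuousWithinAt f (Icc 0 xhat) 0) (hK : f 0 < K) : ∃ y ∈ Ioc 0 xhat, f y < K := by
  have hlt : ∀ᶠ y in nhdsWithin 0 (Ioi 0), f y < K := by
    rw [← nhdsWithin_Ioc_eq_nhdsGT hxhat]
    exact (hf.mono Ioc_subset_Icc_self).eventually_lt_const hK
  obtain ⟨y, hyK, hy⟩ := (hlt.and (Ioc_mem_nhdsGT hxhat)).exists
  exact ⟨y, hy, hyK⟩

structure Admissible (xhat c : ℝ) (F : ℝ → ℝ) : Prop where
  map_zero : F 0 = 0
  mul_le : ∀ y ∈ Icc 0 xhat, c * y ≤ F y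
  convexOn : ConvexOn ℝ (Icc 0 xhat) F

namespace Admissible

variable {xhat c : ℝ} {F : ℝ → ℝ}

lemma mul_sub_le_sub (hF : Admissible xhat c F) {m y : ℝ} (hm : 0 ≤ m) (hmy : m ≤ y)
    (hy : y ≤ xhat) : c * (y - m) ≤ F y - F m := by
  rcases hm.eq_or_lt with rfl | hm
  · simpa [hF.map_zero] using hF.mul_le y ⟨hmy, hy⟩
  rcases hmy.eq_or_lt with rfl | hmy
  · simp
  have hslope := hF.convexOn.slope_mono_adjacent (left_mem_Icc.2 (hm.le.trans (hmy.le.trans hy)))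
    ⟨hm.le.trans hmy.le, hy⟩ hm hmy
  rw [hF.map_zero, sub_zero, sub_zero] at hslope
  have hc : c ≤ F m / m := (le_div_iff₀ hm).2 (hF.mul_le m ⟨hm.le, hmy.le.trans hy⟩)
  calc c * (y - m) ≤ F m / m * (y - m) := mul_le_mul_of_nonneg_right hc (sub_nonneg.2 hmy.le)
    _ ≤ F y - F m := (le_div_iff₀ (sub_pos.2 hmy)).1 (hslope.trans_eq rfl)

lemma linear (hc : 0 ≤ c) : Admissible xhat c (fun y => c * y) where
  map_zero := mul_zero c
  mul_le _ _ := le_rfl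
  convexOn := (convexOn_id (convex_Icc 0 xhat)).smul hc

end Admissible

section Bellman

variable {β : ℝ} {ℓ w : ℝ → ℝ} {x b : ℝ}

lemma le_bellman (hx : 0 ≤ x) (h : ∀ a ∈ Icc 0 x, b ≤ ℓ a + β * w (x - a)) :
    b ≤ bellman β ℓ w x :=
  le_csInf ((nonempty_Icc.2 hx).image _) (by rintro _ ⟨a, ha, rfl⟩; exact h a ha)

lemma exists_lt_of_bellman_lt (hx : 0 ≤ x) (h : bellman β ℓ w x < b) :
    ∃ a ∈ Icc 0 x, ℓ a + β * w (x - a) < b := by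
  obtain ⟨_, ⟨a, ha, rfl⟩, hlt⟩ := exists_lt_of_csInf_lt ((nonempty_Icc.2 hx).image _) h
  exact ⟨a, ha, hlt⟩

lemma bellman_congr {u v : ℝ → ℝ} (h : ∀ y ∈ Icc 0 x, u y = v y) :
    bellman β ℓ u x = bellman β ℓ v x := by
  refine congrArg sInf (image_congr fun a ha => ?_)
  rw [h (x - a) ⟨sub_nonneg.2 ha.2, sub_le_self x ha.1⟩]

lemma iterate_bellman_eq_of_isFixed {xhat : ℝ} (h : ∀ x ∈ Icc 0 xhat, bellman β ℓ w x = w x)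
    (n : ℕ) : ∀ x ∈ Icc 0 xhat, (bellman β ℓ)^[n] w x = w x := by
  induction n with
  | zero => exact fun _ _ => rfl
  | succ n ih =>
    intro x hx
    rw [Function.iterate_succ_apply', ← h x hx]
    exact bellman_congr fun y hy => ih y ⟨hy.1, hy.2.trans hx.2⟩

end Bellman

section LinearLowerBound

variable {xhat c β : ℝ} {ℓ : ℝ → ℝ} {x : ℝ}
  (hℓ : ∀ y ∈ Icc 0 xhat, c * y ≤ ℓ y) (hc : 0 ≤ c) (hβ : 1 ≤ β)
include hℓ hc hβ

lemma mul_le_add_mul {w : ℝ → ℝ} (hw : ∀ y ∈ Icc 0 xhat, c * y ≤ w y) (hx : x ≤ xhat) {a : ℝ}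
    (ha : a ∈ Icc 0 x) : c * x ≤ ℓ a + β * w (x - a) := by
  have hxa : 0 ≤ x - a := sub_nonneg.2 ha.2
  have hℓa := hℓ a ⟨ha.1, ha.2.trans hx⟩
  have hwxa := hw (x - a) ⟨hxa, by linarith [ha.1]⟩
  nlinarith [mul_nonneg (mul_nonneg hc hxa) (sub_nonneg.2 hβ)]

lemma mul_le_bellman {w : ℝ → ℝ} (hw : ∀ y ∈ Icc 0 xhat, c * y ≤ w y) (hx : x ∈ Icc 0 xhat) :
    c * x ≤ bellman β ℓ w x :=
  le_bellman hx.1 fun _ ha => mul_le_add_mul hℓ hc hβ hw hx.2 ha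

lemma bellman_le_add_mul {w : ℝ → ℝ} (hw : ∀ y ∈ Icc 0 xhat, c * y ≤ w y) (hx : x ≤ xhat)
    {a : ℝ} (ha : a ∈ Icc 0 x) : bellman β ℓ w x ≤ ℓ a + β * w (x - a) :=
  csInf_le ⟨c * x, by rintro _ ⟨a', ha', rfl⟩; exact mul_le_add_mul hℓ hc hβ hw hx ha'⟩
    (mem_image_of_mem _ ha)

lemma bellman_mono {u v : ℝ → ℝ} (hu : ∀ y ∈ Icc 0 xhat, c * y ≤ u y)
    (huv : ∀ y ∈ Icc 0 xhat, u y ≤ v y) (hx : x ∈ Icc 0 xhat) :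
    bellman β ℓ u x ≤ bellman β ℓ v x := by
  refine le_bellman hx.1 fun a ha => (bellman_le_add_mul hℓ hc hβ hu hx.2 ha).trans ?_
  have := huv (x - a) ⟨sub_nonneg.2 ha.2, by linarith [ha.1, hx.2]⟩
  gcongr

lemma mul_le_iterate_bellman {w : ℝ → ℝ} (hw : ∀ y ∈ Icc 0 xhat, c * y ≤ w y) (n : ℕ) :
    ∀ y ∈ Icc 0 xhat, c * y ≤ (bellman β ℓ)^[n] w y := by
  induction n with
  | zero => exact hw
  | succ n ih =>
    intro y hy
    rw [Function.iterate_succ_apply']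
    exact mul_le_bellman hℓ hc hβ ih hy

lemma iterate_bellman_mono {u v : ℝ → ℝ} (hu : ∀ y ∈ Icc 0 xhat, c * y ≤ u y)
    (huv : ∀ y ∈ Icc 0 xhat, u y ≤ v y) (n : ℕ) :
    ∀ y ∈ Icc 0 xhat, (bellman β ℓ)^[n] u y ≤ (bellman β ℓ)^[n] v y := by
  induction n with
  | zero => exact huv
  | succ n ih =>
    intro y hy
    rw [Function.iterate_succ_apply', Function.iterate_succ_apply']
    exact bellman_mono hℓ hc hβ (mul_le_iterate_bellman hℓ hc hβ hu n) ih hy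

lemma convexOn_bellman (hℓc : ConvexOn ℝ (Icc 0 xhat) ℓ) {F : ℝ → ℝ}
    (hF : ∀ y ∈ Icc 0 xhat, c * y ≤ F y) (hFc : ConvexOn ℝ (Icc 0 xhat) F) :
    ConvexOn ℝ (Icc 0 xhat) (bellman β ℓ F) := by
  refine ⟨convex_Icc 0 xhat, fun x hx y hy s t hs ht hst => ?_⟩
  simp only [smul_eq_mul]
  have hz : s * x + t * y ∈ Icc 0 xhat := convex_Icc 0 xhat hx hy hs ht hst
  refine le_of_forall_pos_le_add fun ε hε => ?_
  obtain ⟨a₁, ha₁, h₁⟩ := exists_lt_of_bellman_lt hx.1 (lt_add_of_pos_right (bellman β ℓ F x) hε)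
  obtain ⟨a₂, ha₂, h₂⟩ := exists_lt_of_bellman_lt hy.1 (lt_add_of_pos_right (bellman β ℓ F y) hε)
  have ha : s * a₁ + t * a₂ ∈ Icc 0 (s * x + t * y) :=
    ⟨by positivity [ha₁.1, ha₂.1], by gcongr; exacts [ha₁.2, ha₂.2]⟩
  have hℓ' := hℓc.2 ⟨ha₁.1, ha₁.2.trans hx.2⟩ ⟨ha₂.1, ha₂.2.trans hy.2⟩ hs ht hst
  have hF' := hFc.2 (x := x - a₁) (y := y - a₂) ⟨sub_nonneg.2 ha₁.2, by linarith [ha₁.1, hx.2]⟩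
    ⟨sub_nonneg.2 ha₂.2, by linarith [ha₂.1, hy.2]⟩ hs ht hst
  simp only [smul_eq_mul] at hℓ' hF'
  calc bellman β ℓ F (s * x + t * y)
      ≤ ℓ (s * a₁ + t * a₂) + β * F (s * (x - a₁) + t * (y - a₂)) := by
        convert bellman_le_add_mul hℓ hc hβ hF hz.2 ha using 4; ring
    _ ≤ s * (ℓ a₁ + β * F (x - a₁)) + t * (ℓ a₂ + β * F (y - a₂)) := by
        nlinarith [mul_le_mul_of_nonneg_left hF' (zero_le_one.trans hβ)]
    _ ≤ s * (bellman β ℓ F x + ε) + t * (bellman β ℓ F y + ε) := by gcongr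
    _ = s * bellman β ℓ F x + t * bellman β ℓ F y + ε := by linear_combination ε * hst

end LinearLowerBound

namespace Admissible

variable {xhat c β : ℝ} {ℓ F : ℝ → ℝ}

lemma bellman (hF : Admissible xhat c F) (hℓ : Admissible xhat c ℓ) (hc : 0 ≤ c) (hβ : 1 ≤ β) :
    Admissible xhat c (bellman β ℓ F) where
  map_zero := by simp [_root_.bellman, hℓ.map_zero, hF.map_zero]
  mul_le _ hx := mul_le_bellman hℓ.mul_le hc hβ hF.mul_le hx
  convexOn := convexOn_bellman hℓ.mul_le hc hβ hℓ.convexOn hF.mul_le hF.convexOn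

lemma iterate_bellman (hF : Admissible xhat c F) (hℓ : Admissible xhat c ℓ) (hc : 0 ≤ c)
    (hβ : 1 ≤ β) (n : ℕ) : Admissible xhat c ((_root_.bellman β ℓ)^[n] F) := by
  induction n with
  | zero => exact hF
  | succ n ih =>
    rw [Function.iterate_succ_apply']
    exact ih.bellman hℓ hc hβ

end Admissible

section FiniteHorizon

variable {xhat c β η : ℝ} {ℓ : ℝ → ℝ}

lemma bellman_eq_of_eqOn (hℓ : ∀ y ∈ Icc 0 xhat, c * y ≤ ℓ y) (hc : 0 ≤ c) (hβ : 1 ≤ β)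
    (hℓη : ∀ a b, 0 ≤ a → a ≤ b → b ≤ η → ℓ b - ℓ a ≤ β * c * (b - a))
    {F G : ℝ → ℝ} (hF : Admissible xhat c F) (hFG : ∀ y ∈ Icc 0 xhat, F y ≤ G y)
    {m : ℝ} (hm : 0 ≤ m) (hFG_eq : ∀ y ∈ Icc 0 xhat, y ≤ m → F y = G y)
    {x : ℝ} (hx : x ∈ Icc 0 xhat) (hxm : x ≤ m + η) :
    bellman β ℓ F x = bellman β ℓ G x := by
  have hG : ∀ y ∈ Icc 0 xhat, c * y ≤ G y := fun y hy => (hF.mul_le y hy).trans (hFG y hy)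
  refine le_antisymm (bellman_mono hℓ hc hβ hF.mul_le hFG hx) (le_bellman hx.1 fun a ha => ?_)
  have hxa : x - a ∈ Icc 0 xhat := ⟨sub_nonneg.2 ha.2, by linarith [ha.1, hx.2]⟩
  rcases le_or_gt (x - a) m with hxam | hxam
  · rw [hFG_eq _ hxa hxam]
    exact bellman_le_add_mul hℓ hc hβ hG hx.2 ha
  have hℓ_le := hℓη a (x - m) ha.1 (by linarith) (by linarith [ha.1])
  have hm' : m ∈ Icc 0 xhat := ⟨hm, by linarith [ha.1, hx.2]⟩
  have hF_le := mul_le_mul_of_nonneg_left (hF.mul_sub_le_sub hm hxam.le hxa.2)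
    (zero_le_one.trans hβ)
  calc bellman β ℓ G x ≤ ℓ (x - m) + β * G (x - (x - m)) :=
        bellman_le_add_mul hℓ hc hβ hG hx.2 ⟨by linarith [ha.1], by linarith⟩
    _ = ℓ (x - m) + β * F m := by rw [sub_sub_cancel, hFG_eq m hm' le_rfl]
    _ ≤ ℓ a + β * F (x - a) := by linarith

lemma iterate_bellman_linear_eq_iterate_bellman_self (hℓ : Admissible xhat c ℓ) (hc : 0 ≤ c)
    (hβ : 1 ≤ β) (hη : 0 ≤ η)
    (hℓη : ∀ a b, 0 ≤ a → a ≤ b → b ≤ η → ℓ b - ℓ a ≤ β * c * (b - a)) (n : ℕ) :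
    ∀ x ∈ Icc 0 xhat, x ≤ n * η →
      (bellman β ℓ)^[n] (fun y => c * y) x = (bellman β ℓ)^[n] ℓ x := by
  induction n with
  | zero =>
    intro x hx hx0
    obtain rfl : x = 0 := le_antisymm (by simpa using hx0) hx.1
    simp [hℓ.map_zero]
  | succ n ih =>
    intro x hx hxn
    rw [Function.iterate_succ_apply', Function.iterate_succ_apply']
    exact bellman_eq_of_eqOn hℓ.mul_le hc hβ hℓη ((Admissible.linear hc).iterate_bellman hℓ hc hβ n)
      (iterate_bellman_mono hℓ.mul_le hc hβ (fun _ _ => le_rfl) hℓ.mul_le n)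
      (by positivity) ih hx (by push_cast at hxn; linarith)

lemma iterate_bellman_eq_of_mem_Icc (hℓ : Admissible xhat c ℓ) (hc : 0 ≤ c)
    (hβ : 1 ≤ β) (hη : 0 ≤ η)
    (hℓη : ∀ a b, 0 ≤ a → a ≤ b → b ≤ η → ℓ b - ℓ a ≤ β * c * (b - a)) {u v : ℝ → ℝ}
    (hu : ∀ y ∈ Icc 0 xhat, u y ∈ Icc (c * y) (ℓ y))
    (hv : ∀ y ∈ Icc 0 xhat, v y ∈ Icc (c * y) (ℓ y)) (n : ℕ) {x : ℝ} (hx : x ∈ Icc 0 xhat)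
    (hxn : x ≤ n * η) : (bellman β ℓ)^[n] u x = (bellman β ℓ)^[n] v x := by
  have hφ := iterate_bellman_linear_eq_iterate_bellman_self hℓ hc hβ hη hℓη n x hx hxn
  have bounds : ∀ w : ℝ → ℝ, (∀ y ∈ Icc 0 xhat, w y ∈ Icc (c * y) (ℓ y)) →
      (bellman β ℓ)^[n] (fun y => c * y) x ≤ (bellman β ℓ)^[n] w x ∧
        (bellman β ℓ)^[n] w x ≤ (bellman β ℓ)^[n] ℓ x := fun w hw =>
    ⟨iterate_bellman_mono hℓ.mul_le hc hβ (fun _ _ => le_rfl) (fun y hy => (hw y hy).1) n x hx,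
      iterate_bellman_mono hℓ.mul_le hc hβ (fun y hy => (hw y hy).1) (fun y hy => (hw y hy).2)
        n x hx⟩
  have hu' := bounds u hu
  have hv' := bounds v hv
  linarith [hu'.1, hu'.2, hv'.1, hv'.2]

end FiniteHorizon

/-- for every `n ∈ ℕ` and every increasing convex `w ∈ 𝓘`, the `n`-th Bellman
iterate satisfies `(Tⁿw)(x) = w*(x)` for all `x ∈ X` with `x ≤ n·η`; in particular, for
`n ≥ x̂/η` one has `Tⁿw = w*` on all of `X`. -/
theorem bellman_iterates_converge_in_finite_time
    (xhat : ℝ) (hxhat : 0 < xhat)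
    (ℓ ℓd : ℝ → ℝ)
    (hderiv : ∀ x ∈ Set.Icc 0 xhat, HasDerivAt ℓ (ℓd x) x)
    (hcont_deriv : ContinuousOn ℓd (Set.Icc 0 xhat))
    (hconv : StrictConvexOn ℝ (Set.Icc 0 xhat) ℓ)
    (hzero : ℓ 0 = 0)
    (hpos : ∀ x ∈ Set.Icc 0 xhat, 0 < ℓd x)
    (β : ℝ) (hβ : 1 < β)
    (wstar : ℝ → ℝ)
    (hwstar_mem : wstar ∈ candidateClass xhat ℓ ℓd)
    (hwstar_fix : ∀ x ∈ Set.Icc 0 xhat, bellman β ℓ wstar x = wstar x)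
    (η : ℝ)
    (hη_mem : η ∈ Set.Icc 0 xhat ∧ ℓd η ≤ β * ℓd 0)
    (hη_max : ∀ x ∈ Set.Icc 0 xhat, ℓd x ≤ β * ℓd 0 → x ≤ η) :
    0 < η ∧
    ∀ (n : ℕ) (w : ℝ → ℝ), w ∈ candidateClass xhat ℓ ℓd →
      MonotoneOn w (Set.Icc 0 xhat) → ConvexOn ℝ (Set.Icc 0 xhat) w →
      (∀ x ∈ Set.Icc 0 xhat, x ≤ n * η → (bellman β ℓ)^[n] w x = wstar x) ∧
      (xhat / η ≤ n → ∀ x ∈ Set.Icc 0 xhat, (bellman β ℓ)^[n] w x = wstar x) := by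
  have h0 : (0 : ℝ) ∈ Icc 0 xhat := left_mem_Icc.2 hxhat.le
  have hc : 0 < ℓd 0 := hpos 0 h0
  have hℓ : Admissible xhat (ℓd 0) ℓ :=
    ⟨hzero, fun y hy => by
      simpa [hzero] using hconv.convexOn.mul_sub_le_sub_of_hasDerivAt hderiv h0 hy hy.1,
      hconv.convexOn⟩
  have hℓη : ∀ a b, 0 ≤ a → a ≤ b → b ≤ η → ℓ b - ℓ a ≤ β * ℓd 0 * (b - a) :=
    fun a b ha hab hbη => (hconv.convexOn.sub_le_mul_sub_of_hasDerivAt hderiv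
      ⟨ha, hab.trans (hbη.trans hη_mem.1.2)⟩ hη_mem.1 hab hbη).trans
      (mul_le_mul_of_nonneg_right hη_mem.2 (sub_nonneg.2 hab))
  have hη : 0 < η := by
    obtain ⟨y, hy, hyβ⟩ :=
      exists_mem_Ioc_lt_of_continuousWithinAt hxhat (hcont_deriv 0 h0) (lt_mul_left hc hβ)
    exact hy.1.trans_le (hη_max y (Ioc_subset_Icc_self hy) hyβ.le)
  refine ⟨hη, fun n w hw _ _ => ?_⟩
  have hfinite : ∀ x ∈ Icc 0 xhat, x ≤ n * η → (bellman β ℓ)^[n] w x = wstar x := by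
    intro x hx hxn
    rw [← iterate_bellman_eq_of_isFixed hwstar_fix n x hx]
    exact iterate_bellman_eq_of_mem_Icc hℓ hc.le hβ.le hη.le hℓη hw.2 hwstar_mem.2 n hx hxn
  exact ⟨hfinite, fun hn x hx => hfinite x hx (hx.2.trans ((div_le_iff₀ hη).1 hn))⟩
end

section
/- Let w be an increasing convex function in 𝓘 and let σ_w(x) denote the unique minimizer of y ↦ ℓ(x − y) + β·w(y) over [0, x]. Then σ_w(x) = 0 if and only if x ≤ η. -/
/-!
If `0` minimizes `y ↦ ℓ(x − y) + β·w(y)` on `[0, x]`, then, since `w ≤ ℓ` with equality at `0`,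
it also minimizes `y ↦ ℓ(x − y) + β·ℓ(y)`, whose right derivative `β·ℓ'(0) − ℓ'(x)` at `0` is
therefore nonnegative; this is `x ≤ η`. Conversely, if `x ≤ η` then by convexity
`ℓ(x) − ℓ(x − y) ≤ ℓ'(x)·y ≤ β·ℓ'(0)·y ≤ β·w(y)`, so `0` is a minimizer, and by uniqueness it is
`σ_w(x)`.
-/

open Set

theorem isMinOn_of_forall_ne_lt {α γ : Type*} [Preorder γ] {f : α → γ} {S : Set α} {s : α}
    (hs : ∀ y ∈ S, y ≠ s → f s < f y) : IsMinOn f S s := by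
  intro y hy
  rcases eq_or_ne y s with rfl | hne
  · exact le_rfl
  · exact (hs y hy hne).le

theorem eq_of_isMinOn_of_forall_ne_lt {α γ : Type*} [Preorder γ] {f : α → γ} {S : Set α}
    {s t : α} (hs : ∀ y ∈ S, y ≠ s → f s < f y) (hsS : s ∈ S) (ht : IsMinOn f S t)
    (htS : t ∈ S) : t = s := by
  by_contra hne
  exact (hs t htS hne).not_ge (ht hsS)

theorem IsMinOn.hasDerivWithinAt_Icc_left_nonneg {f : ℝ → ℝ} {f' a b : ℝ} (hab : a < b)
    (hmin : IsMinOn f (Icc a b) a) (hf : HasDerivWithinAt f f' (Icc a b) a) : 0 ≤ f' := by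
  have hcone : b - a ∈ posTangentConeAt (Icc a b) a :=
    sub_mem_posTangentConeAt_of_segment_subset (segment_eq_Icc hab.le ▸ Subset.rfl)
  have h := hmin.localize.hasFDerivWithinAt_nonneg hf hcone
  simp only [ContinuousLinearMap.toSpanSingleton_apply, smul_eq_mul] at h
  exact nonneg_of_mul_nonneg_right h (sub_pos.2 hab)

theorem ConvexOn.monotoneOn_of_hasDerivAt {S : Set ℝ} {f f' : ℝ → ℝ} (hfc : ConvexOn ℝ S f)
    (hf : ∀ x ∈ S, HasDerivAt f (f' x) x) : MonotoneOn f' S := by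
  intro a ha b hb hab
  rw [← (hf a ha).deriv, ← (hf b hb).deriv]
  exact hfc.monotoneOn_deriv (fun z hz => (hf z hz).differentiableAt) ha hb hab

theorem ConvexOn.sub_sub_le_mul_of_hasDerivAt {S : Set ℝ} {f : ℝ → ℝ} {f' x y : ℝ}
    (hfc : ConvexOn ℝ S f) (hx : x ∈ S) (hxy : x - y ∈ S) (hy : 0 ≤ y) (hf : HasDerivAt f f' x) :
    f x - f (x - y) ≤ f' * y := by
  rcases hy.eq_or_lt with rfl | hy
  · simp
  have h := hfc.slope_le_of_hasDerivAt hxy hx (sub_lt_self x hy) hf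
  rwa [slope_def_field, sub_sub_cancel, div_le_iff₀ hy] at h

def objective (ℓ w : ℝ → ℝ) (β x y : ℝ) : ℝ := ℓ (x - y) + β * w y

section Objective

variable {ℓ ℓd w : ℝ → ℝ} {β x : ℝ}

theorem le_mul_of_isMinOn_objective_zero (hℓ0 : ℓ 0 = 0) (hβ : 0 ≤ β) (hx : 0 < x)
    (hd0 : HasDerivAt ℓ (ℓd 0) 0) (hdx : HasDerivAt ℓ (ℓd x) x) (hw0 : w 0 = 0)
    (hwℓ : ∀ y ∈ Icc 0 x, w y ≤ ℓ y) (hmin : IsMinOn (objective ℓ w β x) (Icc 0 x) 0) :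
    ℓd x ≤ β * ℓd 0 := by
  have hminℓ : IsMinOn (objective ℓ ℓ β x) (Icc 0 x) 0 := by
    intro y hy
    have hle : objective ℓ w β x y ≤ objective ℓ ℓ β x y := by
      unfold objective
      gcongr
      exact hwℓ y hy
    have h0 : objective ℓ ℓ β x 0 = objective ℓ w β x 0 := by simp [objective, hℓ0, hw0]
    exact h0.le.trans ((hmin hy).trans hle)
  have hderiv : HasDerivAt (objective ℓ ℓ β x) (-ℓd x + β * ℓd 0) 0 :=
    (HasDerivAt.comp_const_sub x 0 (by rwa [sub_zero])).add (hd0.const_mul β)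
  have := hminℓ.hasDerivWithinAt_Icc_left_nonneg hx hderiv.hasDerivWithinAt
  linarith

theorem isMinOn_objective_zero {c : ℝ} (hℓc : ConvexOn ℝ (Icc 0 x) ℓ) (hx : 0 ≤ x)
    (hdx : HasDerivAt ℓ (ℓd x) x) (hw0 : w 0 = 0) (hwc : ∀ y ∈ Icc 0 x, c * y ≤ w y)
    (hβ : 0 ≤ β) (hslope : ℓd x ≤ β * c) : IsMinOn (objective ℓ w β x) (Icc 0 x) 0 := by
  intro y hy
  have hconv := hℓc.sub_sub_le_mul_of_hasDerivAt (right_mem_Icc.2 hx)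
    ⟨sub_nonneg.2 hy.2, sub_le_self x hy.1⟩ hy.1 hdx
  have hw := mul_le_mul_of_nonneg_left (hwc y hy) hβ
  have hℓd := mul_le_mul_of_nonneg_right hslope hy.1
  show objective ℓ w β x 0 ≤ objective ℓ w β x y
  simp only [objective, sub_zero, hw0, mul_zero, add_zero]
  linarith

end Objective

theorem minimizer_zero_iff_below_eta_general
    (xhat : ℝ)
    (ℓ ℓd : ℝ → ℝ)
    (hderiv : ∀ x ∈ Set.Icc 0 xhat, HasDerivAt ℓ (ℓd x) x)
    (hconv : StrictConvexOn ℝ (Set.Icc 0 xhat) ℓ)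
    (hzero : ℓ 0 = 0)
    (β : ℝ) (hβ : 1 < β)
    (η : ℝ)
    (hη_mem : η ∈ Set.Icc 0 xhat ∧ ℓd η ≤ β * ℓd 0)
    (hη_max : ∀ x ∈ Set.Icc 0 xhat, ℓd x ≤ β * ℓd 0 → x ≤ η)
    (w : ℝ → ℝ)
    (hw_mem : w ∈ candidateClass xhat ℓ ℓd)
    (σ : ℝ → ℝ)
    (hσ : ∀ x ∈ Set.Icc 0 xhat,
      σ x ∈ Set.Icc 0 x ∧
      ∀ y ∈ Set.Icc 0 x, y ≠ σ x → ℓ (x - σ x) + β * w (σ x) < ℓ (x - y) + β * w y) :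
    ∀ x ∈ Set.Icc 0 xhat, (σ x = 0 ↔ x ≤ η) := by
  intro x hx
  obtain ⟨hσmem, hσlt⟩ := hσ x hx
  have hsub : Icc 0 x ⊆ Icc 0 xhat := Icc_subset_Icc_right hx.2
  have h0 : (0 : ℝ) ∈ Icc 0 x := left_mem_Icc.2 hx.1
  have hw0 : w 0 = 0 := by
    have := hw_mem.2 0 (hsub h0)
    rw [mul_zero, hzero] at this
    exact le_antisymm this.2 this.1
  constructor
  · intro hσ0
    rcases hx.1.eq_or_lt with rfl | hxpos
    · exact hη_mem.1.1
    refine hη_max x hx (le_mul_of_isMinOn_objective_zero hzero (by linarith) hxpos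
      (hderiv 0 (hsub h0)) (hderiv x hx) hw0 (fun y hy => (hw_mem.2 y (hsub hy)).2) ?_)
    have hmin := isMinOn_of_forall_ne_lt (f := objective ℓ w β x) hσlt
    rwa [hσ0] at hmin
  · intro hxη
    have hslope : ℓd x ≤ β * ℓd 0 :=
      (hconv.convexOn.monotoneOn_of_hasDerivAt hderiv hx hη_mem.1 hxη).trans hη_mem.2
    exact (eq_of_isMinOn_of_forall_ne_lt (f := objective ℓ w β x) hσlt hσmem
      (isMinOn_objective_zero (hconv.convexOn.subset hsub (convex_Icc 0 x)) hx.1 (hderiv x hx)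
        hw0 (fun y hy => (hw_mem.2 y (hsub hy)).1) (by linarith) hslope) h0).symm

/-- for an increasing convex `w ∈ 𝓘`, the unique minimizer `σ_w(x)` of
`y ↦ ℓ(x − y) + β·w(y)` over `[0, x]` satisfies `σ_w(x) = 0` if and only if `x ≤ η`. -/
theorem minimizer_zero_iff_below_eta
    (xhat : ℝ) (hxhat : 0 < xhat)
    (ℓ ℓd : ℝ → ℝ)
    (hderiv : ∀ x ∈ Set.Icc 0 xhat, HasDerivAt ℓ (ℓd x) x)
    (hcont_deriv : ContinuousOn ℓd (Set.Icc 0 xhat))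
    (hconv : StrictConvexOn ℝ (Set.Icc 0 xhat) ℓ)
    (hzero : ℓ 0 = 0)
    (hpos : ∀ x ∈ Set.Icc 0 xhat, 0 < ℓd x)
    (β : ℝ) (hβ : 1 < β)
    (η : ℝ)
    (hη_mem : η ∈ Set.Icc 0 xhat ∧ ℓd η ≤ β * ℓd 0)
    (hη_max : ∀ x ∈ Set.Icc 0 xhat, ℓd x ≤ β * ℓd 0 → x ≤ η)
    (w : ℝ → ℝ)
    (hw_mem : w ∈ candidateClass xhat ℓ ℓd)
    (hw_mono : MonotoneOn w (Set.Icc 0 xhat))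
    (hw_conv : ConvexOn ℝ (Set.Icc 0 xhat) w)
    (σ : ℝ → ℝ)
    (hσ : ∀ x ∈ Set.Icc 0 xhat,
      σ x ∈ Set.Icc 0 x ∧
      ∀ y ∈ Set.Icc 0 x, y ≠ σ x → ℓ (x - σ x) + β * w (σ x) < ℓ (x - y) + β * w y) :
    ∀ x ∈ Set.Icc 0 xhat, (σ x = 0 ↔ x ≤ η) :=
  minimizer_zero_iff_below_eta_general xhat ℓ ℓd hderiv hconv hzero β hβ η hη_mem hη_max w hw_mem σ
    hσ
end

section
/- Let w be an increasing convex function in 𝓘, let σ_w(x) denote the unique minimizer of y ↦ ℓ(x − y) + β·w(y) over [0, x], and set π_w(x) = x − σ_w(x). If 0 < x₁ ≤ x₂ ≤ x̂ then σ_w(x₁) ≤ σ_w(x₂) and π_w(x₁) ≤ π_w(x₂). Moreover, if x ≥ η then π_w(x) ≥ η, and if x ≤ η then π_w(x) = x. -/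
open Set Filter

/-- Crossing/exchange inequality for convex functions. -/
lemma cross_convex_aux {S : Set ℝ} {f : ℝ → ℝ} (hf : ConvexOn ℝ S f) {p q r : ℝ}
    (hp : p ∈ S) (hq : q ∈ S) (hpr : p ≤ r) (hrq : r ≤ q) :
    f r + f (p + q - r) ≤ f p + f q := by
  rcases eq_or_lt_of_le (hpr.trans hrq) with h | h
  · have hr : r = p := le_antisymm (h ▸ hrq) hpr
    have h2 : p + q - r = q := by rw [hr]; ring
    rw [h2, hr]
  · set α := (r - p) / (q - p) with hα
    have hqp : 0 < q - p := sub_pos.2 h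
    have h0 : 0 ≤ α := div_nonneg (by linarith) hqp.le
    have h1 : α ≤ 1 := (div_le_one hqp).2 (by linarith)
    have e0 : α * (q - p) = r - p := by rw [hα]; field_simp
    have e1 : r = (1 - α) * p + α * q := by nlinarith [e0]
    have e2 : p + q - r = α * p + (1 - α) * q := by nlinarith [e0]
    have c1 := hf.2 hp hq (by linarith : (0:ℝ) ≤ 1 - α) h0 (by ring)
    have c2 := hf.2 hp hq h0 (by linarith : (0:ℝ) ≤ 1 - α) (by ring)
    rw [smul_eq_mul, smul_eq_mul, smul_eq_mul, smul_eq_mul] at c1 c2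
    rw [e2, e1]
    nlinarith [c1, c2]

/-- for an increasing convex `w ∈ 𝓘`, the minimizer `σ_w` and the policy
`π_w(x) = x − σ_w(x)` are both monotone on `(0, x̂]`; moreover `π_w(x) ≥ η` whenever
`x ≥ η`, and `π_w(x) = x` whenever `x ≤ η`. -/
theorem minimizer_and_policy_monotone
    (xhat : ℝ) (hxhat : 0 < xhat)
    (ℓ ℓd : ℝ → ℝ)
    (hderiv : ∀ x ∈ Set.Icc 0 xhat, HasDerivAt ℓ (ℓd x) x)
    (hcont_deriv : ContinuousOn ℓd (Set.Icc 0 xhat))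
    (hconv : StrictConvexOn ℝ (Set.Icc 0 xhat) ℓ)
    (hzero : ℓ 0 = 0)
    (hpos : ∀ x ∈ Set.Icc 0 xhat, 0 < ℓd x)
    (β : ℝ) (hβ : 1 < β)
    (η : ℝ)
    (hη_mem : η ∈ Set.Icc 0 xhat ∧ ℓd η ≤ β * ℓd 0)
    (hη_max : ∀ x ∈ Set.Icc 0 xhat, ℓd x ≤ β * ℓd 0 → x ≤ η)
    (w : ℝ → ℝ)
    (hw_mem : w ∈ candidateClass xhat ℓ ℓd)
    (hw_mono : MonotoneOn w (Set.Icc 0 xhat))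
    (hw_conv : ConvexOn ℝ (Set.Icc 0 xhat) w)
    (σ π : ℝ → ℝ)
    (hσ : ∀ x ∈ Set.Icc 0 xhat,
      σ x ∈ Set.Icc 0 x ∧
      ∀ y ∈ Set.Icc 0 x, y ≠ σ x → ℓ (x - σ x) + β * w (σ x) < ℓ (x - y) + β * w y)
    (hπ : ∀ x, π x = x - σ x) :
    (∀ x₁ x₂ : ℝ, 0 < x₁ → x₁ ≤ x₂ → x₂ ≤ xhat → σ x₁ ≤ σ x₂ ∧ π x₁ ≤ π x₂) ∧
    (∀ x ∈ Set.Icc 0 xhat, η ≤ x → η ≤ π x) ∧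
    (∀ x ∈ Set.Icc 0 xhat, x ≤ η → π x = x) := by
  obtain ⟨hw_cont, hw_bnd⟩ := hw_mem
  have h0S : (0:ℝ) ∈ Set.Icc 0 xhat := ⟨le_refl 0, hxhat.le⟩
  have hβ0 : (0:ℝ) < β := by linarith
  have hld0 : 0 < ℓd 0 := hpos 0 h0S
  have hw0 : w 0 = 0 := by
    obtain ⟨hl, hr⟩ := hw_bnd 0 h0S
    rw [hzero] at hr
    have : ℓd 0 * 0 = 0 := by ring
    linarith [hl, hr]
  -- gradient inequality
  have grad : ∀ a ∈ Set.Icc 0 xhat, ∀ b ∈ Set.Icc 0 xhat,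
      ℓ a + ℓd a * (b - a) ≤ ℓ b := by
    intro a ha b hb
    rcases lt_trichotomy a b with hab | hab | hab
    · have hs := hconv.convexOn.le_slope_of_hasDerivAt ha hb hab (hderiv a ha)
      rw [slope_def_field] at hs
      have := (le_div_iff₀ (sub_pos.2 hab)).mp hs
      linarith
    · subst hab; simp
    · have hs := hconv.convexOn.slope_le_of_hasDerivAt hb ha hab (hderiv a ha)
      rw [slope_def_field] at hs
      have := (div_le_iff₀ (sub_pos.2 hab)).mp hs
      linarith
  -- monotonicity of ℓd
  have ld_mono : ∀ a ∈ Set.Icc 0 xhat, ∀ b ∈ Set.Icc 0 xhat, a ≤ b → ℓd a ≤ ℓd b := by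
    intro a ha b hb hab
    rcases eq_or_lt_of_le hab with rfl | h
    · exact le_refl _
    · have g1 := grad a ha b hb
      have g2 := grad b hb a ha
      nlinarith [g1, g2, sub_pos.2 h]
  -- key: σ x = 0 when x ≤ η
  have key3 : ∀ x ∈ Set.Icc 0 xhat, x ≤ η → σ x = 0 := by
    intro x hx hxe
    obtain ⟨⟨hs0, hsx⟩, hmin⟩ := hσ x hx
    by_contra hne
    have hlt := hmin 0 ⟨le_refl 0, hx.1⟩ (fun h => hne h.symm)
    simp only [sub_zero] at hlt
    have hsS : σ x ∈ Set.Icc 0 xhat := ⟨hs0, hsx.trans hx.2⟩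
    have hxsS : x - σ x ∈ Set.Icc 0 xhat := ⟨by linarith, by linarith [hx.2]⟩
    have g := grad x hx (x - σ x) hxsS
    have hwl := (hw_bnd (σ x) hsS).1
    have hld : ℓd x ≤ β * ℓd 0 := le_trans (ld_mono x hx η hη_mem.1 hxe) hη_mem.2
    have h1 : β * (ℓd 0 * σ x) ≤ β * w (σ x) := mul_le_mul_of_nonneg_left hwl hβ0.le
    have h2 : ℓd x * σ x ≤ (β * ℓd 0) * σ x := mul_le_mul_of_nonneg_right hld hs0
    rw [hw0] at hlt
    linarith [g, hlt, h1, h2]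
  refine ⟨?_, ?_, ?_⟩
  · -- monotonicity of σ and π
    intro x₁ x₂ h1 h12 h2h
    have hx1S : x₁ ∈ Set.Icc 0 xhat := ⟨h1.le, h12.trans h2h⟩
    have hx2S : x₂ ∈ Set.Icc 0 xhat := ⟨by linarith, h2h⟩
    obtain ⟨⟨a0, a1⟩, m1⟩ := hσ x₁ hx1S
    obtain ⟨⟨b0, b1⟩, m2⟩ := hσ x₂ hx2S
    constructor
    · by_contra hcon
      push_neg at hcon
      have l1 := m1 (σ x₂) ⟨b0, le_of_lt (hcon.trans_le a1)⟩ (ne_of_lt hcon)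
      have l2 := m2 (σ x₁) ⟨a0, a1.trans h12⟩ (ne_of_gt hcon)
      have cc := cross_convex_aux hconv.convexOn
        (p := x₁ - σ x₁) (q := x₂ - σ x₂) (r := x₁ - σ x₂)
        ⟨by linarith, by linarith [hx1S.2]⟩ ⟨by linarith, by linarith [hx2S.2]⟩
        (by linarith) (by linarith)
      have e : x₁ - σ x₁ + (x₂ - σ x₂) - (x₁ - σ x₂) = x₂ - σ x₁ := by ring
      rw [e] at cc
      linarith [l1, l2, cc]
    · rw [hπ, hπ]
      by_contra hcon
      push_neg at hcon
      have l1 := m1 (x₁ - (x₂ - σ x₂)) ⟨by linarith, by linarith⟩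
        (show σ x₁ < x₁ - (x₂ - σ x₂) by linarith).ne'
      have e1 : x₁ - (x₁ - (x₂ - σ x₂)) = x₂ - σ x₂ := by ring
      rw [e1] at l1
      have l2 := m2 (σ x₁ + (x₂ - x₁)) ⟨by linarith, by linarith⟩
        (show σ x₁ + (x₂ - x₁) < σ x₂ by linarith).ne
      have e2 : x₂ - (σ x₁ + (x₂ - x₁)) = x₁ - σ x₁ := by ring
      rw [e2] at l2
      have cc := cross_convex_aux hw_conv
        (p := σ x₁) (q := σ x₂) (r := x₁ - (x₂ - σ x₂))
        ⟨a0, by linarith [hx1S.2]⟩ ⟨b0, by linarith [hx2S.2]⟩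
        (by linarith) (by linarith)
      have e3 : σ x₁ + σ x₂ - (x₁ - (x₂ - σ x₂)) = σ x₁ + (x₂ - x₁) := by ring
      rw [e3] at cc
      have h5 := mul_le_mul_of_nonneg_left cc hβ0.le
      linarith [l1, l2, h5]
  · -- π x ≥ η when x ≥ η
    intro x hx hex
    rw [hπ]
    by_cases hxe : x ≤ η
    · rw [key3 x hx hxe]
      have : x = η := le_antisymm hxe hex
      linarith
    · push_neg at hxe
      obtain ⟨⟨hs0, hsx⟩, hmin⟩ := hσ x hx
      by_contra hcon
      push_neg at hcon
      have hη0 : 0 ≤ η := hη_mem.1.1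
      have hy0 : 0 < x - η := by linarith
      have hys : x - η < σ x := by linarith
      have hlt := hmin (x - η) ⟨hy0.le, by linarith⟩ (ne_of_lt hys)
      have e : x - (x - η) = η := by ring
      rw [e] at hlt
      have hsS : σ x ∈ Set.Icc 0 xhat := ⟨hs0, hsx.trans hx.2⟩
      have hxsS : x - σ x ∈ Set.Icc 0 xhat := ⟨by linarith, by linarith [hx.2]⟩
      have hyS : x - η ∈ Set.Icc 0 xhat := ⟨hy0.le, by linarith [hx.2]⟩
      -- slope inequality for w
      have hsl := hw_conv.slope_mono_adjacent h0S hsS hy0 hys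
      rw [hw0] at hsl
      have hwl := (hw_bnd (x - η) hyS).1
      have h1 : ℓd 0 ≤ (w (x - η) - 0) / (x - η - 0) := by
        rw [le_div_iff₀ (by linarith)]
        linarith [hwl]
      have h2 : ℓd 0 * (σ x - (x - η)) ≤ w (σ x) - w (x - η) := by
        have := h1.trans hsl
        rw [le_div_iff₀ (by linarith)] at this
        linarith
      have g := grad η hη_mem.1 (x - σ x) hxsS
      have h3 : ℓd η * (σ x - (x - η)) ≤ (β * ℓd 0) * (σ x - (x - η)) :=
        mul_le_mul_of_nonneg_right hη_mem.2 (by linarith)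
      have h4 : β * (ℓd 0 * (σ x - (x - η))) ≤ β * (w (σ x) - w (x - η)) :=
        mul_le_mul_of_nonneg_left h2 hβ0.le
      linarith [g, hlt, h3, h4]
  · -- π x = x when x ≤ η
    intro x hx hxe
    rw [hπ, key3 x hx hxe]
    ring
end
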